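/- arXiv:2103.07547 — 9 statements merged into one kernel-verified Lean document; each statement's English description precedes it below -/
import Mathlib

section
/- Let q be a prime power, σ : x ↦ x^{q^s} an automorphism of F_{q^m} with gcd(s,m)=1, and let k ≤ n ≤ m and h be integers with k−1 ≤ h < n. Let 𝒞 be a set of σ-linearized polynomials over F_{q^m} (viewed as F_q-linear endomorphisms of F_{q^m}) with |𝒞| = q^{mk} and minimum distance m−h, i.e., min{rank(f−g) : f,g ∈ 𝒞, f ≠ g} = m−h. Let α_1,…,α_n be F_q-linearly independent elements of F_{q^m} and let C = {(g(α_1),…,g(α_n)) : g ∈ 𝒞} ⊆ F_{q^m}^n. Then |C| = q^{mk} and the minimum rank distance d(C) of C satisfies n−h ≤ d(C) ≤ n−k+1. In particular, if h = k−1 (i.e., 𝒞 is an MRD code) then d(C) = n−k+1. -/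
/-- Rank of a map `f : K → K` as an `F_q`-linear endomorphism
(the `F_q`-dimension of the span of its image). -/
noncomputable def prank (Fq : Type) [Field Fq] {K : Type} [Field K] [Algebra Fq K]
    (f : K → K) : ℕ :=
  Module.finrank Fq ↥(Submodule.span Fq (Set.range f))

/-- Rank weight of a vector `v ∈ K^n` over `F_q`. -/
noncomputable def rkw (Fq : Type) [Field Fq] {K : Type} [Field K] [Algebra Fq K] {n : ℕ}
    (v : Fin n → K) : ℕ :=
  Module.finrank Fq ↥(Submodule.span Fq (Set.range v))

/-- Minimum rank distance of a code `C ⊆ K^n`. -/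
noncomputable def minDist (Fq : Type) [Field Fq] {K : Type} [Field K] [Algebra Fq K] {n : ℕ}
    (C : Set (Fin n → K)) : ℕ :=
  sInf {r : ℕ | ∃ u ∈ C, ∃ v ∈ C, u ≠ v ∧ rkw Fq (u - v) = r}

/-- Minimum distance of a code of maps `K → K` (rank metric). -/
noncomputable def polyMinDist (Fq : Type) [Field Fq] {K : Type} [Field K] [Algebra Fq K]
    (𝒞 : Set (K → K)) : ℕ :=
  sInf {r : ℕ | ∃ f ∈ 𝒞, ∃ g ∈ 𝒞, f ≠ g ∧ prank Fq (f - g) = r}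

/-- A `σ`-linearized polynomial map is `F_q`-linear. -/
lemma isLinear_of_rep {Fq K : Type} [Field Fq] [Fintype Fq] [Field K] [Algebra Fq K]
    (q s : ℕ) (hcard : Fintype.card Fq = q) (f : K → K) (N : ℕ) (a : Fin N → K)
    (hf : ∀ x : K, f x = ∑ i : Fin N, a i * x ^ ((q ^ s) ^ (i : ℕ))) :
    IsLinearMap Fq f := by
  have hq2 : ∀ (j : ℕ) (c : Fq), c ^ q ^ j = c := by
    intro j c; rw [← hcard]; exact FiniteField.pow_card_pow j c
  haveI : CharP Fq (ringChar Fq) := ringChar.charP Fq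
  have hp : (ringChar Fq).Prime := CharP.char_is_prime Fq (ringChar Fq)
  haveI : Fact (ringChar Fq).Prime := ⟨hp⟩
  obtain ⟨t, -, hqp⟩ := FiniteField.card Fq (ringChar Fq)
  rw [hcard] at hqp
  haveI : CharP K (ringChar Fq) :=
    charP_of_injective_algebraMap (algebraMap Fq K).injective _
  have hadd : ∀ (j : ℕ) (x y : K), (x + y) ^ q ^ j = x ^ q ^ j + y ^ q ^ j := by
    intro j x y
    rw [hqp, ← pow_mul]
    exact add_pow_char_pow x y _ _
  constructor
  · intro x y
    rw [hf, hf, hf, ← Finset.sum_add_distrib]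
    refine Finset.sum_congr rfl fun i _ => ?_
    rw [← pow_mul q s (i : ℕ), hadd, mul_add]
  · intro c x
    rw [hf, hf, Finset.smul_sum]
    refine Finset.sum_congr rfl fun i _ => ?_
    rw [Algebra.smul_def, Algebra.smul_def, mul_pow, ← map_pow,
      ← pow_mul q s (i : ℕ), hq2]
    ring

/-- evaluation of a code `𝒞 ⊆ L_{m,σ}` of size `q^{mk}` and minimum distance
`m−h` over `n` linearly independent points gives a code of size `q^{mk}` with
`n−h ≤ d(C) ≤ n−k+1`; if `h = k−1` (MRD) then `d(C) = n−k+1`. -/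
theorem stmt_1 (q s k n m h : ℕ) (Fq K : Type) [Field Fq] [Fintype Fq] [Field K] [Fintype K]
    [Algebra Fq K] (hcard : Fintype.card Fq = q) (hfin : Module.finrank Fq K = m)
    (hs : Nat.gcd s m = 1) (hk : 0 < k) (hkn : k ≤ n) (hnm : n ≤ m)
    (hhk : k - 1 ≤ h) (hhn : h < n)
    (𝒞 : Set (K → K))
    (hlin : ∀ f ∈ 𝒞, ∃ N : ℕ, ∃ a : Fin N → K, ∀ x : K,
      f x = ∑ i : Fin N, a i * x ^ ((q ^ s) ^ (i : ℕ)))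
    (hsize : Nat.card ↥𝒞 = q ^ (m * k))
    (hdist : polyMinDist Fq 𝒞 = m - h)
    (α : Fin n → K) (hα : LinearIndependent Fq α)
    (C : Set (Fin n → K)) (hC : C = (fun g : K → K => fun i : Fin n => g (α i)) '' 𝒞) :
    Nat.card ↥C = q ^ (m * k) ∧
    n - h ≤ minDist Fq C ∧ minDist Fq C ≤ n - k + 1 ∧
    (h = k - 1 → minDist Fq C = n - k + 1) := by
  classical
  subst hC
  set ev : (K → K) → (Fin n → K) := fun g => fun i => g (α i) with hev
  have hq1 : 1 < q := by rw [← hcard]; exact Fintype.one_lt_card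
  have hm1 : 1 ≤ m := le_trans (le_trans hk hkn) hnm
  -- each difference of code polynomials is (the underlying map of) a linear map
  have hD : ∀ f ∈ 𝒞, ∀ g ∈ 𝒞, ∃ D : K →ₗ[Fq] K, ⇑D = f - g := by
    intro f hf g hg
    obtain ⟨N1, a1, ha1⟩ := hlin f hf
    obtain ⟨N2, a2, ha2⟩ := hlin g hg
    refine ⟨IsLinearMap.mk' f (isLinear_of_rep q s hcard f N1 a1 ha1) -
      IsLinearMap.mk' g (isLinear_of_rep q s hcard g N2 a2 ha2), ?_⟩
    funext x
    simp [IsLinearMap.mk'_apply]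
  -- prank of a linear map = finrank of its range
  have hprank : ∀ (D : K →ₗ[Fq] K) (f : K → K), ⇑D = f →
      prank Fq f = Module.finrank Fq ↥(LinearMap.range D) := by
    intro D f hDf
    unfold prank
    rw [← hDf, ← LinearMap.coe_range, Submodule.span_eq]
  -- all pairwise distances on 𝒞 are ≥ m - h
  have hge : ∀ f ∈ 𝒞, ∀ g ∈ 𝒞, f ≠ g → m - h ≤ prank Fq (f - g) := by
    intro f hf g hg hne
    have hmem : prank Fq (f - g) ∈
        {r : ℕ | ∃ f ∈ 𝒞, ∃ g ∈ 𝒞, f ≠ g ∧ prank Fq (f - g) = r} :=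
      ⟨f, hf, g, hg, hne, rfl⟩
    have hle : polyMinDist Fq 𝒞 ≤ prank Fq (f - g) := Nat.sInf_le hmem
    rwa [hdist] at hle
  -- kernels of differences have dimension ≤ h
  have hker : ∀ f ∈ 𝒞, ∀ g ∈ 𝒞, f ≠ g → ∀ D : K →ₗ[Fq] K, ⇑D = f - g →
      Module.finrank Fq ↥(LinearMap.ker D) ≤ h := by
    intro f hf g hg hne D hDf
    have h1 := LinearMap.finrank_range_add_finrank_ker D
    rw [hfin] at h1
    have h2 := hge f hf g hg hne
    rw [hprank D _ hDf] at h2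
    omega
  -- the evaluation map is injective on 𝒞
  have hinj : Set.InjOn ev 𝒞 := by
    intro f hf g hg heq
    by_contra hne
    obtain ⟨D, hDf⟩ := hD f hf g hg
    have hk' := hker f hf g hg hne D hDf
    have hmem : ∀ i, α i ∈ LinearMap.ker D := by
      intro i
      have h0 : f (α i) = g (α i) := congrFun heq i
      have hdi : D (α i) = f (α i) - g (α i) := by rw [hDf]; rfl
      rw [LinearMap.mem_ker, hdi, h0, sub_self]
    have hle : Submodule.span Fq (Set.range α) ≤ LinearMap.ker D :=
      Submodule.span_le.mpr (Set.range_subset_iff.mpr hmem)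
    have hmono := Submodule.finrank_mono hle
    rw [finrank_span_eq_card hα, Fintype.card_fin] at hmono
    omega
  -- part 1 : cardinality
  have hcardC : Nat.card ↥(ev '' 𝒞) = q ^ (m * k) := by
    rw [Nat.card_image_of_injOn hinj, hsize]
  refine ⟨hcardC, ?_⟩
  -- 𝒞 contains two distinct elements
  have hnontriv : ∃ f ∈ 𝒞, ∃ g ∈ 𝒞, f ≠ g := by
    have h2 : 1 < Nat.card ↥𝒞 := by
      rw [hsize]
      calc 1 < q := hq1
        _ = q ^ 1 := (pow_one q).symm
        _ ≤ q ^ (m * k) := Nat.pow_le_pow_right (le_of_lt hq1) (by nlinarith)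
    haveI := (Finite.one_lt_card_iff_nontrivial).mp h2
    obtain ⟨⟨f, hf⟩, ⟨g, hg⟩, hfg⟩ := exists_pair_ne ↥𝒞
    exact ⟨f, hf, g, hg, fun hh => hfg (Subtype.ext hh)⟩
  obtain ⟨f0, hf0, g0, hg0, hfg0⟩ := hnontriv
  set S : Set ℕ :=
    {r : ℕ | ∃ u ∈ ev '' 𝒞, ∃ v ∈ ev '' 𝒞, u ≠ v ∧ rkw Fq (u - v) = r} with hS
  have hSne : S.Nonempty := by
    refine ⟨rkw Fq (ev f0 - ev g0), ev f0, ⟨f0, hf0, rfl⟩, ev g0, ⟨g0, hg0, rfl⟩, ?_, rfl⟩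
    intro hh; exact hfg0 (hinj hf0 hg0 hh)
  have hminS : minDist Fq (ev '' 𝒞) = sInf S := by rw [hS]; rfl
  -- lower bound : every element of S is ≥ n - h
  have hlow : ∀ r ∈ S, n - h ≤ r := by
    rintro r ⟨u, ⟨f, hf, rfl⟩, v, ⟨g, hg, rfl⟩, huv, rfl⟩
    have hne : f ≠ g := fun hh => huv (by rw [hh])
    obtain ⟨D, hDf⟩ := hD f hf g hg
    have hk' := hker f hf g hg hne D hDf
    have hcomp : ev f - ev g = ⇑D ∘ α := by
      funext i
      show ev f i - ev g i = D (α i)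
      rw [hDf]
      rfl
    set W : Submodule Fq K := Submodule.span Fq (Set.range α) with hW
    have hWrank : Module.finrank Fq ↥W = n := by
      rw [hW, finrank_span_eq_card hα, Fintype.card_fin]
    have hspan : Submodule.span Fq (Set.range (ev f - ev g)) = Submodule.map D W := by
      rw [hcomp, Set.range_comp, hW, Submodule.map_span]
    have hrkw : rkw Fq (ev f - ev g) = Module.finrank Fq ↥(Submodule.map D W) := by
      unfold rkw
      rw [hspan]
    have h1 := LinearMap.finrank_range_add_finrank_ker (D.domRestrict W)
    rw [LinearMap.range_domRestrict, LinearMap.ker_domRestrict, hWrank] at h1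
    have hkb : Module.finrank Fq ↥(Submodule.comap W.subtype (LinearMap.ker D)) ≤
        Module.finrank Fq ↥(LinearMap.ker D) := by
      refine LinearMap.finrank_le_finrank_of_injective
        (f := LinearMap.codRestrict (LinearMap.ker D)
          (W.subtype ∘ₗ (Submodule.comap W.subtype (LinearMap.ker D)).subtype)
          (fun x => x.2)) ?_
      intro x y hxy
      have hval := congrArg Subtype.val hxy
      exact Subtype.ext (Subtype.ext hval)
    rw [hrkw]
    omega
  have hlb : n - h ≤ minDist Fq (ev '' 𝒞) := by
    rw [hminS]
    exact le_csInf hSne hlow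
  -- upper bound (Singleton bound)
  have hub : minDist Fq (ev '' 𝒞) ≤ n - k + 1 := by
    by_contra hcon
    push_neg at hcon
    rw [hminS] at hcon
    have hbig : ∀ u ∈ ev '' 𝒞, ∀ v ∈ ev '' 𝒞, u ≠ v → n - k + 1 < rkw Fq (u - v) := by
      intro u hu v hv huv
      have hle : sInf S ≤ rkw Fq (u - v) := Nat.sInf_le ⟨u, hu, v, hv, huv, rfl⟩
      omega
    set π : (Fin n → K) → (Fin (k - 1) → K) :=
      fun u j => u (Fin.castLE (show k - 1 ≤ n by omega) j) with hπ
    have hπinj : Set.InjOn π (ev '' 𝒞) := by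
      intro u hu v hv heq
      by_contra hne
      have hlt := hbig u hu v hv hne
      set w : Fin n → K := u - v with hw
      set w' : Fin (n - (k - 1)) → K := fun j => w ⟨(k - 1) + (j : ℕ), by omega⟩ with hw'
      have hsub : Set.range w ⊆ insert 0 (Set.range w') := by
        rintro x ⟨i, rfl⟩
        by_cases hi : (i : ℕ) < k - 1
        · refine Set.mem_insert_iff.mpr (Or.inl ?_)
          have hcast : (Fin.castLE (show k - 1 ≤ n by omega) ⟨(i : ℕ), hi⟩ : Fin n) = i := by
            ext; simp
          have h0 : u i = v i := by
            have h' := congrFun heq (⟨(i : ℕ), hi⟩ : Fin (k - 1))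
            simp only [hπ, Fin.castLE_mk, Fin.eta] at h'
            exact h'
          show u i - v i = 0
          rw [h0, sub_self]
        · refine Set.mem_insert_iff.mpr (Or.inr ⟨⟨(i : ℕ) - (k - 1), by omega⟩, ?_⟩)
          show w ⟨(k - 1) + ((i : ℕ) - (k - 1)), _⟩ = w i
          congr 1
          ext
          simp only []
          omega
      have hle : rkw Fq w ≤ n - (k - 1) := by
        unfold rkw
        calc Module.finrank Fq ↥(Submodule.span Fq (Set.range w))
            ≤ Module.finrank Fq ↥(Submodule.span Fq (insert 0 (Set.range w'))) :=
              Submodule.finrank_mono (Submodule.span_mono hsub)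
          _ = Module.finrank Fq ↥(Submodule.span Fq (Set.range w')) := by
              rw [Submodule.span_insert_zero]
          _ ≤ Fintype.card (Fin (n - (k - 1))) := finrank_range_le_card w'
          _ = n - (k - 1) := Fintype.card_fin _
      omega
    have hcount : Nat.card ↥(ev '' 𝒞) ≤ q ^ (m * (k - 1)) := by
      have h1 : Nat.card ↥(π '' (ev '' 𝒞)) = Nat.card ↥(ev '' 𝒞) :=
        Nat.card_image_of_injOn hπinj
      have h2 : Nat.card ↥(π '' (ev '' 𝒞)) ≤ Nat.card (Fin (k - 1) → K) :=
        Nat.card_le_card_of_injective _ Subtype.val_injective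
      have h3 : Nat.card (Fin (k - 1) → K) = q ^ (m * (k - 1)) := by
        rw [Nat.card_eq_fintype_card, Fintype.card_pi_const,
          Module.card_eq_pow_finrank (K := Fq) (V := K), hcard, hfin, ← pow_mul]
      omega
    have hexplt : m * (k - 1) < m * k := by
      have hkk : k - 1 + 1 = k := Nat.succ_pred_eq_of_pos hk
      calc m * (k - 1) < m * (k - 1) + m := by omega
        _ = m * ((k - 1) + 1) := by ring
        _ = m * k := by rw [hkk]
    have hpowlt : q ^ (m * (k - 1)) < q ^ (m * k) := Nat.pow_lt_pow_right hq1 hexplt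
    omega
  refine ⟨hlb, hub, fun hhk' => ?_⟩
  omega
end

section
/- Let q be a prime power and σ : x ↦ x^{q^s} an automorphism of F_{q^m} with gcd(s,m)=1. Let f(x) = Σ_{i=0}^{k} a_i x^{σ^i} be a σ-linearized polynomial over F_{q^m} with a_k ≠ 0 and dim_{F_q} ker(f) = k (a σ-linearized polynomial with maximum kernel). Then the σ-linearized polynomial g(x) = Σ_{i=0}^{k} (a_{k−i} x)^{σ^i} = Σ_{i=0}^{k} a_{k−i}^{σ^i} x^{σ^i} also satisfies dim_{F_q} ker(g) = k. -/
/-- `F_q`-dimension of the kernel (set of roots in `K`) of a map `f : K → K`. -/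
noncomputable def kdim (Fq : Type) [Field Fq] {K : Type} [Field K] [Algebra Fq K]
    (f : K → K) : ℕ :=
  Module.finrank Fq ↥(Submodule.span Fq {x : K | f x = 0})

/-!
Over a finite separable extension `K/F`, let `σ ∈ Gal(K/F)` and `L = ∑ aᵢ σⁱ`. Moving `σ^(k-i)`
across the trace gives `Tr(L(y) x) = Tr(σᵏ(y) g(x))` with `g(x) = ∑ σⁱ(a_{k-i} x)`. Since `σᵏ`
is bijective and the trace form is nondegenerate, the zeros of `g` form the orthogonal complement
of the image of `L`, whose dimension is `[K : F] - rank L = dim ker L`. For a finite field `F`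
take `σ` a power of the Frobenius `x ↦ x ^ #F`.
-/

open Module LinearMap

namespace LinearMap.BilinForm

variable {R M : Type*} [CommRing R] [AddCommGroup M] [Module R M]

theorem orthogonal_range_eq_setOf {B : LinearMap.BilinForm R M} (hB : B.SeparatingRight)
    (L : M →ₗ[R] M) {τ g : M → M} (hτ : Function.Surjective τ)
    (hadj : ∀ x y, B (L y) x = B (τ y) (g x)) :
    (B.orthogonal (range L) : Set M) = {x | g x = 0} := by
  ext x
  simp only [SetLike.mem_coe, mem_orthogonal_iff, mem_range, Set.mem_ofPred_eq,
    forall_exists_index, forall_apply_eq_imp_iff, hadj]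
  refine ⟨fun h ↦ hB _ fun w ↦ ?_, fun h y ↦ by rw [h, map_zero]⟩
  obtain ⟨y, rfl⟩ := hτ w
  exact h y

theorem finrank_orthogonal_range {K V : Type*} [Field K] [AddCommGroup V] [Module K V]
    [FiniteDimensional K V] {B : LinearMap.BilinForm K V} (hB : B.Nondegenerate)
    (L : V →ₗ[K] V) :
    finrank K (B.orthogonal (range L)) = finrank K (ker L) := by
  have := L.finrank_range_add_finrank_ker
  rw [finrank_orthogonal hB]
  omega

end LinearMap.BilinForm

section TraceAdjoint

variable {F K : Type} [Field F] [Field K] [Algebra F K]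

theorem kdim_coe_linearMap (L : K →ₗ[F] K) : kdim F L = finrank F (ker L) := by
  rw [kdim]
  exact congrArg (fun W : Submodule F K ↦ finrank F W) (Submodule.span_eq (ker L))

theorem kdim_eq_finrank_ker_of_trace_mul_eq [FiniteDimensional F K] [Algebra.IsSeparable F K]
    (L : K →ₗ[F] K) {τ g : K → K} (hτ : Function.Surjective τ)
    (hadj : ∀ x y, Algebra.trace F K (L y * x) = Algebra.trace F K (τ y * g x)) :
    kdim F g = finrank F (ker L) := by
  have hB := traceForm_nondegenerate F K
  rw [kdim, ← BilinForm.orthogonal_range_eq_setOf hB.2 L hτ hadj, Submodule.span_eq,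
    BilinForm.finrank_orthogonal_range hB]

def sigmaLinearized {k : ℕ} (σ : K ≃ₐ[F] K) (a : Fin (k + 1) → K) : K →ₗ[F] K :=
  ∑ i : Fin (k + 1), mulLeft F (a i) ∘ₗ (σ ^ (i : ℕ)).toLinearMap

theorem sigmaLinearized_apply {k : ℕ} (σ : K ≃ₐ[F] K) (a : Fin (k + 1) → K) (x : K) :
    sigmaLinearized σ a x = ∑ i : Fin (k + 1), a i * (σ ^ (i : ℕ)) x := by
  simp [sigmaLinearized]

theorem trace_sigmaLinearized_mul {k : ℕ} (σ : K ≃ₐ[F] K) (a : Fin (k + 1) → K) (x y : K) :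
    Algebra.trace F K (sigmaLinearized σ a y * x) =
      Algebra.trace F K ((σ ^ k) y * ∑ i : Fin (k + 1), (σ ^ (i : ℕ)) (a i.rev * x)) := by
  rw [sigmaLinearized_apply, Finset.sum_mul, Finset.mul_sum, map_sum, map_sum]
  refine Fintype.sum_bijective Fin.rev Fin.rev_bijective _ _ fun i ↦ ?_
  have hk : k = (i.rev : ℕ) + i := by rw [Fin.val_rev]; omega
  have hσk : (σ ^ k) y = (σ ^ (i.rev : ℕ)) ((σ ^ (i : ℕ)) y) := by
    rw [← AlgEquiv.mul_apply, ← pow_add, ← hk]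
  rw [Fin.rev_rev, hσk, ← Algebra.trace_eq_of_algEquiv (σ ^ (i.rev : ℕ)), ← map_mul]
  ring_nf

theorem kdim_sigmaLinearized_rev [FiniteDimensional F K] [Algebra.IsSeparable F K] {k : ℕ}
    (σ : K ≃ₐ[F] K) (a : Fin (k + 1) → K) :
    kdim F (fun x ↦ ∑ i : Fin (k + 1), (σ ^ (i : ℕ)) (a i.rev * x)) =
      finrank F (ker (sigmaLinearized σ a)) :=
  kdim_eq_finrank_ker_of_trace_mul_eq _ (σ ^ k).surjective (trace_sigmaLinearized_mul σ a)

end TraceAdjoint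

theorem FiniteField.frobeniusAlgEquivOfAlgebraic_pow_apply (F K : Type*) [Field F] [Fintype F]
    [Field K] [Algebra F K] [Algebra.IsAlgebraic F K] (n : ℕ) (x : K) :
    (frobeniusAlgEquivOfAlgebraic F K ^ n) x = x ^ Fintype.card F ^ n := by
  rw [AlgEquiv.coe_pow, coe_frobeniusAlgEquivOfAlgebraic_iterate]

theorem stmt_2_general (q s k : ℕ) (Fq K : Type) [Field Fq] [Fintype Fq] [Field K] [Fintype K]
    [Algebra Fq K] (hcard : Fintype.card Fq = q)
    (a : Fin (k + 1) → K)
    (hker : kdim Fq (fun x : K => ∑ i : Fin (k + 1), a i * x ^ ((q ^ s) ^ (i : ℕ))) = k) :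
    kdim Fq (fun x : K => ∑ i : Fin (k + 1), (a i.rev * x) ^ ((q ^ s) ^ (i : ℕ))) = k := by
  subst hcard
  set σ := FiniteField.frobeniusAlgEquivOfAlgebraic Fq K ^ s
  have hσ (i : ℕ) (x : K) : (σ ^ i) x = x ^ (Fintype.card Fq ^ s) ^ i := by
    rw [← pow_mul, FiniteField.frobeniusAlgEquivOfAlgebraic_pow_apply, pow_mul]
  have hf : (fun x : K => ∑ i : Fin (k + 1), a i * x ^ ((Fintype.card Fq ^ s) ^ (i : ℕ))) =
      sigmaLinearized σ a := by
    ext x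
    simp only [sigmaLinearized_apply, hσ]
  rw [hf, kdim_coe_linearMap] at hker
  simp only [← hσ]
  rw [kdim_sigmaLinearized_rev, hker]

/-- if `f(x) = Σ_{i=0}^{k} a_i x^{σ^i}` with `a_k ≠ 0` has maximum kernel
(`dim ker f = k`), then `g(x) = Σ_{i=0}^{k} (a_{k−i} x)^{σ^i}` also has `dim ker g = k`.
Here `σ : x ↦ x^{q^s}` with `gcd(s,m)=1`. -/
theorem stmt_2 (q s m k : ℕ) (Fq K : Type) [Field Fq] [Fintype Fq] [Field K] [Fintype K]
    [Algebra Fq K] (hcard : Fintype.card Fq = q) (hfin : Module.finrank Fq K = m)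
    (hs : Nat.gcd s m = 1)
    (a : Fin (k + 1) → K) (hak : a (Fin.last k) ≠ 0)
    (hker : kdim Fq (fun x : K => ∑ i : Fin (k + 1), a i * x ^ ((q ^ s) ^ (i : ℕ))) = k) :
    kdim Fq (fun x : K => ∑ i : Fin (k + 1), (a i.rev * x) ^ ((q ^ s) ^ (i : ℕ))) = k :=
  stmt_2_general q s k Fq K hcard a hker
end

section
/- Let p be a prime, q a power of p, and k, t positive integers. Let q' = p^r for a non-negative integer r, set p_i = 1 + q' + q'^2 + … + q'^i for i ≥ 0, and let n = t·p_k. Then the q-linearized polynomial f(x) = x + Σ_{i=0}^{k−1} x^{q^{t p_i}} is a subspace polynomial of L_{n,q}: the set of roots of f in F_{q^n} is an F_q-subspace of F_q-dimension t·p_{k−1}, equal to the q-degree of f; equivalently, f(x) divides x^{q^n} − x. -/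
/-!
Write `E i = 1 + q' + ⋯ + q'^(i-1)`, `m = E (k+1)` (so `n = t m`) and `ψ x = x^(q^t)`, an
`F_q`-linear endomorphism of `K` with `ψ^m = 1`. The roots of `f` in `K` form the kernel of
`P(ψ)`, where `P = ∑_{i ≤ k} X^(E i) ∈ F_q[X]`.

For monic `g`, the kernel of `g(ψ)` consists of roots of `∑ gᵢ X^(q^(t i))`, so its dimension is
at most `t · deg g`. In characteristic `p`, `X P^(q') - P` telescopes to `X^m - 1`, so
`X^m - 1 = P h`; since `P(ψ) h(ψ) = 0`, rank–nullity gives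
`dim ker P(ψ) ≥ n - t · deg h = t · deg P`. Thus `f` has `q^(t E k) = deg f` distinct roots in `K`,
which forces `f ∣ X^(q^n) - X`.
-/

open Polynomial Finset Module LinearMap

namespace Polynomial

theorem monic_and_natDegree_sum_range_succ {R : Type*} [Semiring R] [Nontrivial R]
    {F : ℕ → R[X]} {m : ℕ} (hm : (F m).Monic) (hlt : ∀ i < m, (F i).degree < (F m).degree) :
    (∑ i ∈ range (m + 1), F i).Monic ∧
      (∑ i ∈ range (m + 1), F i).natDegree = (F m).natDegree := by
  have hrest : (∑ i ∈ range m, F i).degree < (F m).degree :=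
    (degree_sum_le _ _).trans_lt <|
      (Finset.sup_lt_iff (bot_lt_iff_ne_bot.2 (mt degree_eq_bot.1 hm.ne_zero))).2
        fun i hi => hlt i (mem_range.1 hi)
  rw [sum_range_succ]
  exact ⟨hm.add_of_right hrest, natDegree_add_eq_right_of_degree_lt hrest⟩

theorem monic_and_natDegree_sum_X_pow {R : Type*} [Semiring R] [Nontrivial R] {e : ℕ → ℕ}
    (he : StrictMono e) (m : ℕ) :
    (∑ i ∈ range (m + 1), (X : R[X]) ^ e i).Monic ∧
      (∑ i ∈ range (m + 1), (X : R[X]) ^ e i).natDegree = e m := by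
  simpa only [natDegree_X_pow] using monic_and_natDegree_sum_range_succ
    (F := fun i => (X : R[X]) ^ e i) (monic_X_pow _)
    fun i hi => by simpa only [degree_X_pow, Nat.cast_lt] using he hi

theorem natCard_le_card_roots_toFinset {R : Type*} [CommRing R] [IsDomain R] [DecidableEq R]
    {f : R[X]} (hf : f ≠ 0) {S : Set R} (hS : ∀ x ∈ S, f.IsRoot x) :
    Nat.card S ≤ f.roots.toFinset.card := by
  rw [← Set.ncard_coe_finset, ← Nat.card_coe_set_eq]
  exact Nat.card_mono (Finset.finite_toSet _) fun x hx => by simpa [hf] using hS x hx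

theorem dvd_X_pow_card_sub_X_of_natDegree_le {K : Type*} [Field K] [Fintype K] {f : K[X]}
    (hf : f ≠ 0) {S : Set K} (hS : ∀ x ∈ S, f.IsRoot x) (hcard : f.natDegree ≤ Nat.card S) :
    f ∣ X ^ Fintype.card K - X := by
  classical
  have h₁ := natCard_le_card_roots_toFinset hf hS
  have h₂ := f.roots.toFinset_card_le
  have h₃ := f.card_roots'
  have hnodup : f.roots.Nodup := Multiset.toFinset_card_eq_card_iff_nodup.1 (by omega)
  have hsplits : f.Splits := splits_iff_card_roots.2 (by omega)
  refine hsplits.dvd_of_roots_le_roots hf ?_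
  rw [FiniteField.roots_X_pow_card_sub_X, Multiset.le_iff_subset hnodup]
  exact fun x _ => Finset.mem_univ x

theorem sum_X_pow_geom_sum_dvd {R : Type*} [CommRing R] (p : ℕ) [ExpChar R p] (r k : ℕ) :
    (∑ i ∈ range (k + 1), (X : R[X]) ^ ∑ j ∈ range i, (p ^ r) ^ j) ∣
      X ^ ∑ j ∈ range (k + 1), (p ^ r) ^ j - 1 := by
  set P := ∑ i ∈ range (k + 1), (X : R[X]) ^ ∑ j ∈ range i, (p ^ r) ^ j
  have hfrob : X * P ^ p ^ r =
      ∑ i ∈ range (k + 1), (X : R[X]) ^ ∑ j ∈ range (i + 1), (p ^ r) ^ j := by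
    rw [sum_pow_char_pow, mul_sum]
    refine sum_congr rfl fun i _ => ?_
    rw [← pow_mul, ← pow_succ', geom_sum_succ, mul_comm]
  have htelescope : X * P ^ p ^ r - P = X ^ ∑ j ∈ range (k + 1), (p ^ r) ^ j - 1 := by
    rw [hfrob, ← sum_sub_distrib,
      sum_range_sub (fun i => (X : R[X]) ^ ∑ j ∈ range i, (p ^ r) ^ j), sum_range_zero, pow_zero]
  refine ⟨X * P ^ (p ^ r - 1) - 1, ?_⟩
  rw [← htelescope, mul_sub, mul_one, mul_left_comm, ← pow_succ',
    Nat.sub_add_cancel (expChar_pow_pos R p r)]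

variable {R A : Type*} [CommSemiring R] [Semiring A] [Algebra R A]

variable (A) in
noncomputable def linearize (Q : ℕ) (g : R[X]) : A[X] :=
  ∑ i ∈ range (g.natDegree + 1), C (algebraMap R A (g.coeff i)) * X ^ Q ^ i

theorem monic_and_natDegree_linearize [Nontrivial A] {Q : ℕ} (hQ : 1 < Q) {g : R[X]}
    (hg : g.Monic) :
    (linearize A Q g).Monic ∧ (linearize A Q g).natDegree = Q ^ g.natDegree := by
  have htop : C (algebraMap R A (g.coeff g.natDegree)) * X ^ Q ^ g.natDegree =
      (X ^ Q ^ g.natDegree : A[X]) := by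
    rw [hg.coeff_natDegree, map_one, C_1, one_mul]
  have h := monic_and_natDegree_sum_range_succ
    (F := fun i => C (algebraMap R A (g.coeff i)) * X ^ Q ^ i) (m := g.natDegree)
    (by simp only [htop, monic_X_pow]) fun i hi => by
      simp only [htop, degree_X_pow]
      exact (degree_C_mul_X_pow_le _ _).trans_lt (by exact_mod_cast Nat.pow_lt_pow_right hQ hi)
  simpa only [linearize, htop, natDegree_X_pow] using h

end Polynomial

theorem geom_sum_strictMono {s : ℕ} (hs : 0 < s) : StrictMono fun i => ∑ j ∈ range i, s ^ j :=
  strictMono_nat_of_lt_succ fun i => by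
    simpa [sum_range_succ] using pow_pos hs i

theorem sum_range_succ_pow_pow_geom_sum {R : Type*} [Semiring R] (x : R) (c s t k : ℕ) :
    ∑ i ∈ range (k + 1), x ^ c ^ (t * ∑ j ∈ range i, s ^ j) =
      x + ∑ i ∈ range k, x ^ c ^ (t * ∑ j ∈ range (i + 1), s ^ j) := by
  rw [sum_range_succ', add_comm]
  simp

theorem LinearMap.finrank_le_finrank_ker_add_finrank_ker_of_comp_eq_zero {K U V W : Type*}
    [DivisionRing K] [AddCommGroup U] [Module K U] [AddCommGroup V] [Module K V]
    [FiniteDimensional K V] [AddCommGroup W] [Module K W] [FiniteDimensional K W]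
    {f : W →ₗ[K] U} {g : V →ₗ[K] W}
    (h : f ∘ₗ g = 0) : finrank K V ≤ finrank K (ker f) + finrank K (ker g) := by
  rw [← finrank_range_add_finrank_ker g]
  exact Nat.add_le_add_right (Submodule.finrank_mono (range_le_ker_iff.2 h)) _

section Frobenius

variable {Fq K : Type*} [Field Fq] [Fintype Fq] [Field K] [Algebra Fq K]

variable (Fq K) in
noncomputable def frobeniusEnd : Module.End Fq K :=
  (FiniteField.frobeniusAlgHom Fq K).toLinearMap

theorem frobeniusEnd_pow_apply (s : ℕ) (x : K) :
    (frobeniusEnd Fq K ^ s) x = x ^ Fintype.card Fq ^ s := by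
  induction s generalizing x with
  | zero => simp
  | succ s ih =>
    rw [pow_succ, Module.End.mul_apply, ih]
    simp [frobeniusEnd, ← pow_mul, pow_succ']

theorem eval_linearize (t : ℕ) (g : Fq[X]) (x : K) :
    (linearize K (Fintype.card Fq ^ t) g).eval x = aeval (frobeniusEnd Fq K ^ t) g x := by
  rw [linearize, eval_finsetSum, aeval_eq_sum_range, LinearMap.sum_apply]
  refine sum_congr rfl fun i _ => ?_
  simp [← pow_mul, frobeniusEnd_pow_apply, Algebra.smul_def]

variable [Fintype K]

theorem frobeniusEnd_pow_finrank : frobeniusEnd Fq K ^ finrank Fq K = 1 :=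
  LinearMap.ext fun x => by
    rw [frobeniusEnd_pow_apply, ← card_eq_pow_finrank, FiniteField.pow_card, Module.End.one_apply]

theorem finrank_ker_aeval_frobeniusEnd_pow_le {t : ℕ} (ht : 0 < t) {g : Fq[X]} (hg : g.Monic) :
    finrank Fq (ker (aeval (frobeniusEnd Fq K ^ t) g)) ≤ t * g.natDegree := by
  classical
  have hq : 1 < Fintype.card Fq := Fintype.one_lt_card
  obtain ⟨hmonic, hdeg⟩ := monic_and_natDegree_linearize (A := K) (Nat.one_lt_pow ht.ne' hq) hg
  have hroots : ∀ x ∈ (ker (aeval (frobeniusEnd Fq K ^ t) g) : Set K),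
      (linearize K (Fintype.card Fq ^ t) g).IsRoot x := fun x hx => by
    rwa [IsRoot, eval_linearize]
  have hcard : Fintype.card Fq ^ finrank Fq (ker (aeval (frobeniusEnd Fq K ^ t) g)) ≤
      Fintype.card Fq ^ (t * g.natDegree) := calc
    _ = Nat.card (ker (aeval (frobeniusEnd Fq K ^ t) g) : Set K) := by
      rw [SetLike.coe_sort_coe, natCard_eq_pow_finrank (K := Fq), Nat.card_eq_fintype_card]
    _ ≤ (linearize K (Fintype.card Fq ^ t) g).roots.toFinset.card :=
      natCard_le_card_roots_toFinset hmonic.ne_zero hroots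
    _ ≤ (linearize K (Fintype.card Fq ^ t) g).natDegree :=
      (Multiset.toFinset_card_le _).trans (card_roots' _)
    _ = Fintype.card Fq ^ (t * g.natDegree) := by rw [hdeg, pow_mul]
  exact (Nat.pow_le_pow_iff_right hq).1 hcard

theorem finrank_ker_aeval_frobeniusEnd_pow_of_dvd {t m : ℕ} (hK : finrank Fq K = t * m)
    {g : Fq[X]} (hg : g.Monic) (hdvd : g ∣ X ^ m - 1) :
    finrank Fq (ker (aeval (frobeniusEnd Fq K ^ t) g)) = t * g.natDegree := by
  obtain ⟨h, hgh⟩ := hdvd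
  have htm : 0 < t * m := hK ▸ finrank_pos
  have ht : 0 < t := Nat.pos_of_mul_pos_right htm
  have hh : h.Monic :=
    hg.of_mul_monic_left (hgh ▸ monic_X_pow_sub_C 1 (Nat.pos_of_mul_pos_left htm).ne')
  have hdeg : g.natDegree + h.natDegree = m := by
    rw [← hg.natDegree_mul hh, ← hgh, ← C_1, natDegree_X_pow_sub_C]
  have hcomp : aeval (frobeniusEnd Fq K ^ t) g ∘ₗ aeval (frobeniusEnd Fq K ^ t) h = 0 := by
    rw [← Module.End.mul_eq_comp, ← map_mul, ← hgh, map_sub, map_pow, aeval_X, map_one,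
      ← pow_mul, ← hK, frobeniusEnd_pow_finrank, sub_self]
  have hsum := finrank_le_finrank_ker_add_finrank_ker_of_comp_eq_zero hcomp
  have hg_le := finrank_ker_aeval_frobeniusEnd_pow_le (K := K) ht hg
  have hh_le := finrank_ker_aeval_frobeniusEnd_pow_le (K := K) ht hh
  rw [hK, ← hdeg, mul_add] at hsum
  omega

theorem aeval_frobeniusEnd_pow_sum_X_pow_apply {ι : Type*} (t : ℕ) (s : Finset ι) (e : ι → ℕ)
    (x : K) :
    aeval (frobeniusEnd Fq K ^ t) (∑ i ∈ s, (X : Fq[X]) ^ e i) x =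
      ∑ i ∈ s, x ^ Fintype.card Fq ^ (t * e i) := by
  rw [map_sum, LinearMap.sum_apply]
  refine sum_congr rfl fun i _ => ?_
  rw [map_pow, aeval_X, ← pow_mul, frobeniusEnd_pow_apply]

theorem finrank_ker_aeval_sum_X_pow_geom_sum (p : ℕ) [ExpChar Fq p] (r : ℕ) {t k : ℕ}
    (hK : finrank Fq K = t * ∑ j ∈ range (k + 1), (p ^ r) ^ j) :
    finrank Fq (ker (aeval (frobeniusEnd Fq K ^ t)
        (∑ i ∈ range (k + 1), (X : Fq[X]) ^ ∑ j ∈ range i, (p ^ r) ^ j))) =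
      t * ∑ j ∈ range k, (p ^ r) ^ j := by
  obtain ⟨hmonic, hdeg⟩ := monic_and_natDegree_sum_X_pow (R := Fq)
    (geom_sum_strictMono (expChar_pow_pos Fq p r)) k
  rw [finrank_ker_aeval_frobeniusEnd_pow_of_dvd hK hmonic (sum_X_pow_geom_sum_dvd p r k), hdeg]

theorem sum_X_pow_dvd_X_pow_card_sub_X {t k : ℕ} (ht : 0 < t) {e : ℕ → ℕ} (he : StrictMono e)
    (hdim : finrank Fq (ker (aeval (frobeniusEnd Fq K ^ t)
      (∑ i ∈ range (k + 1), (X : Fq[X]) ^ e i))) = t * e k) :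
    (∑ i ∈ range (k + 1), (X : K[X]) ^ Fintype.card Fq ^ (t * e i)) ∣ X ^ Fintype.card K - X := by
  have hq : 1 < Fintype.card Fq := Fintype.one_lt_card
  obtain ⟨hmonic, hdeg⟩ := monic_and_natDegree_sum_X_pow (R := K)
    (e := fun i => Fintype.card Fq ^ (t * e i))
    ((pow_right_strictMono₀ hq).comp (he.const_mul ht)) k
  refine dvd_X_pow_card_sub_X_of_natDegree_le hmonic.ne_zero
    (S := ker (aeval (frobeniusEnd Fq K ^ t) (∑ i ∈ range (k + 1), (X : Fq[X]) ^ e i)))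
    (fun x hx => ?_) ?_
  · rw [IsRoot, eval_finsetSum]
    simp only [eval_pow, eval_X]
    rwa [← aeval_frobeniusEnd_pow_sum_X_pow_apply]
  · rw [hdeg, SetLike.coe_sort_coe, natCard_eq_pow_finrank (K := Fq), hdim,
      Nat.card_eq_fintype_card]

end Frobenius

theorem stmt_6_general (p q qp r t k n : ℕ) (Fq K : Type) [Field Fq] [Fintype Fq] [Field K]
    [Fintype K] [Algebra Fq K]
    (hp : p.Prime) (hpe : ∃ e : ℕ, 0 < e ∧ q = p ^ e) (hqp : qp = p ^ r)
    (ht : 0 < t)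
    (hn : n = t * ∑ j ∈ Finset.range (k + 1), qp ^ j)
    (hcard : Fintype.card Fq = q) (hfin : Module.finrank Fq K = n) :
    kdim Fq (fun x : K =>
        x + ∑ i ∈ Finset.range k, x ^ (q ^ (t * ∑ j ∈ Finset.range (i + 1), qp ^ j)))
      = t * ∑ j ∈ Finset.range k, qp ^ j ∧
    (Polynomial.X + ∑ i ∈ Finset.range k,
        (Polynomial.X : Polynomial K) ^ (q ^ (t * ∑ j ∈ Finset.range (i + 1), qp ^ j)))
      ∣ Polynomial.X ^ (q ^ n) - Polynomial.X := by
  subst hqp hcard hn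
  obtain ⟨e, -, hq⟩ := hpe
  have : Fact p.Prime := ⟨hp⟩
  have : CharP Fq p := charP_of_card_eq_prime_pow hq
  have hdim := finrank_ker_aeval_sum_X_pow_geom_sum p r hfin
  have hroots : {x : K | x + ∑ i ∈ range k,
      x ^ Fintype.card Fq ^ (t * ∑ j ∈ range (i + 1), (p ^ r) ^ j) = 0} =
      ker (aeval (frobeniusEnd Fq K ^ t)
        (∑ i ∈ range (k + 1), (X : Fq[X]) ^ ∑ j ∈ range i, (p ^ r) ^ j)) := by
    ext x
    rw [SetLike.mem_coe, mem_ker, aeval_frobeniusEnd_pow_sum_X_pow_apply,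
      sum_range_succ_pow_pow_geom_sum, Set.mem_ofPred_eq]
  refine ⟨by rw [kdim, hroots, Submodule.span_eq, hdim], ?_⟩
  rw [← sum_range_succ_pow_pow_geom_sum, ← hfin, ← card_eq_pow_finrank]
  exact sum_X_pow_dvd_X_pow_card_sub_X ht (geom_sum_strictMono (pow_pos hp.pos r)) hdim

/-- with `q' = p^r`, `p_i = 1 + q' + ⋯ + q'^i` and `n = t·p_k`, the
`q`-polynomial `f(x) = x + Σ_{i=0}^{k−1} x^{q^{t·p_i}}` is a subspace polynomial of
`L_{n,q}`: its roots in `F_{q^n}` form an `F_q`-subspace of dimension `t·p_{k−1}`;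
equivalently `f(x) ∣ x^{q^n} − x`. -/
theorem stmt_6 (p q qp r t k n : ℕ) (Fq K : Type) [Field Fq] [Fintype Fq] [Field K]
    [Fintype K] [Algebra Fq K]
    (hp : p.Prime) (hpe : ∃ e : ℕ, 0 < e ∧ q = p ^ e) (hqp : qp = p ^ r)
    (ht : 0 < t) (hk : 0 < k)
    (hn : n = t * ∑ j ∈ Finset.range (k + 1), qp ^ j)
    (hcard : Fintype.card Fq = q) (hfin : Module.finrank Fq K = n) :
    kdim Fq (fun x : K =>
        x + ∑ i ∈ Finset.range k, x ^ (q ^ (t * ∑ j ∈ Finset.range (i + 1), qp ^ j)))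
      = t * ∑ j ∈ Finset.range k, qp ^ j ∧
    (Polynomial.X + ∑ i ∈ Finset.range k,
        (Polynomial.X : Polynomial K) ^ (q ^ (t * ∑ j ∈ Finset.range (i + 1), qp ^ j)))
      ∣ Polynomial.X ^ (q ^ n) - Polynomial.X :=
  stmt_6_general p q qp r t k n Fq K hp hpe hqp ht hn hcard hfin
end

section
/- Let p be a prime, q a power of p, and k, t positive integers. Let q' = p^r for a non-negative integer r, set p_i = 1 + q' + q'^2 + … + q'^i for i ≥ 0, and let n = t·p_k. Let s be a positive integer coprime with n and σ : x ↦ x^{q^s} on F_{q^n}. Then the σ-linearized polynomial f(x) = x + Σ_{i=0}^{k−1} x^{σ^{t p_i}} is a σ-subspace polynomial of L_{n,σ}: its set of roots in F_{q^n} is an F_q-subspace of F_q-dimension t·p_{k−1}, equal to its σ-degree. -/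
/-!
Since `gcd(s, n) = 1`, `σ = Frob^s` generates `Gal(F_{q^n}/F_q)`, and `f = A(σ)` for
`A = 1 + ∑_{i<k} X^{t·pᵢ} ∈ F_q[X]`. For any generator `σ` of the Galois group, Dedekind's
independence of characters bounds `dim ker A(σ) ≤ deg A`; if moreover `A * B = Xⁿ - 1`, then
`A(σ) ∘ B(σ) = 0` and the two bounds together force `dim ker A(σ) = deg A`. Finally, in
characteristic `p` the Frobenius gives `X^t · A^{q'} = A + X^{t·p_k} - 1`, so `A ∣ Xⁿ - 1`.
-/

open Polynomial Module Finset

-- `pᵢ = 1 + b + ⋯ + bⁱ` is the base-`b` repunit with `i + 1` digits.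
noncomputable def repunitPoly (R : Type*) [Semiring R] (b t k : ℕ) : R[X] :=
  1 + ∑ i ∈ range k, X ^ (t * ∑ j ∈ range (i + 1), b ^ j)

section repunitPoly

variable {R : Type*} {b t : ℕ}

theorem repunitPoly_succ [Semiring R] (k : ℕ) :
    repunitPoly R b t (k + 1) = repunitPoly R b t k + X ^ (t * ∑ j ∈ range (k + 1), b ^ j) := by
  rw [repunitPoly, repunitPoly, sum_range_succ, add_assoc]

theorem natDegree_repunitPoly [Semiring R] [Nontrivial R] (hb : b ≠ 0) (ht : t ≠ 0) (k : ℕ) :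
    (repunitPoly R b t k).natDegree = t * ∑ j ∈ range k, b ^ j := by
  induction k with
  | zero => simp [repunitPoly]
  | succ k ih =>
    rw [repunitPoly_succ, natDegree_add_eq_right_of_natDegree_lt] <;>
      rw [natDegree_X_pow]
    rw [ih, sum_range_succ]
    exact Nat.mul_lt_mul_of_pos_left (by simp [Nat.pos_of_ne_zero hb]) (Nat.pos_of_ne_zero ht)

/-- The Frobenius `P ↦ P ^ (p ^ r)` multiplies the exponents `t·(1 + b + ⋯ + bⁱ)` by `b = p ^ r`,
and the factor `X ^ t` then shifts each of them to the next one. -/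
theorem X_pow_mul_repunitPoly_pow [CommRing R] (p r : ℕ) [ExpChar R p] (k : ℕ) :
    X ^ t * repunitPoly R (p ^ r) t k ^ p ^ r
      = repunitPoly R (p ^ r) t k + X ^ (t * ∑ j ∈ range (k + 1), (p ^ r) ^ j) - 1 := by
  induction k with
  | zero => simp [repunitPoly]
  | succ k ih =>
    rw [repunitPoly_succ, add_pow_expChar_pow, mul_add, ih, ← pow_mul, ← pow_add,
      geom_sum_succ (n := k + 1)]
    ring_nf

theorem repunitPoly_dvd_X_pow_sub_one [CommRing R] (p r : ℕ) [ExpChar R p] (k : ℕ) :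
    repunitPoly R (p ^ r) t k ∣ X ^ (t * ∑ j ∈ range (k + 1), (p ^ r) ^ j) - 1 := by
  have hq : p ^ r ≠ 0 := pow_ne_zero _ (expChar_ne_zero R p)
  rw [show X ^ (t * ∑ j ∈ range (k + 1), (p ^ r) ^ j) - (1 : R[X])
      = X ^ t * repunitPoly R (p ^ r) t k ^ p ^ r - repunitPoly R (p ^ r) t k by
    rw [X_pow_mul_repunitPoly_pow]; ring]
  exact dvd_sub (Dvd.dvd.mul_left (dvd_pow_self _ hq) _) dvd_rfl

end repunitPoly

theorem Polynomial.finrank_degreeLT (K : Type*) [Field K] (m : ℕ) :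
    finrank K (degreeLT K m) = m :=
  (finrank_eq_card_basis (degreeLT.basis K m)).trans (Fintype.card_fin m)

theorem finrank_ker_lcomp_subtype_add_finrank {F K V : Type*} [Field F] [Field K] [Algebra F K]
    [AddCommGroup V] [Module F V] [FiniteDimensional F V] (U : Submodule F V) :
    finrank K (LinearMap.ker (LinearMap.lcomp K K U.subtype)) + finrank F U = finrank F V := by
  have hsurj : Function.Surjective (LinearMap.lcomp K K U.subtype) := fun φ =>
    LinearMap.exists_extend φ
  rw [← finrank_linearMap_self F K U, ← finrank_linearMap_self F K V,
    ← LinearMap.finrank_range_add_finrank_ker (LinearMap.lcomp K K U.subtype),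
    LinearMap.range_eq_top.mpr hsurj, finrank_top, add_comm]

section linearizedEval

variable {F K : Type*} [Field F] [Field K] [Algebra F K]

theorem Polynomial.mul_map_mem_degreeLT {C : K[X]} {m : ℕ} (hC : C ∈ degreeLT K m) (A : F[X]) :
    C * A.map (algebraMap F K) ∈ degreeLT K (m + A.natDegree) := by
  by_cases hC0 : C = 0
  · simp [hC0]
  rw [mem_degreeLT] at hC ⊢
  have hCm : C.natDegree < m := (natDegree_lt_iff_degree_lt hC0).mpr hC
  have hmul : (C * A.map (algebraMap F K)).natDegree < m + A.natDegree :=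
    natDegree_mul_le.trans_lt (by rw [natDegree_map]; omega)
  exact degree_le_natDegree.trans_lt (by exact_mod_cast hmul)

variable (σ : K ≃ₐ[F] K)

/-- The `σ`-linearized polynomial `x ↦ ∑ cₗ σˡ(x)` attached to `D = ∑ cₗ Xˡ ∈ K[X]`. -/
noncomputable def linearizedEval : K[X] →ₗ[K] (K →ₗ[F] K) :=
  lsum fun l => LinearMap.toSpanSingleton K _ (σ.toLinearMap ^ l)

theorem linearizedEval_monomial (l : ℕ) (c : K) :
    linearizedEval σ (monomial l c) = c • σ.toLinearMap ^ l := by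
  simp [linearizedEval, sum_monomial_index]

theorem linearizedEval_mul_map (C : K[X]) (A : F[X]) :
    linearizedEval σ (C * A.map (algebraMap F K))
      = linearizedEval σ C ∘ₗ aeval σ.toLinearMap A := by
  induction C using Polynomial.induction_on' with
  | add C₁ C₂ h₁ h₂ => rw [add_mul, map_add, map_add, h₁, h₂, LinearMap.add_comp]
  | monomial j c =>
    induction A using Polynomial.induction_on' with
    | add A₁ A₂ h₁ h₂ =>
      rw [Polynomial.map_add, mul_add, map_add, h₁, h₂, map_add, LinearMap.comp_add]
    | monomial i a =>
      ext x
      simp only [Polynomial.map_monomial, monomial_mul_monomial, linearizedEval_monomial,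
        aeval_monomial, pow_add, LinearMap.comp_apply, LinearMap.smul_apply, Module.End.mul_apply,
        map_smul, smul_eq_mul, ← Algebra.smul_def]
      rw [Algebra.smul_def]
      ring

theorem linearIndependent_pow_toLinearMap :
    LinearIndependent K fun i : Fin (orderOf σ) => σ.toLinearMap ^ (i : ℕ) := by
  have hinj : Function.Injective
      fun i : Fin (orderOf σ) => ((σ ^ (i : ℕ) : K ≃ₐ[F] K) : K →ₐ[F] K) := fun i j h =>
    Fin.ext (pow_injOn_Iio_orderOf i.isLt j.isLt (AlgEquiv.coe_toAlgHom_injective h))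
  simpa [Function.comp_def, AlgEquiv.pow_toLinearMap] using
    (linearIndependent_algHom_toLinearMap F K K).comp _ hinj

theorem eq_zero_of_linearizedEval_eq_zero {D : K[X]} (hD : D.degree < orderOf σ)
    (h : linearizedEval σ D = 0) : D = 0 := by
  have hsum : ∑ i : Fin (orderOf σ), D.coeff i • σ.toLinearMap ^ (i : ℕ) = 0 := by
    rw [sum_fin (fun l c => c • σ.toLinearMap ^ l) (fun _ => zero_smul _ _) hD]
    exact h
  have hcoeff := Fintype.linearIndependent_iff.mp (linearIndependent_pow_toLinearMap σ) _ hsum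
  ext l
  by_cases hl : l < orderOf σ
  · exact hcoeff ⟨l, hl⟩
  · exact coeff_eq_zero_of_degree_lt (hD.trans_le (by exact_mod_cast not_lt.mp hl))

variable [FiniteDimensional F K]

/-- The maps `D(σ)` with `D ∈ K[X]·A` of degree `< n` vanish on `ker A(σ)`; by Dedekind's lemma
they form a `K`-space of dimension `n - deg A`, while the maps vanishing on an `F`-subspace
of dimension `m` form one of dimension `n - m`. -/
theorem finrank_ker_aeval_le_natDegree (hσ : orderOf σ = finrank F K) {A : F[X]} (hA : A ≠ 0) :
    finrank F (LinearMap.ker (aeval σ.toLinearMap A)) ≤ A.natDegree := by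
  set U := LinearMap.ker (aeval σ.toLinearMap A)
  set n := finrank F K
  set d := A.natDegree
  by_cases hdn : n ≤ d
  · exact (Submodule.finrank_le U).trans hdn
  let Ψ := (linearizedEval σ ∘ₗ LinearMap.mulRight K (A.map (algebraMap F K))).domRestrict
    (degreeLT K (n - d))
  have hΨ : Function.Injective Ψ := by
    refine (injective_iff_map_eq_zero Ψ).mpr fun C hC => Subtype.ext ?_
    have hdeg : (C * A.map (algebraMap F K)).degree < orderOf σ := by
      have := mul_map_mem_degreeLT C.2 A
      rw [hσ]
      rwa [Nat.sub_add_cancel (not_le.mp hdn).le, mem_degreeLT] at this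
    have := eq_zero_of_linearizedEval_eq_zero σ hdeg hC
    exact (mul_eq_zero.mp this).resolve_right (Polynomial.map_ne_zero hA)
  have hrange : LinearMap.range Ψ ≤ LinearMap.ker (LinearMap.lcomp K K U.subtype) := by
    rintro _ ⟨C, rfl⟩
    ext u
    simp [Ψ, linearizedEval_mul_map]
  have h1 := Submodule.finrank_mono hrange
  rw [LinearMap.finrank_range_of_inj hΨ, finrank_degreeLT] at h1
  have h2 := finrank_ker_lcomp_subtype_add_finrank (K := K) U
  omega

theorem finrank_ker_aeval_eq_natDegree_of_dvd (hσ : orderOf σ = finrank F K) {A : F[X]}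
    (hA : A ∣ X ^ finrank F K - 1) :
    finrank F (LinearMap.ker (aeval σ.toLinearMap A)) = A.natDegree := by
  obtain ⟨B, hAB⟩ := hA
  have hXn : (X ^ finrank F K - 1 : F[X]) ≠ 0 := by
    simpa using X_pow_sub_C_ne_zero finrank_pos (1 : F)
  obtain ⟨hA0, hB0⟩ := mul_ne_zero_iff.mp (hAB ▸ hXn)
  have hdeg : A.natDegree + B.natDegree = finrank F K := by
    rw [← natDegree_mul hA0 hB0, ← hAB, ← C_1, natDegree_X_pow_sub_C]
  have hAB0 : aeval σ.toLinearMap (A * B) = 0 := by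
    rw [← hAB, map_sub, map_pow, aeval_X, map_one, ← AlgEquiv.pow_toLinearMap, ← hσ,
      pow_orderOf_eq_one, AlgEquiv.one_toLinearMap, sub_self]
  have hrange :
      LinearMap.range (aeval σ.toLinearMap B) ≤ LinearMap.ker (aeval σ.toLinearMap A) := by
    rintro _ ⟨x, rfl⟩
    rw [LinearMap.mem_ker, ← Module.End.mul_apply, ← map_mul, hAB0, LinearMap.zero_apply]
  have h1 := Submodule.finrank_mono hrange
  have h2 := LinearMap.finrank_range_add_finrank_ker (aeval σ.toLinearMap B)
  have hA' := finrank_ker_aeval_le_natDegree σ hσ hA0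
  have hB' := finrank_ker_aeval_le_natDegree σ hσ hB0
  omega

end linearizedEval

section FiniteField

open FiniteField

variable (Fq K : Type*) [Field Fq] [Fintype Fq] [Field K] [Fintype K] [Algebra Fq K]

theorem orderOf_frobeniusAlgEquivOfAlgebraic_pow {s : ℕ} (hs : (finrank Fq K).Coprime s) :
    orderOf (frobeniusAlgEquivOfAlgebraic Fq K ^ s) = finrank Fq K := by
  rw [← orderOf_frobeniusAlgEquivOfAlgebraic] at hs ⊢
  exact hs.orderOf_pow

theorem frobeniusAlgEquivOfAlgebraic_pow_toLinearMap_pow_apply (s l : ℕ) (x : K) :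
    ((frobeniusAlgEquivOfAlgebraic Fq K ^ s).toLinearMap ^ l) x
      = x ^ (Fintype.card Fq ^ s) ^ l := by
  rw [← AlgEquiv.pow_toLinearMap, ← pow_mul, AlgEquiv.toLinearMap_apply, AlgEquiv.coe_pow,
    coe_frobeniusAlgEquivOfAlgebraic_iterate, pow_mul]

end FiniteField

theorem stmt_7_general (p q qp r s t k n : ℕ) (Fq K : Type) [Field Fq] [Fintype Fq] [Field K]
    [Fintype K] [Algebra Fq K]
    (hp : p.Prime) (hpe : ∃ e : ℕ, 0 < e ∧ q = p ^ e) (hqp : qp = p ^ r)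
    (hn : n = t * ∑ j ∈ Finset.range (k + 1), qp ^ j)
    (hsn : Nat.gcd s n = 1)
    (hcard : Fintype.card Fq = q) (hfin : Module.finrank Fq K = n) :
    kdim Fq (fun x : K =>
        x + ∑ i ∈ Finset.range k, x ^ ((q ^ s) ^ (t * ∑ j ∈ Finset.range (i + 1), qp ^ j)))
      = t * ∑ j ∈ Finset.range k, qp ^ j := by
  obtain ⟨e, -, rfl⟩ := hpe
  subst hqp
  have : Fact p.Prime := ⟨hp⟩
  have : CharP Fq p := charP_of_card_eq_prime_pow hcard
  set σ := FiniteField.frobeniusAlgEquivOfAlgebraic Fq K ^ s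
  have hσ : orderOf σ = finrank Fq K :=
    orderOf_frobeniusAlgEquivOfAlgebraic_pow Fq K (hfin ▸ Nat.coprime_comm.mp hsn)
  have hroots : {x : K | x + ∑ i ∈ range k, x ^ ((Fintype.card Fq ^ s) ^
      (t * ∑ j ∈ range (i + 1), (p ^ r) ^ j)) = 0}
      = LinearMap.ker (aeval σ.toLinearMap (repunitPoly Fq (p ^ r) t k)) := by
    ext x
    simp [repunitPoly, σ, frobeniusAlgEquivOfAlgebraic_pow_toLinearMap_pow_apply]
  have ht : t ≠ 0 := by
    rintro rfl
    exact (finrank_pos (R := Fq) (M := K)).ne' (by simp [hfin, hn])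
  rw [kdim, ← hcard, hroots, Submodule.span_eq,
    finrank_ker_aeval_eq_natDegree_of_dvd σ hσ (hfin ▸ hn ▸ repunitPoly_dvd_X_pow_sub_one p r k),
    natDegree_repunitPoly (pow_ne_zero _ hp.ne_zero) ht]

/-- with `q' = p^r`, `p_i = 1 + q' + ⋯ + q'^i`, `n = t·p_k`, `gcd(s,n)=1`
and `σ : x ↦ x^{q^s}`, the σ-polynomial `f(x) = x + Σ_{i=0}^{k−1} x^{σ^{t·p_i}}` is a
σ-subspace polynomial of `L_{n,σ}`: its roots in `F_{q^n}` form an `F_q`-subspace of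
dimension `t·p_{k−1}`, equal to its σ-degree. -/
theorem stmt_7 (p q qp r s t k n : ℕ) (Fq K : Type) [Field Fq] [Fintype Fq] [Field K]
    [Fintype K] [Algebra Fq K]
    (hp : p.Prime) (hpe : ∃ e : ℕ, 0 < e ∧ q = p ^ e) (hqp : qp = p ^ r)
    (ht : 0 < t) (hk : 0 < k)
    (hn : n = t * ∑ j ∈ Finset.range (k + 1), qp ^ j)
    (hs : 0 < s) (hsn : Nat.gcd s n = 1)
    (hcard : Fintype.card Fq = q) (hfin : Module.finrank Fq K = n) :
    kdim Fq (fun x : K =>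
        x + ∑ i ∈ Finset.range k, x ^ ((q ^ s) ^ (t * ∑ j ∈ Finset.range (i + 1), qp ^ j)))
      = t * ∑ j ∈ Finset.range k, qp ^ j :=
  stmt_7_general p q qp r s t k n Fq K hp hpe hqp hn hsn hcard hfin
end

section
/- Let p be a prime, q a power of p, and k, t positive integers. Let q' = p^r for a non-negative integer r, set p_i = 1 + q' + q'^2 + … + q'^i for i ≥ 0, and let n = t·p_k. Let s be a positive integer coprime with n and σ : x ↦ x^{q^s} on F_{q^n}, and let f(x) = x + Σ_{i=0}^{k−1} x^{σ^{t p_i}}. Then the set Q = { β^{−σ^{t p_{k−1}}} f(βx) : β ∈ F_{q^n}^* } is a family of σ-subspace polynomials of L_{n,σ} of σ-degree t·p_{k−1} (each element has exactly q^{t p_{k−1}} roots in F_{q^n}, forming an F_q-subspace); moreover, for α, β ∈ F_{q^n}^*, α^{−σ^{t p_{k−1}}} f(αx) = β^{−σ^{t p_{k−1}}} f(βx) if and only if α/β ∈ F_{q^t}, and consequently |Q| = (q^n−1)/(q^t−1). -/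
open Polynomial Finset Function

theorem Finset.sum_range_mul_sub_eq_sum_Ioc {R : Type*} [Ring R] (u w : ℕ → R) (N : ℕ) :
    ∑ i ∈ range (N + 1), u i * (w i - w 0) =
      ∑ j ∈ range N, (∑ i ∈ Ioc j N, u i) * (w (j + 1) - w j) := by
  simp_rw [sum_mul]
  rw [sum_comm' (t' := range (N + 1)) (s' := fun i => range i)]
  · simp_rw [← mul_sum, sum_range_sub]
  · simp only [mem_range, mem_Ioc]
    omega

theorem AddSubgroup.card_le_card_mul_card_ker_of_map_le {G H : Type*} [AddGroup G] [AddGroup H]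
    [Finite G] [Finite H] (φ : G →+ H) {V : AddSubgroup G} {W : AddSubgroup H}
    (h : V.map φ ≤ W) : Nat.card V ≤ Nat.card W * Nat.card φ.ker := by
  let ψ := φ.comp V.subtype
  calc Nat.card V = Nat.card ψ.range * Nat.card ψ.ker := by
        rw [← ψ.ker.card_mul_index, AddSubgroup.index_ker, mul_comm]
    _ ≤ Nat.card W * Nat.card φ.ker := by
      gcongr
      · exact AddSubgroup.card_le_of_le fun _ ⟨x, hx⟩ => h ⟨x, x.2, hx⟩
      · exact Nat.card_le_card_of_injective (fun x : ψ.ker => (⟨x.1.1, x.2⟩ : φ.ker))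
          fun x y hxy => by ext; simpa using congrArg Subtype.val hxy

theorem Subgroup.card_range_eq_index {G X : Type*} [Group G] (H : Subgroup G) {g : G → X}
    (hg : ∀ a b, g a = g b ↔ a⁻¹ * b ∈ H) : Nat.card (Set.range g) = H.index :=
  Nat.card_congr ((Setoid.quotientKerEquivRange g).symm.trans
    (Quotient.congrRight fun a b => (hg a b).trans QuotientGroup.leftRel_apply.symm))

theorem Module.finrank_eq_of_natCard_eq_pow {F V : Type*} [Field F] [Finite F] [AddCommGroup V]
    [Module F V] [Module.Finite F V] {d : ℕ} (h : Nat.card V = Nat.card F ^ d) :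
    Module.finrank F V = d :=
  Nat.pow_right_injective Finite.one_lt_card (Module.natCard_eq_pow_finrank.symm.trans h)

theorem Function.fixedPoints_iterate_eq_gcd {α : Type*} {f : α → α} {n : ℕ} (hn : f^[n] = id)
    (a : ℕ) : fixedPoints f^[a] = fixedPoints f^[a.gcd n] := by
  ext x
  refine ⟨fun hx => IsPeriodicPt.gcd hx (congrFun hn x), fun hx => ?_⟩
  obtain ⟨c, hc⟩ := Nat.gcd_dvd_left a n
  rw [mem_fixedPoints, ← IsPeriodicPt, hc]
  exact IsPeriodicPt.mul_const hx c

section Linearized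

variable {K : Type*} [Field K]

/-- A `τ`-linearized polynomial of `τ`-degree at most `d`, as an additive map. -/
def linearizedMap (τ : K →+* K) (a : ℕ → K) (d : ℕ) : K →+ K :=
  ∑ i ∈ range (d + 1), (AddMonoidHom.mulLeft (a i)).comp (τ ^ i).toAddMonoidHom

@[simp]
theorem linearizedMap_apply (τ : K →+* K) (a : ℕ → K) (d : ℕ) (x : K) :
    linearizedMap τ a d x = ∑ i ∈ range (d + 1), a i * (τ ^ i) x := by
  simp [linearizedMap]

/-- Dividing by a nonzero root `v` and applying `τ - 1` lowers the `τ`-degree by one. -/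
theorem linearizedMap_sub_div_eq_zero (τ : K →+* K) (a : ℕ → K) (d : ℕ) {v x : K}
    (hv : linearizedMap τ a (d + 1) v = 0) (hx : linearizedMap τ a (d + 1) x = 0) (hv0 : v ≠ 0) :
    linearizedMap τ (fun j => ∑ i ∈ Ioc j (d + 1), a i * (τ ^ i) v) d (τ (x / v) - x / v) = 0 := by
  have hstep : ∀ j, (τ ^ j) (τ (x / v) - x / v) = (τ ^ (j + 1)) (x / v) - (τ ^ j) (x / v) := by
    intro j
    rw [map_sub, pow_succ, RingHom.coe_mul, comp_apply]
  have hx' : ∑ i ∈ range (d + 2), a i * (τ ^ i) v * (τ ^ i) (x / v) = 0 := by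
    rw [linearizedMap_apply] at hx
    rw [← hx]
    refine sum_congr rfl fun i _ => ?_
    rw [mul_assoc, ← map_mul, mul_div_cancel₀ x hv0]
  rw [linearizedMap_apply] at hv
  simp only [linearizedMap_apply, hstep]
  rw [← Finset.sum_range_mul_sub_eq_sum_Ioc (fun i => a i * (τ ^ i) v) (fun i => (τ ^ i) (x / v))]
  simp only [mul_sub, sum_sub_distrib, ← sum_mul, hx', hv, pow_zero, RingHom.coe_one, id]
  ring

theorem one_le_of_natCard_fixedPoints_le [Finite K] {τ : K →+* K} {m : ℕ}
    (hm : Nat.card (fixedPoints τ) ≤ m) : 1 ≤ m := by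
  have : Nonempty (fixedPoints τ) := ⟨⟨0, map_zero τ⟩⟩
  exact Nat.card_pos.trans_le hm

theorem card_ker_linearizedMap_le [Finite K] (τ : K →+* K) {m : ℕ}
    (hm : Nat.card (fixedPoints τ) ≤ m) (d : ℕ) (a : ℕ → K) (ha : a d ≠ 0) :
    Nat.card (linearizedMap τ a d).ker ≤ m ^ d := by
  have hm1 := one_le_of_natCard_fixedPoints_le hm
  induction d generalizing a with
  | zero =>
    rcases (linearizedMap τ a 0).ker.bot_or_exists_ne_zero with h | ⟨v, hv, hv0⟩
    · simp [h]
    · simp only [AddMonoidHom.mem_ker, linearizedMap_apply, zero_add, sum_range_one, pow_zero,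
        RingHom.coe_one, id] at hv
      exact absurd hv (mul_ne_zero ha hv0)
  | succ d ih =>
    rcases (linearizedMap τ a (d + 1)).ker.bot_or_exists_ne_zero with h | ⟨v, hv, hv0⟩
    · rw [h, AddSubgroup.card_bot]
      exact Nat.one_le_pow _ _ hm1
    let D : K →+ K := (τ.toAddMonoidHom - AddMonoidHom.id K).comp (AddMonoidHom.mulRight v⁻¹)
    have hD : ∀ x, D x = τ (x / v) - x / v := fun x => by simp [D, div_eq_mul_inv]
    have hb : ∑ i ∈ Ioc d (d + 1), a i * (τ ^ i) v ≠ 0 := by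
      rw [Nat.Ioc_succ_singleton, sum_singleton]
      exact mul_ne_zero ha ((map_ne_zero (τ ^ (d + 1))).mpr hv0)
    have hker : Nat.card D.ker ≤ m := by
      refine le_trans (Nat.card_le_card_of_injective
        (fun x : D.ker => (⟨x / v, ?_⟩ : fixedPoints τ)) fun x y hxy => ?_) hm
      · exact (sub_eq_zero.mp ((hD x).symm.trans x.2) :)
      · ext
        simpa [div_left_inj' hv0] using congrArg Subtype.val hxy
    calc Nat.card (linearizedMap τ a (d + 1)).ker
        ≤ Nat.card (linearizedMap τ (fun j => ∑ i ∈ Ioc j (d + 1), a i * (τ ^ i) v) d).ker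
          * Nat.card D.ker := by
          refine AddSubgroup.card_le_card_mul_card_ker_of_map_le D ?_
          rintro _ ⟨x, hx, rfl⟩
          rw [SetLike.mem_coe, AddMonoidHom.mem_ker] at hx
          rw [AddMonoidHom.mem_ker, hD]
          exact linearizedMap_sub_div_eq_zero τ a d hv hx hv0
      _ ≤ m ^ d * m := Nat.mul_le_mul (ih _ hb) hker
      _ = m ^ (d + 1) := (pow_succ m d).symm

theorem linearizedMap_coeff_eq_zero [Finite K] (τ : K →+* K) {m : ℕ}
    (hm : Nat.card (fixedPoints τ) ≤ m) {d : ℕ} {a : ℕ → K} (h : linearizedMap τ a d = 0)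
    (hd : m ^ d < Nat.card K) : ∀ i ≤ d, a i = 0 := by
  have hm1 := one_le_of_natCard_fixedPoints_le hm
  have htop : ∀ {d}, linearizedMap τ a d = 0 → m ^ d < Nat.card K → a d = 0 := by
    intro d h hd
    by_contra had
    have := card_ker_linearizedMap_le τ hm d a had
    rw [h, AddMonoidHom.ker_zero, AddSubgroup.card_top] at this
    omega
  induction d with
  | zero => intro i hi; rw [Nat.le_zero.mp hi]; exact htop h hd
  | succ d ih =>
    have had := htop h hd
    have h' : linearizedMap τ a d = 0 := by
      ext x
      simpa [sum_range_succ _ (d + 1), had] using DFunLike.congr_fun h x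
    intro i hi
    rcases Nat.lt_or_eq_of_le hi with hi | rfl
    · exact ih h' ((Nat.pow_le_pow_right hm1 d.le_succ).trans_lt hd) _ (Nat.lt_succ_iff.mp hi)
    · exact had

theorem card_fixedPoints_pow_le [Finite K] {Q : ℕ} (hQ : 1 < Q) :
    Nat.card (fixedPoints fun x : K => x ^ Q) ≤ Q := by
  classical
  have := Fintype.ofFinite K
  have hdeg : (X ^ Q - X : K[X]).natDegree = Q := by
    rw [natDegree_sub_eq_left_of_natDegree_lt] <;> simp [hQ]
  have hne : (X ^ Q - X : K[X]) ≠ 0 := by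
    intro h
    rw [h, natDegree_zero] at hdeg
    omega
  rw [Nat.card_eq_card_toFinset]
  refine (card_le_degree_of_subset_roots fun x hx => ?_).trans hdeg.le
  rw [Finset.mem_val, Set.mem_toFinset, mem_fixedPoints_iff] at hx
  simp [mem_roots hne, hx]

def fixedUnits (σ : K →+* K) : Subgroup Kˣ :=
  (Units.map (σ : K →* K)).eqLocus (MonoidHom.id Kˣ)

theorem mem_fixedUnits {σ : K →+* K} {u : Kˣ} :
    u ∈ fixedUnits σ ↔ σ u = u :=
  Units.ext_iff

theorem card_fixedUnits_add_one [Finite K] (σ : K →+* K) :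
    Nat.card (fixedUnits σ) + 1 = Nat.card (fixedPoints σ) := by
  have hset : fixedPoints σ = insert 0 (Units.val '' (fixedUnits σ : Set Kˣ)) := by
    ext x
    rcases eq_or_ne x 0 with rfl | hx
    · simp [IsFixedPt]
    · simp only [hx, mem_fixedPoints, IsFixedPt, Set.mem_insert_iff, false_or, Set.mem_image,
        SetLike.mem_coe]
      refine ⟨fun h => ⟨Units.mk0 x hx, mem_fixedUnits.mpr h, rfl⟩, ?_⟩
      rintro ⟨u, hu, rfl⟩
      exact mem_fixedUnits.mp hu
  rw [hset, Nat.card_coe_set_eq, Set.ncard_insert_of_notMem (by simp) (Set.toFinite _),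
    Set.ncard_image_of_injective _ Units.val_injective]
  rfl

theorem card_setOf_exists_ne_zero_eq_div [Finite K] {X : Type*} (ρ : K →+* K) (G : K → X)
    (hG : ∀ α β, α ≠ 0 → β ≠ 0 → (G α = G β ↔ ρ (α * β⁻¹) = α * β⁻¹)) :
    Nat.card {g | ∃ β, β ≠ 0 ∧ g = G β} =
      (Nat.card K - 1) / (Nat.card (fixedPoints ρ) - 1) := by
  have hrange : {g | ∃ β, β ≠ 0 ∧ g = G β} = Set.range fun u : Kˣ => G u := by
    ext g
    constructor
    · rintro ⟨β, hβ, rfl⟩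
      exact ⟨Units.mk0 β hβ, rfl⟩
    · rintro ⟨u, rfl⟩
      exact ⟨u, u.ne_zero, rfl⟩
  have hG' : ∀ a b : Kˣ, G a = G b ↔ a⁻¹ * b ∈ fixedUnits ρ := fun a b => by
    rw [eq_comm, hG b a b.ne_zero a.ne_zero, mem_fixedUnits, Units.val_mul,
      Units.val_inv_eq_inv_val, mul_comm]
  rw [hrange, Subgroup.card_range_eq_index _ hG', ← card_fixedUnits_add_one, Nat.add_sub_cancel]
  refine Nat.eq_div_of_mul_eq_left Nat.card_pos.ne' ?_
  rw [Subgroup.index_mul_card, Nat.card_units]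

theorem inv_pow_mul_comp_mul_eq_iff (f : K → K) (E : ℕ) {α β : K}
    (hα : α ≠ 0) (hβ : β ≠ 0) :
    ((fun x => (α ^ E)⁻¹ * f (α * x)) = fun x => (β ^ E)⁻¹ * f (β * x)) ↔
      ∀ y, f (α * β⁻¹ * y) = (α * β⁻¹) ^ E * f y := by
  constructor
  · intro h y
    have := congrFun h (β⁻¹ * y)
    rw [mul_inv_cancel_left₀ hβ, ← mul_assoc, inv_mul_eq_iff_eq_mul₀ (pow_ne_zero E hα)] at this
    rw [this, mul_pow, inv_pow, mul_assoc]
  · intro h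
    funext x
    rw [show α * x = α * β⁻¹ * (β * x) by field_simp, h, mul_pow, inv_pow]
    field_simp

end Linearized

section AlgHom

variable {R K : Type*} [Field R] [Field K] [Algebra R K]

theorem AlgHom.toLinearMap_pow_apply (τ : K →ₐ[R] K) (i : ℕ) (x : K) :
    (τ.toLinearMap ^ i) x = (τ ^ i) x := by
  rw [Module.End.coe_pow, AlgHom.coe_toLinearMap, AlgHom.coe_pow]

theorem AlgHom.toLinearMap_pow_eq_one {τ : K →ₐ[R] K} {N : ℕ} (hτ : τ ^ N = 1) :
    τ.toLinearMap ^ N = 1 := by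
  ext x
  rw [AlgHom.toLinearMap_pow_apply, hτ]
  rfl

theorem aeval_toLinearMap_apply (τ : K →ₐ[R] K) (P : R[X]) (x : K) :
    aeval τ.toLinearMap P x =
      linearizedMap τ (fun i => algebraMap R K (P.coeff i)) P.natDegree x := by
  rw [aeval_eq_sum_range, LinearMap.sum_apply, linearizedMap_apply]
  refine sum_congr rfl fun i _ => ?_
  rw [LinearMap.smul_apply, Module.End.coe_pow, Algebra.smul_def]
  rfl

theorem card_ker_aeval_le [Finite K] (τ : K →ₐ[R] K) {m : ℕ}
    (hm : Nat.card (fixedPoints τ) ≤ m) {P : R[X]} (hP : P ≠ 0) :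
    Nat.card (LinearMap.ker (aeval τ.toLinearMap P)) ≤ m ^ P.natDegree := by
  have hker : (LinearMap.ker (aeval τ.toLinearMap P)).toAddSubgroup =
      (linearizedMap τ (fun i => algebraMap R K (P.coeff i)) P.natDegree).ker := by
    ext x
    simp only [Submodule.mem_toAddSubgroup, LinearMap.mem_ker, AddMonoidHom.mem_ker,
      aeval_toLinearMap_apply]
  have hm' : Nat.card (fixedPoints (τ : K →+* K)) ≤ m := hm
  have := card_ker_linearizedMap_le (τ : K →+* K) hm' P.natDegree
    (fun i => algebraMap R K (P.coeff i))
    ((map_ne_zero (algebraMap R K)).mpr (leadingCoeff_ne_zero.mpr hP))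
  rwa [← hker] at this

/-- If `F * H = X ^ N - 1` and `τ ^ N = 1`, the image of `H(τ)` lies in the kernel of `F(τ)`;
counting then forces both kernel bounds to be sharp. -/
theorem card_ker_aeval_eq_of_mul_eq [Finite K] (τ : K →ₐ[R] K) {m N : ℕ}
    (hm : Nat.card (fixedPoints τ) ≤ m) (hτ : τ ^ N = 1) {F H : R[X]}
    (hFH : F * H = X ^ N - 1) (hK : Nat.card K = m ^ N) :
    Nat.card (LinearMap.ker (aeval τ.toLinearMap F)) = m ^ F.natDegree := by
  have hN : 0 < N := Nat.pos_of_ne_zero fun h =>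
    (Finite.one_lt_card (α := K)).ne' (by rw [hK, h, pow_zero])
  have hFH0 : F * H ≠ 0 := hFH ▸ by simpa using X_pow_sub_C_ne_zero hN (1 : R)
  have hdeg : F.natDegree + H.natDegree = N := by
    rw [← natDegree_mul (left_ne_zero_of_mul hFH0) (right_ne_zero_of_mul hFH0), hFH, ← C_1,
      natDegree_X_pow_sub_C]
  have hcomp : ∀ x, aeval τ.toLinearMap H x ∈ LinearMap.ker (aeval τ.toLinearMap F) := fun x => by
    rw [LinearMap.mem_ker, ← Module.End.mul_apply, ← map_mul, hFH, map_sub, map_pow, aeval_X,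
      AlgHom.toLinearMap_pow_eq_one hτ, map_one, sub_self, LinearMap.zero_apply]
  have hcount :
      Nat.card K ≤ Nat.card (LinearMap.ker (aeval τ.toLinearMap F)) * m ^ H.natDegree := by
    rw [← AddSubgroup.card_top (G := K)]
    refine (AddSubgroup.card_le_card_mul_card_ker_of_map_le (aeval τ.toLinearMap H).toAddMonoidHom
      (W := (LinearMap.ker (aeval τ.toLinearMap F)).toAddSubgroup) ?_).trans
      (Nat.mul_le_mul_left _ ?_)
    · rintro _ ⟨x, -, rfl⟩
      exact hcomp x
    · rw [← LinearMap.ker_toAddSubgroup]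
      exact card_ker_aeval_le τ hm (right_ne_zero_of_mul hFH0)
  refine le_antisymm (card_ker_aeval_le τ hm (left_ne_zero_of_mul hFH0)) ?_
  rw [hK, ← hdeg, pow_add] at hcount
  exact Nat.le_of_mul_le_mul_right hcount
    (pow_pos (one_le_of_natCard_fixedPoints_le (τ := (τ : K →+* K)) hm) _)

/-- The difference of the two sides is the linearized polynomial with coefficients
`F.coeff i * (τ ^ i γ - τ ^ d γ)`; it vanishes on `K`, so all its coefficients vanish, and those at
`0` and `1` give `γ = τ ^ d γ = τ γ`. -/
theorem aeval_apply_mul_eq_iff [Finite K] (τ : K →ₐ[R] K) {m : ℕ}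
    (hm : Nat.card (fixedPoints τ) ≤ m) {F : R[X]} (h0 : F.coeff 0 ≠ 0) (h1 : F.coeff 1 ≠ 0)
    (hd : m ^ F.natDegree < Nat.card K) (γ : K) :
    (∀ y, aeval τ.toLinearMap F (γ * y) = (τ ^ F.natDegree) γ * aeval τ.toLinearMap F y) ↔
      τ γ = γ := by
  set d := F.natDegree
  set c : ℕ → K := fun i => algebraMap R K (F.coeff i)
  have hc : ∀ i, F.coeff i ≠ 0 → c i ≠ 0 := fun i => (_root_.map_ne_zero _).mpr
  simp only [aeval_toLinearMap_apply, linearizedMap_apply, map_mul, mul_sum]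
  constructor
  · intro h
    have hzero : linearizedMap τ (fun i => c i * ((τ ^ i : K →+* K) γ - (τ ^ d) γ)) d = 0 := by
      ext y
      rw [linearizedMap_apply, AddMonoidHom.zero_apply, ← sub_eq_zero.mpr (h y), ← sum_sub_distrib]
      refine sum_congr rfl fun i _ => ?_
      simp only [AlgHom.coe_pow, RingHom.coe_pow, AlgHom.coe_toRingHom]
      ring
    have hm' : Nat.card (fixedPoints (τ : K →+* K)) ≤ m := hm
    have hcoeff := linearizedMap_coeff_eq_zero (τ : K →+* K) hm' hzero hd
    have e0 := hcoeff 0 (Nat.zero_le d)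
    have e1 := hcoeff 1 (le_natDegree_of_ne_zero h1)
    simp only [mul_eq_zero, hc 0 h0, hc 1 h1, false_or, sub_eq_zero, pow_zero, pow_one,
      RingHom.coe_one, id] at e0 e1
    exact e1.trans e0.symm
  · intro hγ y
    have hpow : ∀ i, ((τ : K →+* K) ^ i) γ = γ := fun i => by
      rw [RingHom.coe_pow]
      exact iterate_fixed hγ i
    have hpow' : (τ ^ d) γ = γ := by
      rw [AlgHom.coe_pow]
      exact iterate_fixed hγ d
    simp only [hpow, hpow']
    exact sum_congr rfl fun i _ => by ring

theorem kdim_and_card_setOf_mul_comp_mul {Fq K : Type} [Field Fq] [Fintype Fq] [Field K]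
    [Finite K] [Algebra Fq K] (g : K →ₗ[Fq] K) {β c : K} (hβ : β ≠ 0) (hc : c ≠ 0) {D : ℕ}
    (hg : Nat.card (LinearMap.ker g) = Fintype.card Fq ^ D) :
    kdim Fq (fun x => c * g (β * x)) = D ∧
      Nat.card {x | c * g (β * x) = 0} = Fintype.card Fq ^ D := by
  have hset : {x | c * g (β * x) = 0} = (LinearMap.ker (g ∘ₗ LinearMap.mulLeft Fq β) : Set K) := by
    ext x
    simp [hc]
  have hcard : Nat.card (LinearMap.ker (g ∘ₗ LinearMap.mulLeft Fq β)) = Fintype.card Fq ^ D :=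
    (Nat.card_congr (Equiv.subtypeEquiv (Equiv.mulLeft₀ β hβ) fun x => by simp)).trans hg
  rw [kdim, hset, Submodule.span_eq]
  exact ⟨Module.finrank_eq_of_natCard_eq_pow (hcard.trans (by rw [Nat.card_eq_fintype_card])),
    hcard⟩

end AlgHom

def partialGeomSum (c i : ℕ) : ℕ := ∑ j ∈ range (i + 1), c ^ j

section PartialGeomSum

variable (c : ℕ)

@[simp]
theorem partialGeomSum_zero : partialGeomSum c 0 = 1 := by
  simp [partialGeomSum]

theorem partialGeomSum_succ (i : ℕ) : partialGeomSum c (i + 1) = c * partialGeomSum c i + 1 := by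
  rw [partialGeomSum, sum_range_succ', partialGeomSum, mul_sum]
  simp [pow_succ']

theorem partialGeomSum_succ' (i : ℕ) :
    partialGeomSum c (i + 1) = partialGeomSum c i + c ^ (i + 1) :=
  sum_range_succ _ _

variable {c}

theorem partialGeomSum_strictMono (hc : 0 < c) : StrictMono (partialGeomSum c) :=
  strictMono_nat_of_lt_succ fun i => by
    rw [partialGeomSum_succ']
    exact Nat.lt_add_of_pos_right (pow_pos hc _)

theorem one_le_partialGeomSum (hc : 0 < c) (i : ℕ) : 1 ≤ partialGeomSum c i :=
  partialGeomSum_zero c ▸ (partialGeomSum_strictMono hc).monotone (Nat.zero_le i)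

end PartialGeomSum

/-- With `τ = σ ^ t`, the paper's `f(x) = x + ∑_{i<k} x ^ (σ ^ (t p_i))` is `F(τ)` for this
`F = 1 + ∑_{i<k} X ^ p_i`, where `p_i = partialGeomSum q' i`. -/
noncomputable def subspacePoly (R : Type*) [CommRing R] (c k : ℕ) : R[X] :=
  1 + ∑ i ∈ range k, X ^ partialGeomSum c i

section SubspacePoly

variable {R : Type*} [CommRing R] {c : ℕ}

theorem coeff_subspacePoly (k j : ℕ) : (subspacePoly R c k).coeff j =
    (if j = 0 then 1 else 0) + ∑ i ∈ range k, if j = partialGeomSum c i then 1 else 0 := by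
  simp [subspacePoly, coeff_one, coeff_X_pow]

theorem coeff_zero_subspacePoly (hc : 0 < c) (k : ℕ) : (subspacePoly R c k).coeff 0 = 1 := by
  rw [coeff_subspacePoly, if_pos rfl, sum_eq_zero fun i _ => if_neg ?_, add_zero]
  exact (Nat.lt_of_lt_of_le Nat.zero_lt_one (one_le_partialGeomSum hc i)).ne

theorem coeff_one_subspacePoly (hc : 0 < c) (k : ℕ) : (subspacePoly R c (k + 1)).coeff 1 = 1 := by
  have h : ∀ i, 1 = partialGeomSum c i ↔ i = 0 := fun i => by
    rw [← partialGeomSum_zero c, (partialGeomSum_strictMono hc).injective.eq_iff, eq_comm]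
  simp [coeff_subspacePoly, h]

theorem natDegree_subspacePoly [Nontrivial R] (hc : 0 < c) (k : ℕ) :
    (subspacePoly R c (k + 1)).natDegree = partialGeomSum c k := by
  refine natDegree_eq_of_le_of_coeff_ne_zero ?_ ?_
  · refine (natDegree_add_le _ _).trans (max_le (by simp) (natDegree_sum_le_of_forall_le _ _ ?_))
    intro i hi
    exact (natDegree_X_pow_le _).trans
      ((partialGeomSum_strictMono hc).monotone (Nat.lt_succ_iff.mp (mem_range.mp hi)))
  · have h : ∀ i, partialGeomSum c k = partialGeomSum c i ↔ k = i := fun i =>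
      (partialGeomSum_strictMono hc).injective.eq_iff
    simp [coeff_subspacePoly, h, Nat.one_le_iff_ne_zero.mp (one_le_partialGeomSum hc k)]

/-- In characteristic `p` the Frobenius identity `F ^ c = F(X ^ c)` for `c = p ^ r`, together with
`X · X ^ (c p_i) = X ^ p_{i+1}`, makes `X · F ^ c - F` telescope to `X ^ p_k - 1`. -/
theorem subspacePoly_mul_eq (p r k : ℕ) [ExpChar R p] :
    subspacePoly R (p ^ r) k * (X * subspacePoly R (p ^ r) k ^ (p ^ r - 1) - 1) =
      X ^ partialGeomSum (p ^ r) k - 1 := by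
  set c := p ^ r
  have hc : c ≠ 0 := (pow_pos (expChar_pos R p) r).ne'
  have hpow : subspacePoly R c k ^ c = 1 + ∑ i ∈ range k, X ^ (c * partialGeomSum c i) := by
    rw [subspacePoly, ← iterateFrobenius_def (R := R[X]) p r, map_add, map_one, map_sum]
    simp only [map_pow, iterateFrobenius_def, ← pow_mul]
    rfl
  have htel : X * subspacePoly R c k ^ c = subspacePoly R c k - 1 + X ^ partialGeomSum c k := by
    rw [hpow, subspacePoly, add_sub_cancel_left, ← sum_range_succ, sum_range_succ',
      mul_add, mul_one, mul_sum, partialGeomSum_zero, pow_one, add_comm]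
    simp only [partialGeomSum_succ, pow_succ']
  rw [mul_sub, mul_one, mul_left_comm, ← pow_succ', Nat.sub_one_add_one hc, htel]
  ring

end SubspacePoly

namespace FiniteField

variable (Fq K : Type*) [Field Fq] [Fintype Fq] [Field K] [Algebra Fq K]

theorem coe_frobeniusAlgHom_pow (a : ℕ) :
    ⇑(frobeniusAlgHom Fq K ^ a) = fun x => x ^ Fintype.card Fq ^ a := by
  rw [AlgHom.coe_pow, coe_frobeniusAlgHom, pow_iterate]

theorem aeval_subspacePoly_apply (s t c k : ℕ) (x : K) :
    aeval (frobeniusAlgHom Fq K ^ (s * t)).toLinearMap (subspacePoly Fq c k) x =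
      x + ∑ i ∈ range k, x ^ (Fintype.card Fq ^ s) ^ (t * partialGeomSum c i) := by
  simp only [subspacePoly, map_add, map_one, map_sum, map_pow, aeval_X, LinearMap.add_apply,
    Module.End.one_apply, LinearMap.sum_apply, AlgHom.toLinearMap_pow_apply, ← pow_mul,
    coe_frobeniusAlgHom_pow, mul_assoc]

variable [Finite K]

theorem frobeniusAlgHom_pow_finrank : frobeniusAlgHom Fq K ^ Module.finrank Fq K = 1 := by
  rw [← orderOf_frobeniusAlgHom, pow_orderOf_eq_one]

theorem natCard_eq_pow_finrank : Nat.card K = Fintype.card Fq ^ Module.finrank Fq K := by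
  rw [Module.natCard_eq_pow_finrank (K := Fq), Nat.card_eq_fintype_card]

theorem fixedPoints_frobeniusAlgHom_pow_eq_gcd (a : ℕ) :
    fixedPoints (frobeniusAlgHom Fq K ^ a) =
      fixedPoints (frobeniusAlgHom Fq K ^ a.gcd (Module.finrank Fq K)) := by
  have h := congrArg DFunLike.coe (frobeniusAlgHom_pow_finrank Fq K)
  rw [AlgHom.coe_pow] at h
  rw [AlgHom.coe_pow, AlgHom.coe_pow, fixedPoints_iterate_eq_gcd h]

/-- The kernel count applied to `(X - 1) * (1 + X + ⋯ + X ^ (N - 1)) = X ^ N - 1`. -/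
theorem card_fixedPoints_frobeniusAlgHom_pow {t : ℕ} (ht : t ∣ Module.finrank Fq K) :
    Nat.card (fixedPoints (frobeniusAlgHom Fq K ^ t)) = Fintype.card Fq ^ t := by
  obtain ⟨N, hN⟩ := ht
  have ht0 : t ≠ 0 := by
    rintro rfl
    exact Module.finrank_pos.ne' (hN.trans (zero_mul N))
  have hm : Nat.card (fixedPoints (frobeniusAlgHom Fq K ^ t)) ≤ Fintype.card Fq ^ t := by
    rw [coe_frobeniusAlgHom_pow]
    exact card_fixedPoints_pow_le (Nat.one_lt_pow ht0 Fintype.one_lt_card)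
  have hτ : (frobeniusAlgHom Fq K ^ t) ^ N = 1 := by
    rw [← pow_mul, ← hN, frobeniusAlgHom_pow_finrank]
  have hK : Nat.card K = (Fintype.card Fq ^ t) ^ N := by
    rw [← pow_mul, ← hN, natCard_eq_pow_finrank Fq K]
  have := card_ker_aeval_eq_of_mul_eq _ hm hτ (mul_geom_sum X N) hK
  rw [← C_1, natDegree_X_sub_C, pow_one] at this
  rw [← this]
  refine Nat.card_congr (Equiv.subtypeEquivRight fun x => ?_)
  simp [sub_eq_zero, IsFixedPt]

variable {Fq K} {p r s t k : ℕ} [ExpChar Fq p]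

theorem fixedPoints_frobeniusAlgHom_pow_mul {m : ℕ} (hn : Module.finrank Fq K = t * m)
    (hs : s.Coprime (Module.finrank Fq K)) :
    fixedPoints (frobeniusAlgHom Fq K ^ (s * t)) = fixedPoints (frobeniusAlgHom Fq K ^ t) := by
  rw [fixedPoints_frobeniusAlgHom_pow_eq_gcd, hn, mul_comm t, Nat.gcd_mul_right,
    Nat.Coprime.coprime_dvd_right (Dvd.intro_left t rfl) (hn ▸ hs), one_mul]

theorem card_fixedPoints_frobeniusAlgHom_pow_mul {m : ℕ} (hn : Module.finrank Fq K = t * m)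
    (hs : s.Coprime (Module.finrank Fq K)) :
    Nat.card (fixedPoints (frobeniusAlgHom Fq K ^ (s * t))) = Fintype.card Fq ^ t := by
  rw [fixedPoints_frobeniusAlgHom_pow_mul hn hs]
  exact card_fixedPoints_frobeniusAlgHom_pow Fq K (Dvd.intro m hn.symm)

theorem card_ker_aeval_subspacePoly (hn : Module.finrank Fq K = t * partialGeomSum (p ^ r) (k + 1))
    (hs : s.Coprime (Module.finrank Fq K)) :
    Nat.card (LinearMap.ker (aeval (frobeniusAlgHom Fq K ^ (s * t)).toLinearMap
      (subspacePoly Fq (p ^ r) (k + 1)))) = Fintype.card Fq ^ (t * partialGeomSum (p ^ r) k) := by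
  have hτ : (frobeniusAlgHom Fq K ^ (s * t)) ^ partialGeomSum (p ^ r) (k + 1) = 1 := by
    rw [← pow_mul, mul_assoc, ← hn, mul_comm, pow_mul, frobeniusAlgHom_pow_finrank, one_pow]
  have hK : Nat.card K = (Fintype.card Fq ^ t) ^ partialGeomSum (p ^ r) (k + 1) := by
    rw [natCard_eq_pow_finrank Fq K, hn, pow_mul]
  rw [card_ker_aeval_eq_of_mul_eq _ (card_fixedPoints_frobeniusAlgHom_pow_mul hn hs).le hτ
    (subspacePoly_mul_eq p r (k + 1)) hK, natDegree_subspacePoly (pow_pos (expChar_pos Fq p) r),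
    ← pow_mul]

theorem aeval_subspacePoly_mul_eq_iff
    (hn : Module.finrank Fq K = t * partialGeomSum (p ^ r) (k + 1))
    (hs : s.Coprime (Module.finrank Fq K)) (γ : K) :
    (∀ y, aeval (frobeniusAlgHom Fq K ^ (s * t)).toLinearMap (subspacePoly Fq (p ^ r) (k + 1))
        (γ * y) = γ ^ (Fintype.card Fq ^ s) ^ (t * partialGeomSum (p ^ r) k) *
          aeval (frobeniusAlgHom Fq K ^ (s * t)).toLinearMap (subspacePoly Fq (p ^ r) (k + 1)) y) ↔
      γ ^ Fintype.card Fq ^ t = γ := by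
  have hc : 0 < p ^ r := pow_pos (expChar_pos Fq p) r
  have ht : t ≠ 0 := by
    rintro rfl
    exact Module.finrank_pos.ne' (hn.trans (zero_mul _))
  have hτd : ((frobeniusAlgHom Fq K ^ (s * t)) ^ (subspacePoly Fq (p ^ r) (k + 1)).natDegree) γ =
      γ ^ (Fintype.card Fq ^ s) ^ (t * partialGeomSum (p ^ r) k) := by
    rw [natDegree_subspacePoly hc, ← pow_mul, coe_frobeniusAlgHom_pow, ← pow_mul, mul_assoc]
  have hd : (Fintype.card Fq ^ t) ^ (subspacePoly Fq (p ^ r) (k + 1)).natDegree < Nat.card K := by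
    rw [natCard_eq_pow_finrank Fq K, hn, pow_mul, natDegree_subspacePoly hc]
    exact Nat.pow_lt_pow_right (Nat.one_lt_pow ht Fintype.one_lt_card)
      (partialGeomSum_strictMono hc k.lt_succ_self)
  rw [← hτd, aeval_apply_mul_eq_iff _ (card_fixedPoints_frobeniusAlgHom_pow_mul hn hs).le
    (by rw [coeff_zero_subspacePoly hc]; exact one_ne_zero)
    (by rw [coeff_one_subspacePoly hc]; exact one_ne_zero) hd,
    ← mem_fixedPoints_iff, fixedPoints_frobeniusAlgHom_pow_mul hn hs, mem_fixedPoints_iff,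
    coe_frobeniusAlgHom_pow]

end FiniteField

theorem stmt_8_general (p q qp r s t k n : ℕ) (Fq K : Type) [Field Fq] [Fintype Fq] [Field K]
    [Fintype K] [Algebra Fq K]
    (hp : p.Prime) (hpe : ∃ e : ℕ, 0 < e ∧ q = p ^ e) (hqp : qp = p ^ r)
    (hk : 0 < k)
    (hn : n = t * ∑ j ∈ Finset.range (k + 1), qp ^ j)
    (hsn : Nat.gcd s n = 1)
    (hcard : Fintype.card Fq = q) (hfin : Module.finrank Fq K = n)
    (D : ℕ) (hD : D = t * ∑ j ∈ Finset.range k, qp ^ j)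
    (f : K → K)
    (hf : f = fun x : K =>
      x + ∑ i ∈ Finset.range k, x ^ ((q ^ s) ^ (t * ∑ j ∈ Finset.range (i + 1), qp ^ j))) :
    (∀ β : K, β ≠ 0 →
      kdim Fq (fun x : K => (β ^ ((q ^ s) ^ D))⁻¹ * f (β * x)) = D ∧
      Nat.card ↥{x : K | (β ^ ((q ^ s) ^ D))⁻¹ * f (β * x) = 0} = q ^ D) ∧
    (∀ α β : K, α ≠ 0 → β ≠ 0 →
      ((fun x : K => (α ^ ((q ^ s) ^ D))⁻¹ * f (α * x))
          = (fun x : K => (β ^ ((q ^ s) ^ D))⁻¹ * f (β * x))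
        ↔ (α * β⁻¹) ^ q ^ t = α * β⁻¹)) ∧
    Nat.card ↥{g : K → K | ∃ β : K, β ≠ 0 ∧
        g = fun x : K => (β ^ ((q ^ s) ^ D))⁻¹ * f (β * x)}
      = (q ^ n - 1) / (q ^ t - 1) := by
  obtain ⟨e, -, hqe⟩ := hpe
  have : Fact p.Prime := ⟨hp⟩
  have : CharP Fq p := charP_of_card_eq_prime_pow (hcard.trans hqe)
  obtain ⟨k, rfl⟩ := Nat.exists_eq_add_one_of_ne_zero hk.ne'
  subst hqp hcard
  replace hD : D = t * partialGeomSum (p ^ r) k := hD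
  replace hn : Module.finrank Fq K = t * partialGeomSum (p ^ r) (k + 1) := hfin.trans hn
  subst hD hfin
  have hs : s.Coprime (Module.finrank Fq K) := hsn
  have hf' : f = aeval (FiniteField.frobeniusAlgHom Fq K ^ (s * t)).toLinearMap
      (subspacePoly Fq (p ^ r) (k + 1)) :=
    hf.trans (funext fun x => (FiniteField.aeval_subspacePoly_apply Fq K s t _ _ x).symm)
  have hB : ∀ α β : K, α ≠ 0 → β ≠ 0 → _ := fun α β hα hβ =>
    (inv_pow_mul_comp_mul_eq_iff f _ hα hβ).trans
      (hf' ▸ FiniteField.aeval_subspacePoly_mul_eq_iff hn hs (α * β⁻¹))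
  refine ⟨fun β hβ => hf' ▸ ?_, hB, ?_⟩
  · exact kdim_and_card_setOf_mul_comp_mul _ hβ (inv_ne_zero (pow_ne_zero _ hβ))
      (FiniteField.card_ker_aeval_subspacePoly hn hs)
  · have hρ : ∀ x, ((FiniteField.frobeniusAlgHom Fq K ^ t : K →ₐ[Fq] K) : K →+* K) x =
        x ^ Fintype.card Fq ^ t :=
      fun x => by rw [AlgHom.coe_toRingHom, FiniteField.coe_frobeniusAlgHom_pow]
    rw [card_setOf_exists_ne_zero_eq_div _ _ fun α β hα hβ => (hB α β hα hβ).trans (by rw [hρ]),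
      FiniteField.natCard_eq_pow_finrank Fq K]
    congr 2
    exact FiniteField.card_fixedPoints_frobeniusAlgHom_pow Fq K (Dvd.intro _ hn.symm)

/-- with `q' = p^r`, `p_i = 1 + q' + ⋯ + q'^i`, `n = t·p_k`, `gcd(s,n)=1`,
`σ : x ↦ x^{q^s}` and `f(x) = x + Σ_{i=0}^{k−1} x^{σ^{t·p_i}}`, the set
`Q = { β^{−σ^{t·p_{k−1}}} f(βx) : β ≠ 0 }` consists of σ-subspace polynomials of σ-degree
`t·p_{k−1}` (each has exactly `q^{t·p_{k−1}}` roots in `F_{q^n}`); two parameters `α, β`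
give the same polynomial iff `α/β ∈ F_{q^t}`, and `|Q| = (q^n−1)/(q^t−1)`. -/
theorem stmt_8 (p q qp r s t k n : ℕ) (Fq K : Type) [Field Fq] [Fintype Fq] [Field K]
    [Fintype K] [Algebra Fq K]
    (hp : p.Prime) (hpe : ∃ e : ℕ, 0 < e ∧ q = p ^ e) (hqp : qp = p ^ r)
    (ht : 0 < t) (hk : 0 < k)
    (hn : n = t * ∑ j ∈ Finset.range (k + 1), qp ^ j)
    (hs : 0 < s) (hsn : Nat.gcd s n = 1)
    (hcard : Fintype.card Fq = q) (hfin : Module.finrank Fq K = n)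
    (D : ℕ) (hD : D = t * ∑ j ∈ Finset.range k, qp ^ j)
    (f : K → K)
    (hf : f = fun x : K =>
      x + ∑ i ∈ Finset.range k, x ^ ((q ^ s) ^ (t * ∑ j ∈ Finset.range (i + 1), qp ^ j))) :
    (∀ β : K, β ≠ 0 →
      kdim Fq (fun x : K => (β ^ ((q ^ s) ^ D))⁻¹ * f (β * x)) = D ∧
      Nat.card ↥{x : K | (β ^ ((q ^ s) ^ D))⁻¹ * f (β * x) = 0} = q ^ D) ∧
    (∀ α β : K, α ≠ 0 → β ≠ 0 →
      ((fun x : K => (α ^ ((q ^ s) ^ D))⁻¹ * f (α * x))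
          = (fun x : K => (β ^ ((q ^ s) ^ D))⁻¹ * f (β * x))
        ↔ (α * β⁻¹) ^ q ^ t = α * β⁻¹)) ∧
    Nat.card ↥{g : K → K | ∃ β : K, β ≠ 0 ∧
        g = fun x : K => (β ^ ((q ^ s) ^ D))⁻¹ * f (β * x)}
      = (q ^ n - 1) / (q ^ t - 1) :=
  stmt_8_general p q qp r s t k n Fq K hp hpe hqp hk hn hsn hcard hfin D hD f hf
end

section
/- Let q be a prime power, σ : x ↦ x^{q^s} an automorphism of F_{q^m} with gcd(s,m)=1, and let h, n, m be positive integers with h ≤ n ≤ m. Let 𝒞 be a set of σ-linearized polynomials over F_{q^m} that contains (𝒢_{m,h,σ})^{σ^j} = { Σ_{i=j}^{j+h−1} a_i x^{σ^i} : a_i ∈ F_{q^m} } for some integer j with 0 ≤ j ≤ m−h. Let α_1,…,α_n be F_q-linearly independent elements of F_{q^m}, let C = {(g(α_1),…,g(α_n)) : g ∈ 𝒞} ⊆ F_{q^m}^n, and let d be the minimum rank distance of C. Let τ be an integer with ⌊(d−1)/2⌋ + 1 ≤ τ ≤ d−1, τ ≤ n−h, and j < τ. Then there exists a word w ∈ F_{q^m}^n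 ∖ C such that |C ∩ B_τ(w)| ≥ [n choose n−τ]_q / q^{m(n−τ−h)}, where [n choose n−τ]_q = ∏_{i=0}^{n−τ−1} (q^{n−i}−1)/(q^{n−τ−i}−1) is the number of (n−τ)-dimensional F_q-subspaces of an n-dimensional F_q-vector space. -/
/-- Ball of radius `t` around `w` in the rank metric. -/
def ball (Fq : Type) [Field Fq] {K : Type} [Field K] [Algebra Fq K] {n : ℕ}
    (w : Fin n → K) (t : ℕ) : Set (Fin n → K) :=
  {c : Fin n → K | rkw Fq (w - c) ≤ t}

/-!
For an `(n - τ)`-dimensional subspace `U ⊆ F_q^n`, the space `V_U = {∑ uᵢ αᵢ : u ∈ U}` is the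
kernel of a monic σ-linearized polynomial of σ-degree `n - τ`; composing with `σ^j` moves its
support to `σ^j, …, σ^(j + n - τ)`. Its lowest `h` coefficients give a codeword `c_U` of the twisted
Gabidulin code, and by pigeonhole a fraction `q^(-m(n - τ - h))` of all `U` share the remaining
non-leading coefficients. Taking `w` to be the evaluation of this common upper part, `w - c_U` is
the evaluation of the subspace polynomial of `V_U` at `α`: it has rank `n - dim V_U = τ`, and its
kernel recovers `U`. As `τ < d`, the word `w` cannot lie in the code.
-/

open Module Submodule

namespace LinearizedPolynomial

variable {Fq K : Type*} [Field Fq] [Field K] [Algebra Fq K] (σ : K →ₐ[Fq] K)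

def linPoly {N : ℕ} (b : Fin N → K) : K →ₗ[Fq] K :=
  ∑ i, b i • (σ ^ (i : ℕ)).toLinearMap

variable {σ}

lemma linPoly_apply {N : ℕ} (b : Fin N → K) (x : K) :
    linPoly σ b x = ∑ i, b i * (σ ^ (i : ℕ)) x := by
  simp [linPoly]

lemma linPoly_sub {N : ℕ} (b b' : Fin N → K) :
    linPoly σ (b - b') = linPoly σ b - linPoly σ b' := by
  ext x
  simp only [LinearMap.sub_apply, linPoly_apply, Pi.sub_apply, sub_mul, Finset.sum_sub_distrib]

lemma linPoly_cons_zero {N : ℕ} (b : Fin N → K) (x : K) :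
    linPoly σ (Fin.cons 0 (σ ∘ b)) x = σ (linPoly σ b x) := by
  simp only [linPoly_apply, Fin.sum_univ_succ, map_sum, map_mul]
  simp [pow_succ']

lemma linPoly_snoc_zero {N : ℕ} (b : Fin N → K) (c : K) (x : K) :
    linPoly σ (Fin.snoc (c • b) 0) x = c * linPoly σ b x := by
  simp [linPoly_apply, Fin.sum_univ_castSucc, Finset.mul_sum, mul_assoc]

/-- The fixed points of `σ` are the scalars, so `σ (P x) = c * P x` forces `P x ∈ Fq ∙ P v`. -/
lemma ker_comp_sub_smul (hσ : ∀ z, σ z = z → z ∈ Set.range (algebraMap Fq K))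
    (P : K →ₗ[Fq] K) {v : K} (hv : P v ≠ 0) :
    LinearMap.ker (σ.toLinearMap ∘ₗ P - (σ (P v) / P v) • P)
      = Fq ∙ v ⊔ LinearMap.ker P := by
  set u := P v
  set c := σ u / u
  have hc : c ≠ 0 := div_ne_zero ((map_ne_zero σ).mpr hv) hv
  apply le_antisymm
  · intro x hx
    replace hx : σ (P x) = c * P x := by simpa [sub_eq_zero] using hx
    have hfix : σ (P x / u) = P x / u := by
      rw [map_div₀, hx, show σ u = c * u by simp [c, hv], mul_div_mul_left _ _ hc]
    obtain ⟨a, ha⟩ := hσ _ hfix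
    refine mem_sup.mpr ⟨a • v, mem_span_singleton.mpr ⟨a, rfl⟩, x - a • v, ?_, by abel⟩
    rw [LinearMap.mem_ker, map_sub, map_smul, Algebra.smul_def, ha, div_mul_cancel₀ _ hv,
      sub_self]
  · refine sup_le ((span_singleton_le_iff_mem _ _).mpr ?_) fun x hx => ?_
    · change σ u - σ u / u * u = 0
      rw [div_mul_cancel₀ _ hv, sub_self]
    · simp_all

theorem exists_linPoly_ker_eq_span (hσ : ∀ z, σ z = z → z ∈ Set.range (algebraMap Fq K)) :
    ∀ {k : ℕ} (β : Fin k → K), LinearIndependent Fq β →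
      ∃ b : Fin (k + 1) → K, b (Fin.last k) = 1 ∧
        LinearMap.ker (linPoly σ b) = span Fq (Set.range β)
  | 0, β, _ => ⟨1, rfl, by
      rw [Set.range_eq_empty β, span_empty, LinearMap.ker_eq_bot']
      intro x hx
      simpa [linPoly_apply] using hx⟩
  | k + 1, β, hβ => by
    rw [← Fin.cons_self_tail β, linearIndependent_finCons] at hβ
    obtain ⟨b, hb, hker⟩ := exists_linPoly_ker_eq_span hσ (Fin.tail β) hβ.1
    have hv : linPoly σ b (β 0) ≠ 0 := fun h0 => hβ.2 (hker ▸ h0)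
    set c := σ (linPoly σ b (β 0)) / linPoly σ b (β 0)
    refine ⟨Fin.cons 0 (σ ∘ b) - Fin.snoc (c • b) 0, by simp [hb], ?_⟩
    have hQ : linPoly σ (Fin.cons 0 (σ ∘ b) - Fin.snoc (c • b) 0)
        = σ.toLinearMap ∘ₗ linPoly σ b - c • linPoly σ b := by
      ext x
      simp [linPoly_sub, linPoly_cons_zero, linPoly_snoc_zero]
    rw [hQ, ker_comp_sub_smul hσ _ hv, hker, ← span_insert, ← Fin.range_cons,
      Fin.cons_self_tail]

theorem exists_linPoly_comp_pow_ker_eq (hσ : ∀ z, σ z = z → z ∈ Set.range (algebraMap Fq K))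
    (j : ℕ) {k : ℕ} (V : Submodule Fq K) [Module.Finite Fq V] (hV : finrank Fq V = k) :
    ∃ b : Fin (k + 1) → K, b (Fin.last k) = 1 ∧
      LinearMap.ker (linPoly σ b ∘ₗ (σ ^ j).toLinearMap) = V := by
  set τ : K →ₗ[Fq] K := (σ ^ j).toLinearMap
  have hτ : Function.Injective τ := (σ ^ j).toRingHom.injective
  set β : Fin k → K := τ ∘ V.subtype ∘ finBasisOfFinrankEq Fq V hV
  have hβ : LinearIndependent Fq β :=
    ((finBasisOfFinrankEq Fq V hV).linearIndependent.map' V.subtype V.ker_subtype).map' τ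
      (LinearMap.ker_eq_bot.mpr hτ)
  have hspan : span Fq (Set.range β) = V.map τ := by
    rw [Set.range_comp, Set.range_comp, span_image, span_image, Basis.span_eq, Submodule.map_top,
      range_subtype]
  obtain ⟨b, hb, hker⟩ := exists_linPoly_ker_eq_span hσ β hβ
  exact ⟨b, hb, by rw [LinearMap.ker_comp, hker, hspan, comap_map_eq_of_injective hτ]⟩

lemma linPoly_comp_pow_apply {N : ℕ} (b : Fin N → K) (j : ℕ) (x : K) :
    (linPoly σ b ∘ₗ (σ ^ j).toLinearMap) x = ∑ i, b i * (σ ^ (j + (i : ℕ))) x := by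
  simp [linPoly_apply, add_comm j, pow_add]

end LinearizedPolynomial

section Frobenius

open FiniteField

variable (Fq : Type*) {K : Type*} [Field Fq] [Fintype Fq] [Field K] [Algebra Fq K]

lemma frobeniusAlgHom_pow_pow_apply (s i : ℕ) (x : K) :
    ((frobeniusAlgHom Fq K ^ s) ^ i) x = x ^ (Fintype.card Fq ^ s) ^ i := by
  rw [← pow_mul, AlgHom.coe_pow, coe_frobeniusAlgHom, pow_iterate, pow_mul]

/-- Frobenius has order `finrank Fq K`, so a fixed point of its `s`-th power with `s` coprime to
the degree is a fixed point of Frobenius itself, hence of the whole (cyclic) Galois group. -/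
lemma mem_range_algebraMap_of_frobeniusAlgHom_pow_apply_eq [Finite K] {s : ℕ}
    (hs : s.gcd (finrank Fq K) = 1) {z : K} (hz : (frobeniusAlgHom Fq K ^ s) z = z) :
    z ∈ Set.range (algebraMap Fq K) := by
  have hperiod : Function.IsPeriodicPt (frobeniusAlgHom Fq K) (finrank Fq K) z := by
    rw [Function.IsPeriodicPt, Function.IsFixedPt, ← AlgHom.coe_pow, ← orderOf_frobeniusAlgHom,
      pow_orderOf_eq_one, AlgHom.one_apply]
  have hfix : frobeniusAlgHom Fq K z = z := by
    have := (show Function.IsPeriodicPt (frobeniusAlgHom Fq K) s z by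
      rwa [Function.IsPeriodicPt, Function.IsFixedPt, ← AlgHom.coe_pow]).gcd hperiod
    rwa [hs] at this
  refine (IsGalois.mem_range_algebraMap_iff_fixed z).mpr fun f => ?_
  obtain ⟨i, rfl⟩ := (bijective_frobeniusAlgEquivOfAlgebraic_pow Fq K).2 f
  rw [AlgEquiv.coe_pow]
  exact Function.iterate_fixed hfix i

end Frobenius

section RankMetric

variable {Fq K : Type} [Field Fq] [Field K] [Algebra Fq K] {n : ℕ}

lemma rkw_add_finrank_ker (v : Fin n → K) :
    rkw Fq v + finrank Fq (LinearMap.ker (Fintype.linearCombination Fq v)) = n := by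
  rw [rkw, ← Fintype.range_linearCombination, LinearMap.finrank_range_add_finrank_ker,
    finrank_fin_fun]

lemma rkw_zero : rkw Fq (0 : Fin n → K) = 0 := by
  rw [rkw, span_eq_bot.mpr (by rintro _ ⟨i, rfl⟩; rfl), finrank_bot]

lemma notMem_of_rkw_sub_lt_minDist {C : Set (Fin n → K)} {w c : Fin n → K} (hc : c ∈ C)
    (hpos : rkw Fq (w - c) ≠ 0) (hlt : rkw Fq (w - c) < minDist Fq C) : w ∉ C := fun hw => by
  have hwc : w ≠ c := by
    rintro rfl
    exact hpos (by rw [sub_self, rkw_zero])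
  exact (Nat.sInf_le ⟨w, hw, c, hc, hwc, rfl⟩ : minDist Fq C ≤ _).not_gt hlt

end RankMetric

lemma Fintype.linearCombination_comp {R M M' ι : Type*} [Fintype ι] [Semiring R]
    [AddCommMonoid M] [Module R M] [AddCommMonoid M'] [Module R M'] (f : M →ₗ[R] M')
    (v : ι → M) :
    Fintype.linearCombination R (f ∘ v) = f ∘ₗ Fintype.linearCombination R v := by
  ext
  simp [Fintype.linearCombination_apply]

lemma exists_submodule_finrank_eq {R V : Type*} [DivisionRing R] [AddCommGroup V] [Module R V]
    [Module.Finite R V] {k : ℕ} (hk : k ≤ finrank R V) :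
    ∃ U : Submodule R V, finrank R U = k :=
  ⟨span R (Set.range (finBasis R V ∘ Fin.castLE hk)), by
    rw [finrank_span_eq_card ((finBasis R V).linearIndependent.comp _ (Fin.castLE_injective hk)),
      Fintype.card_fin]⟩

lemma exists_card_le_card_fiber_mul {A B : Type*} [Finite A] [Finite B] [Nonempty B] (f : A → B) :
    ∃ y, Nat.card A ≤ Nat.card {a // f a = y} * Nat.card B := by
  classical
  have := Fintype.ofFinite A
  have := Fintype.ofFinite B
  obtain ⟨y, hy⟩ := Fintype.exists_le_card_fiber_of_nsmul_le_card f
    (b := (Fintype.card A / Fintype.card B : ℚ)) (by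
      rw [nsmul_eq_mul, mul_div_cancel₀ _ (by exact_mod_cast Fintype.card_ne_zero)])
  refine ⟨y, ?_⟩
  rw [div_le_iff₀ (by exact_mod_cast Fintype.card_pos)] at hy
  simp only [Nat.card_eq_fintype_card, Fintype.card_subtype]
  exact_mod_cast hy

open LinearizedPolynomial in
theorem exists_many_codewords_at_rank_distance
    {Fq K : Type} [Field Fq] [Field K] [Algebra Fq K] [Finite K] {σ : K →ₐ[Fq] K}
    (hσ : ∀ z, σ z = z → z ∈ Set.range (algebraMap Fq K)) {n h r j : ℕ}
    {α : Fin n → K} (hα : LinearIndependent Fq α) {C : Set (Fin n → K)}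
    (hC : ∀ a : Fin h → K, (fun i => ∑ l, a l * (σ ^ (j + (l : ℕ))) (α i)) ∈ C) :
    ∃ w : Fin n → K, ∃ T ⊆ C, (∀ c ∈ T, rkw Fq (w - c) + (h + r) = n) ∧
      Nat.card {U : Submodule Fq (Fin n → Fq) // finrank Fq U = h + r}
        ≤ Nat.card T * Nat.card K ^ r := by
  have : Finite Fq := Finite.of_injective _ (algebraMap Fq K).injective
  have := Module.finite_of_finite Fq (M := K)
  set e := Fintype.linearCombination Fq α
  have he : Function.Injective e := linearIndependent_iff_injective_fintypeLinearCombination.mp hα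
  have hb : ∀ U : {U : Submodule Fq (Fin n → Fq) // finrank Fq U = h + r},
      ∃ b : Fin (h + r + 1) → K, b (Fin.last _) = 1 ∧
        LinearMap.ker (linPoly σ b ∘ₗ (σ ^ j).toLinearMap) = U.1.map e := fun U =>
    exists_linPoly_comp_pow_ker_eq hσ j _
      ((LinearEquiv.finrank_eq (equivMapOfInjective e he U.1)).symm.trans U.2)
  choose b hb_last hb_ker using hb
  -- Pigeonhole on the `r` coefficients strictly between the Gabidulin part and the leading one.
  set mid : _ → Fin r → K := fun U l => b U (Fin.natAdd h l).castSucc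
  obtain ⟨y, hy⟩ := exists_card_le_card_fiber_mul mid
  set w : Fin n → K := fun i =>
    (σ ^ (j + (h + r))) (α i) + ∑ l : Fin r, y l * (σ ^ (j + (h + (l : ℕ)))) (α i)
  set c : _ → Fin n → K := fun U i =>
    ∑ l : Fin h, -b U (Fin.castAdd r l).castSucc * (σ ^ (j + (l : ℕ))) (α i)
  have hker : ∀ U, mid U = y →
      LinearMap.ker (Fintype.linearCombination Fq (w - c U)) = U.1 := by
    intro U hU
    have hwc : w - c U = (linPoly σ (b U) ∘ₗ (σ ^ j).toLinearMap) ∘ α := by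
      have hmid l : b U (Fin.natAdd h l).castSucc = y l := congrFun hU l
      ext i
      simp only [Function.comp_apply, linPoly_comp_pow_apply, Fin.sum_univ_castSucc,
        Fin.sum_univ_add, hb_last, hmid]
      simp only [AlgHom.coe_pow, neg_mul, Finset.sum_neg_distrib, Pi.sub_apply, sub_neg_eq_add,
        Fin.val_castSucc, Fin.val_castAdd, Fin.castSucc_natAdd, Fin.val_natAdd, Fin.val_last,
        one_mul, w, c]
      ring
    rw [hwc, Fintype.linearCombination_comp, LinearMap.ker_comp, hb_ker,
      comap_map_eq_of_injective he]
  refine ⟨w, Set.range fun U : {U // mid U = y} => c U.1, Set.range_subset_iff.mpr fun _ => hC _,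
    ?_, ?_⟩
  · rintro _ ⟨U, rfl⟩
    have := rkw_add_finrank_ker (Fq := Fq) (w - c U)
    rwa [hker U U.2, U.1.2] at this
  · have hinj : Function.Injective fun U : {U // mid U = y} => c U.1 := fun U V hUV =>
      Subtype.ext <| Subtype.ext <| by rw [← hker U U.2, ← hker V V.2]; simp only at hUV; rw [hUV]
    calc _ ≤ _ := hy
      _ = _ := by rw [Nat.card_range_of_injective hinj, Nat.card_fun, Nat.card_fin]

theorem stmt_9_general (q s h n m j τ : ℕ) (Fq K : Type) [Field Fq] [Fintype Fq] [Field K]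
    [Fintype K] [Algebra Fq K]
    (hcard : Fintype.card Fq = q) (hfin : Module.finrank Fq K = m)
    (hs : Nat.gcd s m = 1) (hhn : h ≤ n)
    (𝒞 : Set (K → K))
    (hGab : {f : K → K | ∃ a : Fin h → K, ∀ x : K,
        f x = ∑ i : Fin h, a i * x ^ ((q ^ s) ^ (j + (i : ℕ)))} ⊆ 𝒞)
    (α : Fin n → K) (hα : LinearIndependent Fq α)
    (C : Set (Fin n → K)) (hC : C = (fun g : K → K => fun i : Fin n => g (α i)) '' 𝒞)
    (d : ℕ) (hd : d = minDist Fq C)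
    (hτ1 : (d - 1) / 2 + 1 ≤ τ) (hτ2 : (τ : ℤ) ≤ (d : ℤ) - 1)
    (hτ3 : τ ≤ n - h) :
    ∃ w : Fin n → K, w ∉ C ∧
      Nat.card {U : Submodule Fq (Fin n → Fq) // Module.finrank Fq ↥U = n - τ}
        ≤ Nat.card ↥(C ∩ ball Fq w τ) * q ^ (m * (n - τ - h)) := by
  subst hcard hfin
  obtain ⟨r, hr⟩ : ∃ r, n - τ = h + r := ⟨n - τ - h, by omega⟩
  have hσ z := mem_range_algebraMap_of_frobeniusAlgHom_pow_apply_eq Fq (z := z) hs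
  have hGab' (a : Fin h → K) : (fun i => ∑ l, a l *
      ((FiniteField.frobeniusAlgHom Fq K ^ s) ^ (j + (l : ℕ))) (α i)) ∈ C := by
    rw [hC]
    exact ⟨_, hGab ⟨a, fun _ => rfl⟩, by simp only [frobeniusAlgHom_pow_pow_apply]⟩
  obtain ⟨w, T, hTC, hT, hcard⟩ := exists_many_codewords_at_rank_distance hσ hα hGab' (r := r)
  refine ⟨w, ?_, ?_⟩
  · have : Nonempty {U : Submodule Fq (Fin n → Fq) // finrank Fq U = h + r} :=
      let ⟨U, hU⟩ := exists_submodule_finrank_eq (by rw [finrank_fin_fun]; omega)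
      ⟨⟨U, hU⟩⟩
    obtain ⟨⟨c, hc⟩⟩ :=
      (Nat.card_ne_zero.mp (left_ne_zero_of_mul (Nat.card_pos.trans_le hcard).ne')).1
    have := hT c hc
    exact notMem_of_rkw_sub_lt_minDist (Fq := Fq) (hTC hc) (by omega) (by rw [← hd]; omega)
  · have hTball : T ⊆ C ∩ ball Fq w τ := fun c hc =>
      ⟨hTC hc, show rkw Fq (w - c) ≤ τ by have := hT c hc; omega⟩
    rw [hr, Nat.add_sub_cancel_left, pow_mul, ← Module.card_eq_pow_finrank,
      ← Nat.card_eq_fintype_card]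
    exact hcard.trans (Nat.mul_le_mul_right _ (Nat.card_mono (Set.toFinite _) hTball))

/-- Johnson-like bound for codes containing a Frobenius twist
`(𝒢_{m,h,σ})^{σ^j}` of a generalized Gabidulin code: for a suitable radius `τ` there is a
word `w ∉ C` with `|C ∩ B_τ(w)| ≥ [n choose n−τ]_q / q^{m(n−τ−h)}`, where the Gaussian
binomial is the number of `(n−τ)`-dimensional `F_q`-subspaces of an `n`-dimensional
`F_q`-space. -/
theorem stmt_9 (q s h n m j τ : ℕ) (Fq K : Type) [Field Fq] [Fintype Fq] [Field K]
    [Fintype K] [Algebra Fq K]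
    (hcard : Fintype.card Fq = q) (hfin : Module.finrank Fq K = m)
    (hs : Nat.gcd s m = 1) (hh : 0 < h) (hhn : h ≤ n) (hnm : n ≤ m)
    (𝒞 : Set (K → K))
    (hlin : ∀ f ∈ 𝒞, ∃ N : ℕ, ∃ a : Fin N → K, ∀ x : K,
      f x = ∑ i : Fin N, a i * x ^ ((q ^ s) ^ (i : ℕ)))
    (hjm : j ≤ m - h)
    (hGab : {f : K → K | ∃ a : Fin h → K, ∀ x : K,
        f x = ∑ i : Fin h, a i * x ^ ((q ^ s) ^ (j + (i : ℕ)))} ⊆ 𝒞)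
    (α : Fin n → K) (hα : LinearIndependent Fq α)
    (C : Set (Fin n → K)) (hC : C = (fun g : K → K => fun i : Fin n => g (α i)) '' 𝒞)
    (d : ℕ) (hd : d = minDist Fq C)
    (hτ1 : (d - 1) / 2 + 1 ≤ τ) (hτ2 : (τ : ℤ) ≤ (d : ℤ) - 1)
    (hτ3 : τ ≤ n - h) (hjτ : j < τ) :
    ∃ w : Fin n → K, w ∉ C ∧
      Nat.card {U : Submodule Fq (Fin n → Fq) // Module.finrank Fq ↥U = n - τ}
        ≤ Nat.card ↥(C ∩ ball Fq w τ) * q ^ (m * (n - τ - h)) :=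
  stmt_9_general q s h n m j τ Fq K hcard hfin hs hhn 𝒞 hGab α hα C hC d hd hτ1 hτ2 hτ3
end

section
/- Let q be a prime power, let n, m be positive integers with n | m, and let σ : x ↦ x^{q^s} with gcd(s,m)=1 (so σ restricts to an automorphism of F_{q^n}). Let 𝒞 be a set of σ-linearized polynomials over F_{q^m}, let β ∈ F_{q^m}^*, let α_1,…,α_n be an F_q-basis of βF_{q^n} = {βx : x ∈ F_{q^n}}, let C = {(g(α_1),…,g(α_n)) : g ∈ 𝒞} ⊆ F_{q^m}^n, and let d be its minimum rank distance. Let l and h be positive integers with n−d+1 ≤ l ≤ n−⌊(d−1)/2⌋−1 and h ≤ l. Suppose: (i) (𝒢_{n,h,σ})^{σ^j} = { Σ_{i=j}^{j+h−1} a_i x^{σ^i} : a_i ∈ F_{q^m} } ⊆ 𝒞 for some integer j with 0 ≤ j < n−l; and (ii) there exists a set Sub of g distinct σ-linearized polynomials, each of the form x^{σ^l} + a_{h−1}x^{σ^{h−1}} + ⋯ + a_1 x^{σ} + a_0 x with a_0,…,a_{h−1} ∈ F_{q^n}, and each having exactly q^l roots in F_{q^n} (i.e., each is a σ-subspace polynomial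 of L_{n,σ} of σ-degree l). Then there exists a word w ∈ F_{q^m}^n ∖ C such that |C ∩ B_{n−l}(w)| ≥ g. -/
open Polynomial in
lemma vanish_aux {K : Type} [Field K] {q n N : ℕ} (hq : 1 < q) (hn : 0 < n)
    (E : Set K) (hE : q ^ n ≤ Nat.card ↥E)
    (t : Fin N → ℕ) (htlt : ∀ k, t k < n) (htinj : Function.Injective t)
    (c : Fin N → K) (hvan : ∀ x ∈ E, ∑ k, c k * x ^ q ^ (t k) = 0) (k : Fin N) :
    c k = 0 := by
  classical
  by_contra hck
  set P : K[X] := ∑ i, Polynomial.C (c i) * Polynomial.X ^ (q ^ t i) with hP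
  have hcoeff : P.coeff (q ^ t k) = c k := by
    rw [hP, Polynomial.finset_sum_coeff, Finset.sum_eq_single k]
    · simp [Polynomial.coeff_C_mul, Polynomial.coeff_X_pow]
    · intro i _ hik
      have hne : ¬ (q ^ t k = q ^ t i) := fun he =>
        hik (htinj (Nat.pow_right_injective hq he.symm))
      simp [Polynomial.coeff_C_mul, Polynomial.coeff_X_pow, hne]
    · intro hk; exact absurd (Finset.mem_univ k) hk
  have hP0 : P ≠ 0 := by
    intro h0; rw [h0, Polynomial.coeff_zero] at hcoeff; exact hck hcoeff.symm
  have hdeg : P.natDegree ≤ q ^ (n - 1) := by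
    apply Polynomial.natDegree_sum_le_of_forall_le
    intro i _
    refine (Polynomial.natDegree_C_mul_X_pow_le _ _).trans ?_
    exact Nat.pow_le_pow_right (by omega) (by have := htlt i; omega)
  have hroots : E ⊆ ↑P.roots.toFinset := by
    intro x hx
    simp only [Finset.coe_sort_coe, Multiset.mem_toFinset, Finset.mem_coe]
    rw [Polynomial.mem_roots hP0]
    simp only [Polynomial.IsRoot, hP, Polynomial.eval_finset_sum, Polynomial.eval_mul,
      Polynomial.eval_C, Polynomial.eval_pow, Polynomial.eval_X]
    exact hvan x hx
  have h1 : Nat.card ↥E ≤ Nat.card ↥(↑P.roots.toFinset : Set K) :=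
    Nat.card_mono (Finset.finite_toSet _) hroots
  rw [Nat.card_coe_set_eq, Nat.card_coe_set_eq, Set.ncard_coe_finset] at h1
  rw [Nat.card_coe_set_eq] at hE
  have h2 : P.roots.toFinset.card ≤ P.natDegree :=
    le_trans (Multiset.toFinset_card_le _) (Polynomial.card_roots' P)
  have h3 : q ^ (n-1) < q ^ n := Nat.pow_lt_pow_right hq (by omega)
  omega

def powAddHom (K : Type) [Field K] (N : ℕ) (h : ∀ x y : K, (x + y) ^ N = x ^ N + y ^ N)
    (h0 : (0 : K) ^ N = 0) : K →+ K :=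
  { toFun := (· ^ N), map_zero' := h0, map_add' := h }

noncomputable def psiMap (Fq : Type) [Field Fq] {K : Type} [Field K] [Algebra Fq K] (q : ℕ)
    {ι : Type} [Fintype ι] (c : ι → K) (e : ι → ℕ)
    (hadd : ∀ (t : ℕ) (x y : K), (x + y) ^ q ^ t = x ^ q ^ t + y ^ q ^ t)
    (hsmul : ∀ (t : ℕ) (r : Fq) (x : K), (r • x) ^ q ^ t = r • x ^ q ^ t) : K →ₗ[Fq] K where
  toFun x := ∑ k, c k * x ^ q ^ e k
  map_add' x y := by
    simp only [hadd, mul_add]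
    rw [Finset.sum_add_distrib]
  map_smul' r x := by
    simp only [hsmul, RingHom.id_apply, Finset.smul_sum, mul_smul_comm]

lemma psiMap_apply (Fq : Type) [Field Fq] {K : Type} [Field K] [Algebra Fq K] (q : ℕ)
    {ι : Type} [Fintype ι] (c : ι → K) (e : ι → ℕ) (hadd) (hsmul) (x : K) :
    psiMap Fq q c e hadd hsmul x = ∑ k, c k * x ^ q ^ e k := rfl


/-- a code containing a twist `(𝒢_{n,h,σ})^{σ^j}` of a Gabidulin code,
evaluated on an `F_q`-basis of `βF_{q^n}`, together with a family of `g` σ-subspace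
polynomials `x^{σ^l} + Σ_{i<h} a_i x^{σ^i}` with coefficients in `F_{q^n}` and exactly
`q^l` roots in `F_{q^n}`, admits a word `w ∉ C` with `|C ∩ B_{n−l}(w)| ≥ g`. -/
theorem stmt_10 (q s n m l h g j : ℕ) (Fq K : Type) [Field Fq] [Fintype Fq] [Field K]
    [Fintype K] [Algebra Fq K]
    (hcard : Fintype.card Fq = q) (hfin : Module.finrank Fq K = m)
    (hn : 0 < n) (hnm : n ∣ m) (hs : Nat.gcd s m = 1)
    (𝒞 : Set (K → K))
    (hlin : ∀ f ∈ 𝒞, ∃ N : ℕ, ∃ a : Fin N → K, ∀ x : K,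
      f x = ∑ i : Fin N, a i * x ^ ((q ^ s) ^ (i : ℕ)))
    (β : K) (hβ : β ≠ 0)
    (α : Fin n → K) (hα : LinearIndependent Fq α)
    (hspan : (Submodule.span Fq (Set.range α) : Set K)
      = (fun y : K => β * y) '' {x : K | x ^ q ^ n = x})
    (C : Set (Fin n → K)) (hC : C = (fun g : K → K => fun i : Fin n => g (α i)) '' 𝒞)
    (d : ℕ) (hd : d = minDist Fq C)
    (hl0 : 0 < l) (hh0 : 0 < h)
    (hl1 : (n : ℤ) - d + 1 ≤ (l : ℤ))
    (hl2 : (l : ℤ) ≤ (n : ℤ) - (((d - 1) / 2 : ℕ) : ℤ) - 1)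
    (hhl : h ≤ l)
    (hj : (j : ℤ) < (n : ℤ) - (l : ℤ))
    (hGab : {f : K → K | ∃ a : Fin h → K, ∀ x : K,
        f x = ∑ i : Fin h, a i * x ^ ((q ^ s) ^ (j + (i : ℕ)))} ⊆ 𝒞)
    (Sub : Set (Fin h → K)) (hSubcard : Nat.card ↥Sub = g)
    (hSub : ∀ a ∈ Sub, (∀ i : Fin h, a i ^ q ^ n = a i) ∧
      Nat.card ↥{x : K | x ^ q ^ n = x ∧
        x ^ ((q ^ s) ^ l) + ∑ i : Fin h, a i * x ^ ((q ^ s) ^ (i : ℕ)) = 0} = q ^ l) :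
    ∃ w : Fin n → K, w ∉ C ∧ g ≤ Nat.card ↥(C ∩ ball Fq w (n - l)) := by
  classical
  have hq1 : 1 < q := hcard ▸ Fintype.one_lt_card
  have hjn : (0:ℤ) ≤ (j:ℤ) := Int.natCast_nonneg j
  have hln : l < n := by omega
  have hnl1 : 1 ≤ n - l := by omega
  have hdlb : n - l + 1 ≤ d := by omega
  -- characteristic
  set p := ringChar Fq with hpdef
  haveI hCFq : CharP Fq p := ringChar.charP Fq
  obtain ⟨f, hp, hqpf⟩ := FiniteField.card Fq p
  rw [hcard] at hqpf
  haveI : Fact p.Prime := ⟨hp⟩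
  haveI hCK : CharP K p := charP_of_injective_algebraMap (algebraMap Fq K).injective p
  haveI : ExpChar K p := ExpChar.prime hp
  have hqpow : ∀ t : ℕ, q ^ t = p ^ ((f : ℕ) * t) := fun t => by rw [hqpf, ← pow_mul]
  have hadd : ∀ (t : ℕ) (x y : K), (x + y) ^ q ^ t = x ^ q ^ t + y ^ q ^ t := by
    intro t x y; rw [hqpow, add_pow_char_pow]
  have hsubp : ∀ (t : ℕ) (x y : K), (x - y) ^ q ^ t = x ^ q ^ t - y ^ q ^ t := by
    intro t x y; rw [hqpow, sub_pow_char_pow]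
  have hzero : ∀ t : ℕ, (0 : K) ^ q ^ t = 0 := fun t => zero_pow (by positivity)
  have hfrobinj : ∀ (t : ℕ) (x y : K), x ^ q ^ t = y ^ q ^ t → x = y := by
    intro t x y hxy
    have h2 : (x - y) ^ q ^ t = 0 := by rw [hsubp, hxy, sub_self]
    have := pow_eq_zero_iff (pow_ne_zero t (by omega : q ≠ 0)) |>.mp h2
    exact sub_eq_zero.mp this
  have hfixFq : ∀ (t : ℕ) (r : Fq), r ^ q ^ t = r := by
    intro t r
    induction t with
    | zero => simp
    | succ t ih => rw [pow_succ, pow_mul, ih, ← hcard, FiniteField.pow_card]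
  have hsmul : ∀ (t : ℕ) (r : Fq) (x : K), (r • x) ^ q ^ t = r • x ^ q ^ t := by
    intro t r x
    rw [Algebra.smul_def, Algebra.smul_def, mul_pow, ← map_pow, hfixFq]
  have hsumpow : ∀ (t : ℕ) (v : Fin h → K),
      (∑ k, v k) ^ q ^ t = ∑ k, (v k) ^ q ^ t := fun t v =>
    map_sum (powAddHom K (q ^ t) (hadd t) (hzero t)) v Finset.univ
  -- the subfield F_{q^n} as a submodule
  set Eset : Set K := {x : K | x ^ q ^ n = x} with hEset
  let Esub : Submodule Fq K :=
  { carrier := Eset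
    zero_mem' := by simp only [hEset, Set.mem_setOf_eq]; exact hzero n
    add_mem' := by
      intro x y hx hy
      simp only [hEset, Set.mem_setOf_eq] at *
      rw [hadd n, hx, hy]
    smul_mem' := by
      intro r x hx
      simp only [hEset, Set.mem_setOf_eq] at *
      rw [hsmul n, hx] }
  have hmemE : ∀ x : K, x ∈ Esub ↔ x ^ q ^ n = x := fun x => Iff.rfl
  -- span of the scaled basis is Esub
  have hrangecomp : Set.range (fun i => β⁻¹ * α i) = (fun y => β⁻¹ * y) '' Set.range α := by
    rw [← Set.range_comp]; rfl
  have hspan2 : Submodule.span Fq (Set.range fun i => β⁻¹ * α i) = Esub := by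
    apply SetLike.coe_injective
    have hmaps : Submodule.span Fq (Set.range fun i => β⁻¹ * α i)
        = Submodule.map (LinearMap.mulLeft Fq β⁻¹) (Submodule.span Fq (Set.range α)) := by
      rw [Submodule.map_span]
      congr 1
    rw [hmaps]
    rw [Submodule.map_coe]
    show (fun y : K => β⁻¹ * y) '' _ = _
    rw [hspan, ← Set.image_comp]
    have hid : ((fun y : K => β⁻¹ * y) ∘ fun y : K => β * y) = id := by
      funext x; simp [← mul_assoc, inv_mul_cancel₀ hβ]
    rw [hid, Set.image_id]
    rfl
  have hLI : LinearIndependent Fq fun i => β⁻¹ * α i := by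
    have := hα.map' (LinearMap.mulLeft Fq β⁻¹)
      (LinearMap.ker_eq_bot.mpr (mul_right_injective₀ (inv_ne_zero hβ)))
    exact this
  have hfinE : Module.finrank Fq ↥Esub = n := by
    rw [← hspan2, finrank_span_eq_card hLI, Fintype.card_fin]
  haveI : Fintype ↥Esub := Fintype.ofFinite _
  have hcardE : Nat.card ↥Esub = q ^ n := by
    rw [Nat.card_eq_fintype_card, Module.card_eq_pow_finrank (K := Fq) (V := ↥Esub), hcard, hfinE]
  have hcardEset : q ^ n ≤ Nat.card ↥Eset := le_of_eq hcardE.symm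
  -- reduction of Frobenius exponents mod n on Eset
  have hxpowmul : ∀ x ∈ Eset, ∀ c : ℕ, x ^ q ^ (n * c) = x := by
    intro x hx c
    induction c with
    | zero => simp
    | succ c ih =>
      rw [Nat.mul_succ, pow_add, pow_mul, ih]
      exact hx
  have hred : ∀ x ∈ Eset, ∀ t : ℕ, x ^ q ^ t = x ^ q ^ (t % n) := by
    intro x hx t
    conv_lhs => rw [← Nat.div_add_mod t n]
    rw [pow_add, pow_mul, hxpowmul x hx (t / n)]
  -- the constructions attached to a subspace polynomial
  have hQjk : ∀ t : ℕ, (q ^ s) ^ t = q ^ (s * t) := fun t => (pow_mul q s t).symm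
  set B : K := β ^ q ^ (s * (l + j)) with hB
  have hβpne : ∀ e : ℕ, β ^ e ≠ 0 := fun e => pow_ne_zero e hβ
  have hBne : B ≠ 0 := hβpne _
  set bco : (Fin h → K) → Fin h → K :=
    fun a k => -(B * (a k) ^ q ^ (s * j) / β ^ q ^ (s * (j + (k : ℕ)))) with hbco
  set cw : (Fin h → K) → (Fin n → K) :=
    fun a i => ∑ k : Fin h, bco a k * (α i) ^ ((q ^ s) ^ (j + (k : ℕ))) with hcw
  have hcwC : ∀ a : Fin h → K, cw a ∈ C := by
    intro a
    rw [hC]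
    exact ⟨fun x => ∑ k : Fin h, bco a k * x ^ ((q ^ s) ^ (j + (k : ℕ))),
      hGab ⟨bco a, fun x => rfl⟩, rfl⟩
  set wv : Fin n → K := fun i => (α i) ^ q ^ (s * (l + j)) with hwv
  set ccoef : (Fin h → K) → Option (Fin h) → K :=
    fun a o => o.elim B (fun k => B * (a k) ^ q ^ (s * j)) with hccoef
  set eexp : Option (Fin h) → ℕ :=
    fun o => o.elim (s * (l + j)) (fun k => s * (j + (k : ℕ))) with heexp
  set ψ : (Fin h → K) → (K →ₗ[Fq] K) :=
    fun a => psiMap Fq q (ccoef a) eexp hadd hsmul with hψ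
  have hψapp : ∀ (a : Fin h → K) (x : K),
      ψ a x = B * x ^ q ^ (s * (l + j))
        + ∑ k : Fin h, (B * (a k) ^ q ^ (s * j)) * x ^ q ^ (s * (j + (k : ℕ))) := by
    intro a x
    rw [hψ]
    rw [psiMap_apply, Fintype.sum_option]
    rfl
  have hψval : ∀ (a : Fin h → K) (x : K),
      ψ a x = B * (x ^ q ^ (s * l) + ∑ k : Fin h, a k * x ^ q ^ (s * (k : ℕ))) ^ q ^ (s * j) := by
    intro a x
    have e1 : (x ^ q ^ (s * l)) ^ q ^ (s * j) = x ^ q ^ (s * (l + j)) := by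
      rw [← pow_mul, ← pow_add]; ring_nf
    have e2 : ∀ t : ℕ, ∀ c : K, (c * x ^ q ^ (s * t)) ^ q ^ (s * j)
        = c ^ q ^ (s * j) * x ^ q ^ (s * (j + t)) := by
      intro t c; rw [mul_pow, ← pow_mul, ← pow_add]; ring_nf
    have e0 : (x ^ q ^ (s * l) + ∑ k : Fin h, a k * x ^ q ^ (s * (k : ℕ))) ^ q ^ (s * j)
        = x ^ q ^ (s * (l + j)) + ∑ k : Fin h, (a k) ^ q ^ (s * j) * x ^ q ^ (s * (j + (k : ℕ))) := by
      rw [hadd, hsumpow, e1]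
      congr 1
      exact Finset.sum_congr rfl fun k _ => e2 (k : ℕ) (a k)
    rw [hψapp, e0, mul_add B, Finset.mul_sum]
    congr 1
    exact Finset.sum_congr rfl fun k _ => (mul_assoc _ _ _)
  have hψzero : ∀ (a : Fin h → K) (x : K),
      ψ a x = 0 ↔ x ^ q ^ (s * l) + ∑ k : Fin h, a k * x ^ q ^ (s * (k : ℕ)) = 0 := by
    intro a x
    rw [hψval]
    constructor
    · intro h0
      rcases mul_eq_zero.mp h0 with h0 | h0
      · exact absurd h0 hBne
      · exact (pow_eq_zero_iff (pow_ne_zero _ (by omega : q ≠ 0))).mp h0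
    · intro h0; rw [h0, hzero, mul_zero]
  have hxc : ∀ (x : K) (t : ℕ), x ^ (q ^ s) ^ t = x ^ q ^ (s * t) := by
    intro x t; rw [hQjk]
  have hrank : ∀ a ∈ Sub, Module.finrank Fq ↥(Submodule.map (ψ a) Esub) = n - l := by
    intro a ha
    have hsetEq : {x : K | x ^ q ^ n = x ∧
        x ^ ((q ^ s) ^ l) + ∑ i : Fin h, a i * x ^ ((q ^ s) ^ (i : ℕ)) = 0}
        = {x : K | x ∈ Esub ∧ ψ a x = 0} := by
      ext x
      simp only [Set.mem_setOf_eq, hxc, hψzero a x, hmemE]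
    have hkerS : Nat.card ↥(LinearMap.ker ((ψ a).domRestrict Esub))
        = Nat.card ↥{x : K | x ∈ Esub ∧ ψ a x = 0} := by
      apply Nat.card_congr
      refine ⟨fun y => ⟨(y.1 : K), y.1.2, ?_⟩, fun z => ⟨⟨z.1, z.2.1⟩, ?_⟩, fun y => ?_, fun z => ?_⟩
      · have hy := y.2
        rw [LinearMap.mem_ker, LinearMap.domRestrict_apply] at hy
        exact hy
      · rw [LinearMap.mem_ker, LinearMap.domRestrict_apply]
        exact z.2.2
      · exact Subtype.ext (Subtype.ext rfl)
      · exact Subtype.ext rfl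
    haveI : Fintype ↥(LinearMap.ker ((ψ a).domRestrict Esub)) := Fintype.ofFinite _
    have hc : Nat.card ↥(LinearMap.ker ((ψ a).domRestrict Esub))
        = q ^ Module.finrank Fq ↥(LinearMap.ker ((ψ a).domRestrict Esub)) := by
      rw [Nat.card_eq_fintype_card, Module.card_eq_pow_finrank (K := Fq), hcard]
    have h2 : (q : ℕ) ^ l
        = q ^ Module.finrank Fq ↥(LinearMap.ker ((ψ a).domRestrict Esub)) := by
      rw [← (hSub a ha).2, hsetEq, ← hkerS, hc]
    have hfrker : Module.finrank Fq ↥(LinearMap.ker ((ψ a).domRestrict Esub)) = l :=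
      (Nat.pow_right_injective hq1 h2).symm
    have hrn := LinearMap.finrank_range_add_finrank_ker ((ψ a).domRestrict Esub)
    rw [LinearMap.range_domRestrict, hfrker, hfinE] at hrn
    omega
  have hwcw : ∀ a : Fin h → K, wv - cw a = fun i => ψ a (β⁻¹ * α i) := by
    intro a; funext i
    rw [Pi.sub_apply, hψapp]
    have h1 : B * (β⁻¹ * α i) ^ q ^ (s * (l + j)) = wv i := by
      rw [mul_pow, inv_pow, hB, ← mul_assoc, mul_inv_cancel₀ (hβpne _), one_mul]
    have h2 : ∀ k : Fin h, (B * (a k) ^ q ^ (s * j)) * (β⁻¹ * α i) ^ q ^ (s * (j + (k : ℕ)))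
        = -(bco a k * (α i) ^ ((q ^ s) ^ (j + (k : ℕ)))) := by
      intro k
      simp only [hbco]
      rw [hxc (α i), mul_pow, inv_pow, div_eq_mul_inv]
      ring
    have h3 : (∑ k : Fin h, (B * (a k) ^ q ^ (s * j)) * (β⁻¹ * α i) ^ q ^ (s * (j + (k : ℕ))))
        = -(cw a i) := by
      simp only [hcw]
      rw [← Finset.sum_neg_distrib]
      exact Finset.sum_congr rfl fun k _ => h2 k
    rw [h1, h3, sub_eq_add_neg]
  have hspanwc : ∀ a : Fin h → K,
      Submodule.span Fq (Set.range (wv - cw a)) = Submodule.map (ψ a) Esub := by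
    intro a
    rw [hwcw a, ← hspan2, Submodule.map_span, ← Set.range_comp]
    rfl
  have hrkw : ∀ a ∈ Sub, rkw Fq (wv - cw a) = n - l := by
    intro a ha
    show Module.finrank Fq ↥(Submodule.span Fq (Set.range (wv - cw a))) = n - l
    rw [hspanwc a]
    exact hrank a ha
  have hnecw : ∀ a ∈ Sub, wv ≠ cw a := by
    intro a ha hEq
    have h0 : wv - cw a = 0 := by rw [hEq, sub_self]
    have hr := hrkw a ha
    rw [h0] at hr
    haveI : Nonempty (Fin n) := ⟨⟨0, hn⟩⟩
    have hz : rkw Fq (0 : Fin n → K) = 0 := by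
      show Module.finrank Fq ↥(Submodule.span Fq (Set.range (0 : Fin n → K))) = 0
      have hrange : Set.range (0 : Fin n → K) = {0} := Set.range_const
      rw [hrange, Submodule.span_zero_singleton]
      exact finrank_bot Fq K
    rw [hz] at hr
    omega
  rcases Nat.eq_zero_or_pos g with hg0 | hgpos
  · -- trivial count: just need some word outside C
    have hW : ∃ w0 : Fin n → K, w0 ∉ C := by
      by_contra hall
      push_neg at hall
      set i0 : Fin n := ⟨0, hn⟩ with hi0
      set v : Fin n → K := Function.update (0 : Fin n → K) i0 1 with hv
      have hnev : (0 : Fin n → K) ≠ v := by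
        intro hEq
        have h1 := congrFun hEq i0
        rw [hv, Function.update_self] at h1
        exact zero_ne_one h1
      have hrk : rkw Fq ((0 : Fin n → K) - v) ≤ 1 := by
        show Module.finrank Fq ↥(Submodule.span Fq (Set.range ((0 : Fin n → K) - v))) ≤ 1
        have hsubr : Set.range ((0 : Fin n → K) - v)
            ⊆ (Submodule.span Fq {(1 : K)} : Set K) := by
          rintro _ ⟨i, rfl⟩
          simp only [Pi.sub_apply, Pi.zero_apply, zero_sub, SetLike.mem_coe]
          by_cases hii : i = i0
          · subst hii
            rw [hv, Function.update_self]
            exact Submodule.neg_mem _ (Submodule.mem_span_singleton_self 1)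
          · rw [hv, Function.update_of_ne hii]
            simp only [Pi.zero_apply, neg_zero]
            exact Submodule.zero_mem _
        have hle : Submodule.span Fq (Set.range ((0 : Fin n → K) - v))
            ≤ Submodule.span Fq {(1 : K)} := Submodule.span_le.mpr hsubr
        calc Module.finrank Fq ↥(Submodule.span Fq (Set.range ((0 : Fin n → K) - v)))
            ≤ Module.finrank Fq ↥(Submodule.span Fq {(1 : K)}) := Submodule.finrank_mono hle
          _ = 1 := finrank_span_singleton one_ne_zero
      have hmem : rkw Fq ((0 : Fin n → K) - v)
          ∈ {r : ℕ | ∃ u ∈ C, ∃ v' ∈ C, u ≠ v' ∧ rkw Fq (u - v') = r} :=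
        ⟨0, hall 0, v, hall v, hnev, rfl⟩
      have hle2 : minDist Fq C ≤ rkw Fq ((0 : Fin n → K) - v) := Nat.sInf_le hmem
      rw [← hd] at hle2
      omega
    obtain ⟨w0, hw0⟩ := hW
    exact ⟨w0, hw0, by omega⟩
  · -- main case
    have hSubfin : Finite ↥Sub := Set.Finite.to_subtype (Set.toFinite Sub)
    have hSubne : Nonempty ↥Sub := by
      have hpos : 0 < Nat.card ↥Sub := by rw [hSubcard]; exact hgpos
      exact (Nat.card_pos_iff.mp hpos).1
    obtain ⟨⟨a0, ha0⟩⟩ := hSubne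
    have hwC : wv ∉ C := by
      intro hwC
      have hmem : (n - l) ∈ {r : ℕ | ∃ u ∈ C, ∃ v' ∈ C, u ≠ v' ∧ rkw Fq (u - v') = r} :=
        ⟨wv, hwC, cw a0, hcwC a0, hnecw a0 ha0, hrkw a0 ha0⟩
      have hle : minDist Fq C ≤ n - l := Nat.sInf_le hmem
      rw [← hd] at hle
      omega
    refine ⟨wv, hwC, ?_⟩
    rw [← hSubcard]
    -- injectivity of a ↦ cw a on Sub
    have hcwinj : ∀ a1 ∈ Sub, ∀ a2 ∈ Sub, cw a1 = cw a2 → a1 = a2 := by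
      intro a1 ha1 a2 ha2 hcweq
      set D : K →ₗ[Fq] K := psiMap Fq q (fun k : Fin h => bco a1 k - bco a2 k)
        (fun k : Fin h => s * (j + (k : ℕ))) hadd hsmul with hD
      have hD0 : ∀ i : Fin n, D (α i) = 0 := by
        intro i
        rw [hD, psiMap_apply]
        have hterm : ∀ k : Fin h, (bco a1 k - bco a2 k) * (α i) ^ q ^ (s * (j + (k : ℕ)))
            = bco a1 k * (α i) ^ ((q ^ s) ^ (j + (k : ℕ)))
              - bco a2 k * (α i) ^ ((q ^ s) ^ (j + (k : ℕ))) := by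
          intro k; rw [hxc (α i), sub_mul]
        rw [Finset.sum_congr rfl fun k _ => hterm k, Finset.sum_sub_distrib]
        have h1 : cw a1 i = cw a2 i := congrFun hcweq i
        simp only [hcw] at h1
        rw [h1, sub_self]
      have hspanle : Submodule.span Fq (Set.range α) ≤ LinearMap.ker D :=
        Submodule.span_le.mpr (by rintro _ ⟨i, rfl⟩; exact LinearMap.mem_ker.mpr (hD0 i))
      have hDE : ∀ x ∈ Eset, D (β * x) = 0 := by
        intro x hx
        have hmem : β * x ∈ Submodule.span Fq (Set.range α) := by
          rw [← SetLike.mem_coe, hspan]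
          exact ⟨x, hx, rfl⟩
        exact LinearMap.mem_ker.mp (hspanle hmem)
      have hvanish : ∀ x ∈ Eset, ∑ k : Fin h,
          ((bco a1 k - bco a2 k) * β ^ q ^ (s * (j + (k : ℕ))))
            * x ^ q ^ ((s * (j + (k : ℕ))) % n) = 0 := by
        intro x hx
        have hD1 := hDE x hx
        rw [hD, psiMap_apply] at hD1
        rw [← hD1]
        apply Finset.sum_congr rfl
        intro k _
        rw [mul_pow β x, ← hred x hx]
        ring
      have htinj : Function.Injective (fun k : Fin h => (s * (j + (k : ℕ))) % n) := by
        intro k k' he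
        have hco : Nat.Coprime s n := Nat.Coprime.coprime_dvd_right hnm hs
        have h1 : s * (j + (k : ℕ)) ≡ s * (j + (k' : ℕ)) [MOD n] := he
        have h2 : (j + (k : ℕ)) ≡ (j + (k' : ℕ)) [MOD n] :=
          Nat.ModEq.cancel_left_of_coprime hco.symm h1
        have h3 : (k : ℕ) ≡ (k' : ℕ) [MOD n] := Nat.ModEq.add_left_cancel' j h2
        have h4 : (k : ℕ) % n = (k' : ℕ) % n := h3
        have hk : (k : ℕ) % n = (k : ℕ) := Nat.mod_eq_of_lt (by have := k.2; omega)
        have hk' : (k' : ℕ) % n = (k' : ℕ) := Nat.mod_eq_of_lt (by have := k'.2; omega)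
        exact Fin.ext (by omega)
      have hcoefzero : ∀ k : Fin h,
          (bco a1 k - bco a2 k) * β ^ q ^ (s * (j + (k : ℕ))) = 0 :=
        vanish_aux hq1 hn Eset hcardEset (fun k => (s * (j + (k : ℕ))) % n)
          (fun k => Nat.mod_lt _ hn) htinj _ hvanish
      funext k
      have hbeq : bco a1 k = bco a2 k := by
        have h0 := hcoefzero k
        rcases mul_eq_zero.mp h0 with h0 | h0
        · exact sub_eq_zero.mp h0
        · exact absurd h0 (hβpne _)
      simp only [hbco] at hbeq
      have h6 := neg_injective hbeq
      have h7 := (div_eq_div_iff (hβpne _) (hβpne _)).mp h6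
      have h8 := mul_right_cancel₀ (hβpne (q ^ (s * (j + (k : ℕ))))) h7
      have h9 := mul_left_cancel₀ hBne h8
      exact hfrobinj _ _ _ h9
    have hmemball : ∀ a ∈ Sub, cw a ∈ C ∩ ball Fq wv (n - l) :=
      fun a ha => ⟨hcwC a, le_of_eq (hrkw a ha)⟩
    have hinj : Function.Injective (fun a : ↥Sub =>
        (⟨cw a.1, hmemball a.1 a.2⟩ : ↥(C ∩ ball Fq wv (n - l)))) := by
      intro a1 a2 h12
      exact Subtype.ext (hcwinj a1.1 a1.2 a2.1 a2.2 (congrArg Subtype.val h12))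
    exact Nat.card_le_card_of_injective _ hinj
end

section
/- Let q be a prime power, let n, m be positive integers with n | m, and let σ : x ↦ x^{q^s} with gcd(s,m)=1. Let 𝒞 be a set of σ-linearized polynomials over F_{q^m}, let β ∈ F_{q^m}^*, let α_1,…,α_n be an F_q-basis of βF_{q^n}, let C = {(g(α_1),…,g(α_n)) : g ∈ 𝒞} ⊆ F_{q^m}^n, and let d be its minimum rank distance. Let l and h be positive integers with n−d+1 ≤ l ≤ n−⌊(d−1)/2⌋−1 and l ≥ h. Suppose: (i) (𝒢_{n,h,σ})^{σ^{l−h+1+j}} = { Σ_{i=l−h+1+j}^{l+j} a_i x^{σ^i} : a_i ∈ F_{q^m} } ⊆ 𝒞 for some positive integer j with j < n−2l+h−1; and (ii) there exists a set Ŝub of g distinct σ-linearized polynomials, each of the form a_l x^{σ^l} + a_{l−1} x^{σ^{l−1}} + ⋯ + a_{l−h+1} x^{σ^{l−h+1}} + x with a_{l−h+1},…,a_l ∈ F_{q^n} and a_l ≠ 0, each having exactly q^l roots in F_{q^n} (an F_q-subspace of dimension l). Then there exists a word w ∈ F_{q^m}^n ∖ C such that |C ∩ B_{n−l}(w)| ≥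 g. -/
open Polynomial

/-- If `y^{q^n} = y` then `y^{q^t} = y^{q^{t % n}}`. -/
lemma pow_q_mod_aux {K : Type} [Field K] (q n : ℕ) (hn : 0 < n) (y : K)
    (hy : y ^ q ^ n = y) (t : ℕ) : y ^ q ^ t = y ^ q ^ (t % n) := by
  induction t using Nat.strong_induction_on with
  | _ t ih =>
    rcases lt_or_ge t n with hlt | hge
    · rw [Nat.mod_eq_of_lt hlt]
    · calc y ^ q ^ t = (y ^ q ^ n) ^ q ^ (t - n) := by
            rw [← pow_mul, ← pow_add]; congr 2; omega
        _ = y ^ q ^ (t - n) := by rw [hy]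
        _ = y ^ q ^ ((t - n) % n) := ih _ (by omega)
        _ = y ^ q ^ (t % n) := by rw [← Nat.mod_eq_sub_mod hge]

/-- Dedekind-style vanishing lemma via root counting: if a `σ`-polynomial with
monomials `x^{(q^s)^{l-i}}` vanishes on the whole subfield with `q^n` elements,
then all its coefficients vanish. -/
lemma vanish_zero {K : Type} [Field K] [Fintype K] (q s n l h : ℕ) (hq2 : 2 ≤ q)
    (hn : 0 < n) (hln : l < n) (hhl : h ≤ l)
    (hsn : Nat.gcd s n = 1)
    (hF : Nat.card ↥{x : K | x ^ q ^ n = x} = q ^ n)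
    (d : Fin h → K)
    (hvan : ∀ y : K, y ^ q ^ n = y → ∑ i : Fin h, d i * y ^ (q ^ s) ^ (l - (i : ℕ)) = 0)
    (i0 : Fin h) : d i0 = 0 := by
  classical
  by_contra hd0
  set r : Fin h → ℕ := fun i => (s * (l - (i : ℕ))) % n with hr
  have hrlt : ∀ i, r i < n := fun i => Nat.mod_lt _ hn
  have hrinj : Function.Injective r := by
    intro a c hac
    have h1 : s * (l - (a : ℕ)) ≡ s * (l - (c : ℕ)) [MOD n] := hac
    have h2 : (l - (a : ℕ)) ≡ (l - (c : ℕ)) [MOD n] :=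
      Nat.ModEq.cancel_left_of_coprime (by rw [Nat.gcd_comm]; exact hsn) h1
    have h3 : (l - (a : ℕ)) % n = (l - (c : ℕ)) % n := h2
    have ha := a.isLt; have hc := c.isLt
    rw [Nat.mod_eq_of_lt (by omega), Nat.mod_eq_of_lt (by omega)] at h3
    exact Fin.ext (by omega)
  set P : Polynomial K := ∑ i : Fin h, Polynomial.C (d i) * Polynomial.X ^ (q ^ r i) with hP
  have hco : P.coeff (q ^ r i0) = d i0 := by
    rw [hP, Polynomial.finset_sum_coeff, Finset.sum_eq_single i0]
    · rw [Polynomial.coeff_C_mul, Polynomial.coeff_X_pow, if_pos rfl, mul_one]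
    · intro i _ hi
      rw [Polynomial.coeff_C_mul, Polynomial.coeff_X_pow, if_neg, mul_zero]
      exact fun hc => hi (hrinj (Nat.pow_right_injective hq2 hc.symm))
    · intro habs; exact absurd (Finset.mem_univ i0) habs
  have hPne : P ≠ 0 := by
    intro h0
    rw [h0, Polynomial.coeff_zero] at hco
    exact hd0 hco.symm
  have hdeg : P.natDegree ≤ q ^ (n - 1) := by
    apply Polynomial.natDegree_sum_le_of_forall_le
    intro i _
    refine le_trans (Polynomial.natDegree_C_mul_X_pow_le _ _) ?_
    exact Nat.pow_le_pow_right (by omega) (by have := hrlt i; omega)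
  have hroots : ∀ y : K, y ^ q ^ n = y → P.IsRoot y := by
    intro y hy
    have hev : P.eval y = ∑ i : Fin h, d i * y ^ q ^ r i := by
      rw [hP, Polynomial.eval_finset_sum]
      refine Finset.sum_congr rfl fun i _ => ?_
      rw [Polynomial.eval_mul, Polynomial.eval_C, Polynomial.eval_pow, Polynomial.eval_X]
    have hmod : ∀ i : Fin h, y ^ q ^ r i = y ^ (q ^ s) ^ (l - (i : ℕ)) := by
      intro i
      rw [← pow_mul q s (l - (i : ℕ))]
      exact (pow_q_mod_aux q n hn y hy (s * (l - (i : ℕ)))).symm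
    rw [Polynomial.IsRoot, hev]
    simp only [hmod]
    exact hvan y hy
  have hFcard : ({x : K | x ^ q ^ n = x}).toFinset ⊆ P.roots.toFinset := by
    intro y hy
    rw [Set.mem_toFinset] at hy
    rw [Multiset.mem_toFinset, Polynomial.mem_roots hPne]
    exact hroots y hy
  have h1 : q ^ n ≤ P.roots.toFinset.card := by
    rw [← hF, Nat.card_coe_set_eq, Set.ncard_eq_toFinset_card']
    exact Finset.card_le_card hFcard
  have h2 : P.roots.toFinset.card ≤ P.natDegree :=
    le_trans (Multiset.toFinset_card_le _) (Polynomial.card_roots' P)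
  have h3 : q ^ (n - 1) < q ^ n := Nat.pow_lt_pow_right (by omega) (by omega)
  omega

/-- variant of Statement 10 for polynomials of the form
`a_l x^{σ^l} + ⋯ + a_{l−h+1} x^{σ^{l−h+1}} + x` (coefficients in `F_{q^n}`, `a_l ≠ 0`,
exactly `q^l` roots in `F_{q^n}`), with `(𝒢_{n,h,σ})^{σ^{l−h+1+j}} ⊆ 𝒞`:
there is a word `w ∉ C` with `|C ∩ B_{n−l}(w)| ≥ g`.
Here the coefficient `b i` multiplies `x^{σ^{l−i}}` for `i = 0,…,h−1`, so `b 0 = a_l`. -/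
theorem stmt_11 (q s n m l h g j : ℕ) (Fq K : Type) [Field Fq] [Fintype Fq] [Field K]
    [Fintype K] [Algebra Fq K]
    (hcard : Fintype.card Fq = q) (hfin : Module.finrank Fq K = m)
    (hn : 0 < n) (hnm : n ∣ m) (hs : Nat.gcd s m = 1)
    (𝒞 : Set (K → K))
    (hlin : ∀ f ∈ 𝒞, ∃ N : ℕ, ∃ a : Fin N → K, ∀ x : K,
      f x = ∑ i : Fin N, a i * x ^ ((q ^ s) ^ (i : ℕ)))
    (β : K) (hβ : β ≠ 0)
    (α : Fin n → K) (hα : LinearIndependent Fq α)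
    (hspan : (Submodule.span Fq (Set.range α) : Set K)
      = (fun y : K => β * y) '' {x : K | x ^ q ^ n = x})
    (C : Set (Fin n → K)) (hC : C = (fun g : K → K => fun i : Fin n => g (α i)) '' 𝒞)
    (d : ℕ) (hd : d = minDist Fq C)
    (hl0 : 0 < l) (hh0 : 0 < h)
    (hl1 : (n : ℤ) - d + 1 ≤ (l : ℤ))
    (hl2 : (l : ℤ) ≤ (n : ℤ) - (((d - 1) / 2 : ℕ) : ℤ) - 1)
    (hhl : h ≤ l)
    (hj : 0 < j) (hj2 : (j : ℤ) < (n : ℤ) - 2 * l + h - 1)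
    (hGab : {f : K → K | ∃ a : Fin h → K, ∀ x : K,
        f x = ∑ i : Fin h, a i * x ^ ((q ^ s) ^ (l - h + 1 + j + (i : ℕ)))} ⊆ 𝒞)
    (Sub : Set (Fin h → K)) (hSubcard : Nat.card ↥Sub = g)
    (hSub : ∀ b ∈ Sub, b ⟨0, hh0⟩ ≠ 0 ∧ (∀ i : Fin h, b i ^ q ^ n = b i) ∧
      Nat.card ↥{x : K | x ^ q ^ n = x ∧
        x + ∑ i : Fin h, b i * x ^ ((q ^ s) ^ (l - (i : ℕ))) = 0} = q ^ l) :
    ∃ w : Fin n → K, w ∉ C ∧ g ≤ Nat.card ↥(C ∩ ball Fq w (n - l)) := by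
  classical
  haveI : FiniteDimensional Fq K := Module.Finite.of_finite
  -- basic numeric facts
  have hq2 : 2 ≤ q := hcard ▸ Fintype.one_lt_card
  have hln : l < n := by omega
  have hsn : Nat.gcd s n = 1 :=
    Nat.dvd_one.mp (hs ▸ Nat.gcd_dvd_gcd_of_dvd_right s hnm)
  -- characteristic
  obtain ⟨e, hp, hqe⟩ := FiniteField.card Fq (ringChar Fq)
  set p := ringChar Fq with hpdef
  haveI hFact : Fact p.Prime := ⟨hp⟩
  haveI hCharK : CharP K p := charP_of_injective_algebraMap (algebraMap Fq K).injective p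
  have hq : q = p ^ (e : ℕ) := by rw [← hcard]; exact hqe
  -- Frobenius facts
  have hqadd : ∀ (T : ℕ) (x y : K), (x + y) ^ q ^ T = x ^ q ^ T + y ^ q ^ T := by
    intro T x y
    rw [hq, ← pow_mul]
    exact add_pow_char_pow x y p ((e : ℕ) * T)
  have hqsub : ∀ (T : ℕ) (x y : K), (x - y) ^ q ^ T = x ^ q ^ T - y ^ q ^ T := by
    intro T x y
    rw [hq, ← pow_mul]
    have hid : ∀ z : K, z ^ p ^ ((e : ℕ) * T) = iterateFrobenius K p ((e : ℕ) * T) z :=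
      fun _ => rfl
    simp only [hid]
    exact map_sub _ x y
  have hqsum : ∀ (T : ℕ) (f : Fin h → K), (∑ i, f i) ^ q ^ T = ∑ i, (f i) ^ q ^ T := by
    intro T f
    rw [hq, ← pow_mul]
    have hid : ∀ x : K, x ^ p ^ ((e : ℕ) * T) = iterateFrobenius K p ((e : ℕ) * T) x := fun _ => rfl
    simp only [hid]
    exact map_sum _ _ _
  have hqsmul : ∀ (T : ℕ) (a : Fq) (x : K), (a • x) ^ q ^ T = a • x ^ q ^ T := by
    intro T a x
    rw [_root_.smul_pow, ← hcard, FiniteField.pow_card_pow]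
  have hqT0 : ∀ T : ℕ, q ^ T ≠ 0 := fun T => by positivity
  -- the subspace spanned by the evaluation points
  set V : Submodule Fq K := Submodule.span Fq (Set.range α) with hVdef
  have hVn : Module.finrank Fq ↥V = n := by
    rw [hVdef, finrank_span_eq_card hα, Fintype.card_fin]
  have hcardsub : ∀ S : Submodule Fq K, Nat.card ↥S = q ^ Module.finrank Fq ↥S := by
    intro S
    haveI : Fintype ↥S := Fintype.ofFinite _
    rw [Nat.card_eq_fintype_card, ← hcard]
    exact Module.card_eq_pow_finrank
  have hcardV : Nat.card ↥(V : Set K) = q ^ n := by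
    rw [SetLike.coe_sort_coe, hcardsub V, hVn]
  have hcardF : Nat.card ↥{x : K | x ^ q ^ n = x} = q ^ n := by
    rw [← Nat.card_image_of_injective (mul_right_injective₀ hβ)
      {x : K | x ^ q ^ n = x}, ← hspan]
    exact hcardV
  by_cases hSne : Sub.Nonempty
  · -- main case: Sub is nonempty
    -- coefficients of the code polynomials
    set Ee : (Fin h → K) → Fin h → K := fun b i' =>
      (b i'.rev) ^ q ^ (s * j) * β ^ q ^ (s * j)
        / β ^ q ^ (s * (l - h + 1 + j + (i' : ℕ))) with hEe
    set Gf : (Fin h → K) → K → K := fun b x =>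
      x ^ q ^ (s * j) + ∑ i' : Fin h, Ee b i' * x ^ q ^ (s * (l - h + 1 + j + (i' : ℕ)))
      with hGf
    have Glin : ∀ b, IsLinearMap Fq (Gf b) := by
      intro b
      constructor
      · intro x y
        simp only [hGf, hqadd, mul_add]
        rw [Finset.sum_add_distrib]
        ring
      · intro a x
        simp only [hGf, hqsmul, mul_smul_comm, smul_add, Finset.smul_sum]
    set Lb : (Fin h → K) → (K →ₗ[Fq] K) := fun b => IsLinearMap.mk' _ (Glin b) with hLb
    have Lbapp : ∀ b x, Lb b x = Gf b x := fun b x => rfl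
    set w : Fin n → K := fun k => (α k) ^ q ^ (s * j) with hw
    set cb : (Fin h → K) → Fin n → K := fun b k =>
      ∑ i' : Fin h, (-(Ee b i')) * (α k) ^ ((q ^ s) ^ (l - h + 1 + j + (i' : ℕ))) with hcb
    have hcbC : ∀ b, cb b ∈ C := by
      intro b
      rw [hC]
      exact ⟨fun x => ∑ i' : Fin h, (-(Ee b i')) * x ^ ((q ^ s) ^ (l - h + 1 + j + (i' : ℕ))),
        hGab ⟨fun i' => -(Ee b i'), fun x => rfl⟩, rfl⟩
    have hwc : ∀ b k, w k - cb b k = Lb b (α k) := by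
      intro b k
      rw [Lbapp]
      simp only [hw, hcb, hGf, neg_mul, Finset.sum_neg_distrib, sub_neg_eq_add, ← pow_mul]
    -- the key identity
    have claimA : ∀ (b : Fin h → K) (y : K), Gf b (β * y)
        = β ^ q ^ (s * j)
          * (y + ∑ i : Fin h, b i * y ^ (q ^ s) ^ (l - (i : ℕ))) ^ q ^ (s * j) := by
      intro b y
      have hβp : ∀ T : ℕ, β ^ q ^ T ≠ 0 := fun T => pow_ne_zero _ hβ
      have hE : ∀ i' : Fin h,
          Ee b i' * (β * y) ^ q ^ (s * (l - h + 1 + j + (i' : ℕ)))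
          = β ^ q ^ (s * j)
            * (b i'.rev ^ q ^ (s * j) * y ^ q ^ (s * (l - h + 1 + j + (i' : ℕ)))) := by
        intro i'
        rw [hEe, mul_pow]
        field_simp
      have hterm : ∀ i : Fin h, (b i * y ^ (q ^ s) ^ (l - (i : ℕ))) ^ q ^ (s * j)
          = b i ^ q ^ (s * j) * y ^ q ^ (s * (l - (i : ℕ)) + s * j) := by
        intro i
        rw [mul_pow, ← pow_mul y, ← pow_mul q, ← pow_add q]
      calc Gf b (β * y)
          = β ^ q ^ (s * j) * y ^ q ^ (s * j)
            + ∑ i' : Fin h, β ^ q ^ (s * j)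
              * (b i'.rev ^ q ^ (s * j) * y ^ q ^ (s * (l - h + 1 + j + (i' : ℕ)))) := by
            simp only [hGf, mul_pow]
            congr 1
            refine Finset.sum_congr rfl fun i' _ => ?_
            have := hE i'
            rw [mul_pow] at this
            exact this
        _ = β ^ q ^ (s * j)
            * (y ^ q ^ (s * j)
              + ∑ i : Fin h, b i ^ q ^ (s * j) * y ^ q ^ (s * (l - (i : ℕ)) + s * j)) := by
            rw [mul_add, Finset.mul_sum]
            congr 1
            refine (Fintype.sum_equiv Fin.revPerm _ _ fun i' => ?_).symm
            have hrev : ((Fin.revPerm i' : Fin h) : ℕ) = h - 1 - (i' : ℕ) := by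
              simp only [Fin.revPerm_apply]
              rw [Fin.val_rev]; omega
            have hrev2 : (Fin.revPerm i' : Fin h).rev = i' := by
              simp [Fin.rev_rev]
            have hi := i'.isLt
            have hexp2 : s * (l - h + 1 + j + ((Fin.revPerm i' : Fin h) : ℕ))
                = s * ((l - (i' : ℕ)) + j) := by
              congr 1
              rw [hrev]
              omega
            rw [hrev2, hexp2, Nat.mul_add]
        _ = β ^ q ^ (s * j)
            * (y + ∑ i : Fin h, b i * y ^ (q ^ s) ^ (l - (i : ℕ))) ^ q ^ (s * j) := by
            rw [hqadd, hqsum]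
            congr 2
            exact (Finset.sum_congr rfl fun i _ => hterm i).symm
    -- membership of `β * y` in V for y in the small field
    have hmemV : ∀ y : K, y ^ q ^ n = y → β * y ∈ V := by
      intro y hy
      have : β * y ∈ (V : Set K) := by
        rw [hspan]; exact ⟨y, hy, rfl⟩
      exact this
    -- evaluations at α determine behaviour on V
    have hVker : ∀ b b' : Fin h → K, (∀ k, Lb b (α k) = Lb b' (α k)) →
        ∀ y : K, y ^ q ^ n = y → Gf b (β * y) = Gf b' (β * y) := by
      intro b b' hk y hy
      have hle : V ≤ LinearMap.ker (Lb b - Lb b') := by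
        rw [hVdef, Submodule.span_le]
        rintro x ⟨k, rfl⟩
        simp only [SetLike.mem_coe, LinearMap.mem_ker, LinearMap.sub_apply]
        rw [hk k, sub_self]
      have := hle (hmemV y hy)
      rw [LinearMap.mem_ker, LinearMap.sub_apply, sub_eq_zero] at this
      rw [← Lbapp, ← Lbapp]
      exact this
    -- extract polynomial identity
    have hfp : ∀ b b' : Fin h → K, (∀ k, Lb b (α k) = Lb b' (α k)) →
        ∀ y : K, y ^ q ^ n = y →
          (y + ∑ i : Fin h, b i * y ^ (q ^ s) ^ (l - (i : ℕ)))
          = (y + ∑ i : Fin h, b' i * y ^ (q ^ s) ^ (l - (i : ℕ))) := by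
      intro b b' hk y hy
      have h1 := hVker b b' hk y hy
      rw [claimA, claimA] at h1
      have h2 := mul_left_cancel₀ (pow_ne_zero _ hβ) h1
      have h3 : ((y + ∑ i : Fin h, b i * y ^ (q ^ s) ^ (l - (i : ℕ)))
          - (y + ∑ i : Fin h, b' i * y ^ (q ^ s) ^ (l - (i : ℕ)))) ^ q ^ (s * j) = 0 := by
        rw [hqsub, h2, sub_self]
      have h4 := pow_eq_zero_iff (hqT0 (s * j)) |>.mp h3
      exact sub_eq_zero.mp h4
    -- injectivity of b ↦ cb b
    have hcbinj : ∀ b b' : Fin h → K, cb b = cb b' → b = b' := by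
      intro b b' hbb
      have hk : ∀ k, Lb b (α k) = Lb b' (α k) := by
        intro k
        rw [← hwc b k, ← hwc b' k, hbb]
      have hv : ∀ y : K, y ^ q ^ n = y →
          ∑ i : Fin h, (b i - b' i) * y ^ (q ^ s) ^ (l - (i : ℕ)) = 0 := by
        intro y hy
        have := hfp b b' hk y hy
        have h5 : ∑ i : Fin h, b i * y ^ (q ^ s) ^ (l - (i : ℕ))
            = ∑ i : Fin h, b' i * y ^ (q ^ s) ^ (l - (i : ℕ)) := add_left_cancel this
        simp only [sub_mul]
        rw [Finset.sum_sub_distrib, h5, sub_self]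
      funext i
      exact sub_eq_zero.mp (vanish_zero q s n l h hq2 hn hln hhl hsn hcardF (fun i => b i - b' i) hv i)
    -- rank bound for each b in Sub
    have hrk : ∀ b ∈ Sub, rkw Fq (w - cb b) ≤ n - l := by
      intro b hb
      obtain ⟨hb0, hbF, hbcard⟩ := hSub b hb
      -- the roots subspace
      set Z : Set K := {x : K | x ^ q ^ n = x ∧
        x + ∑ i : Fin h, b i * x ^ ((q ^ s) ^ (l - (i : ℕ))) = 0} with hZ
      have hZker : ∀ z ∈ Z, Lb b (β * z) = 0 := by
        rintro z ⟨hz1, hz2⟩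
        rw [Lbapp, claimA, hz2, zero_pow (hqT0 _), mul_zero]
      have hZV : ∀ z ∈ Z, β * z ∈ V := fun z hz => hmemV z hz.1
      set S : Submodule Fq K := Submodule.span Fq ((fun z : K => β * z) '' Z) with hS
      have hSle : S ≤ V ⊓ LinearMap.ker (Lb b) := by
        rw [hS, Submodule.span_le]
        rintro x ⟨z, hz, rfl⟩
        exact ⟨hZV z hz, LinearMap.mem_ker.mpr (hZker z hz)⟩
      have hSl : l ≤ Module.finrank Fq ↥S := by
        have hc1 : Nat.card ↥((fun z : K => β * z) '' Z) = q ^ l := by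
          rw [Nat.card_image_of_injective (mul_right_injective₀ hβ)]
          exact hbcard
        have hc2 : Nat.card ↥((fun z : K => β * z) '' Z) ≤ Nat.card ↥(S : Set K) := by
          exact Nat.card_mono (Set.toFinite _) Submodule.subset_span
        rw [hc1, SetLike.coe_sort_coe, hcardsub S] at hc2
        exact (Nat.pow_le_pow_iff_right hq2).mp hc2
      -- rank–nullity
      set dR : ↥V →ₗ[Fq] K := (Lb b).domRestrict V with hdR
      have hrn := LinearMap.finrank_range_add_finrank_ker dR
      rw [LinearMap.range_domRestrict, hVn] at hrn
      have hkerge : l ≤ Module.finrank Fq ↥(LinearMap.ker dR) := by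
        have hSV : S ≤ V := le_trans hSle inf_le_left
        have hSker : S ≤ LinearMap.ker (Lb b) := le_trans hSle inf_le_right
        have hmemker : ∀ x : ↥S, (⟨x.1, hSV x.2⟩ : ↥V) ∈ LinearMap.ker dR := by
          intro x
          rw [LinearMap.mem_ker, hdR, LinearMap.domRestrict_apply]
          exact LinearMap.mem_ker.mp (hSker x.2)
        have hφ : ∃ φ : ↥S →ₗ[Fq] ↥(LinearMap.ker dR), Function.Injective φ := by
          refine ⟨⟨⟨fun x => ⟨⟨x.1, hSV x.2⟩, hmemker x⟩, fun x y => rfl⟩, fun c x => rfl⟩, ?_⟩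
          intro x y hxy
          simp only [LinearMap.coe_mk, AddHom.coe_mk, Subtype.mk.injEq] at hxy
          exact Subtype.ext hxy
        obtain ⟨φ, hφinj⟩ := hφ
        calc l ≤ Module.finrank Fq ↥S := hSl
          _ ≤ Module.finrank Fq ↥(LinearMap.ker dR) :=
              LinearMap.finrank_le_finrank_of_injective hφinj
      -- compute the span of w - cb b
      have hwcb : (w - cb b) = (Lb b) ∘ α := by
        funext k
        exact hwc b k
      have hspan2 : Submodule.span Fq (Set.range (w - cb b)) = V.map (Lb b) := by
        rw [hwcb, Set.range_comp, Submodule.span_image, ← hVdef]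
      rw [rkw, hspan2]
      omega
    -- w ≠ cb b for b ∈ Sub
    have hwne : ∀ b ∈ Sub, w ≠ cb b := by
      intro b hb hweq
      obtain ⟨hb0, hbF, hbcard⟩ := hSub b hb
      have hZeq : {x : K | x ^ q ^ n = x ∧
          x + ∑ i : Fin h, b i * x ^ ((q ^ s) ^ (l - (i : ℕ))) = 0}
          = {x : K | x ^ q ^ n = x} := by
        apply Set.eq_of_subset_of_subset (fun x hx => hx.1)
        intro y hy
        refine ⟨hy, ?_⟩
        -- Lb b vanishes on V since w = cb b
        have hk : ∀ k, Lb b (α k) = 0 := by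
          intro k
          rw [← hwc b k, ← hweq, sub_self]
        have hle : V ≤ LinearMap.ker (Lb b) := by
          rw [hVdef, Submodule.span_le]
          rintro x ⟨k, rfl⟩
          exact LinearMap.mem_ker.mpr (hk k)
        have h0 := LinearMap.mem_ker.mp (hle (hmemV y hy))
        rw [Lbapp, claimA] at h0
        have h1 : (y + ∑ i : Fin h, b i * y ^ (q ^ s) ^ (l - (i : ℕ))) ^ q ^ (s * j) = 0 :=
          (mul_eq_zero.mp h0).resolve_left (pow_ne_zero _ hβ)
        exact pow_eq_zero_iff (hqT0 _) |>.mp h1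
      rw [hZeq, hcardF] at hbcard
      have := Nat.pow_right_injective hq2 hbcard
      omega
    by_cases hwC : w ∈ C
    · -- contradiction with minimum distance
      exfalso
      obtain ⟨b, hb⟩ := hSne
      have hmem : rkw Fq (w - cb b) ∈ {r : ℕ | ∃ u ∈ C, ∃ v ∈ C, u ≠ v ∧ rkw Fq (u - v) = r} :=
        ⟨w, hwC, cb b, hcbC b, hwne b hb, rfl⟩
      have hdle : d ≤ n - l := by
        rw [hd, minDist]
        exact le_trans (Nat.sInf_le hmem) (hrk b hb)
      omega
    · refine ⟨w, hwC, ?_⟩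
      haveI : Finite ↥(C ∩ ball Fq w (n - l)) := Set.Finite.to_subtype (Set.toFinite _)
      rw [← hSubcard]
      have hmap : ∀ b : ↥Sub, cb b.1 ∈ C ∩ ball Fq w (n - l) :=
        fun b => ⟨hcbC b.1, hrk b.1 b.2⟩
      refine Nat.card_le_card_of_injective
        (fun b : ↥Sub => (⟨cb b.1, hmap b⟩ : ↥(C ∩ ball Fq w (n - l)))) ?_
      intro b b' hbb
      have : cb b.1 = cb b'.1 := congrArg Subtype.val hbb
      exact Subtype.ext (hcbinj b.1 b'.1 this)
  · -- Sub is empty, so g = 0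
    have hSemp : Sub = ∅ := Set.not_nonempty_iff_eq_empty.mp hSne
    have hg0 : g = 0 := by
      rw [← hSubcard, hSemp]
      simp
    by_cases hCu : C = Set.univ
    · exfalso
      -- then the minimum distance is at most 1, contradicting d ≥ 2
      have hd2 : 2 ≤ d := by omega
      haveI : Nonempty (Fin n) := ⟨⟨0, hn⟩⟩
      have hmem : (1 : ℕ) ∈ {r : ℕ | ∃ u ∈ C, ∃ v ∈ C, u ≠ v ∧ rkw Fq (u - v) = r} := by
        refine ⟨0, by rw [hCu]; trivial, fun _ => 1, by rw [hCu]; trivial, ?_, ?_⟩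
        · intro hcon
          have := congrFun hcon ⟨0, hn⟩
          simp at this
        · have h0 : ((0 : Fin n → K) - fun _ => (1 : K)) = fun _ : Fin n => (-1 : K) := by
            funext k; simp
          rw [h0, rkw, Set.range_const]
          have : (-1 : K) ≠ 0 := by simp
          exact finrank_span_singleton this
      have : d ≤ 1 := by
        rw [hd, minDist]
        exact Nat.sInf_le hmem
      omega
    · obtain ⟨w0, hw0⟩ := Set.ne_univ_iff_exists_notMem C |>.mp hCu
      exact ⟨w0, hw0, by omega⟩
end

section
/- Let q be a prime power, let n, m be positive integers with n | m, and let σ : x ↦ x^{q^s} with gcd(s,m)=1. Let 𝒞 be a set of σ-linearized polynomials over F_{q^m}, let β ∈ F_{q^m}^*, let α_1,…,α_n be an F_q-basis of βF_{q^n}, let C = {(g(α_1),…,g(α_n)) : g ∈ 𝒞} ⊆ F_{q^m}^n, and let d be its minimum rank distance. Suppose there is a positive integer t such that: (1) n−d+1 ≤ t ≤ n−⌊(d−1)/2⌋−1; (2) t | n and t ≤ n−1; (3) { a x^{σ^j} : a ∈ F_{q^m} } ⊆ 𝒞 for some integer j with 0 ≤ j < n−t. Then there exists a word w ∈ F_{q^m}^n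 ∖ C such that |C ∩ B_{n−t}(w)| ≥ (q^n−1)/(q^t−1). -/
open Polynomial Module

section RootCounts

variable {K : Type*} [Field K]

theorem card_nthRootsFinset_le (D : ℕ) (a : K) : (nthRootsFinset D a).card ≤ D := by
  classical
  rw [nthRootsFinset_def]
  exact (Multiset.toFinset_card_le _).trans (card_nthRoots D a)

theorem card_nthRootsFinset_one_of_dvd [Finite K] {D : ℕ} (hD : 0 < D)
    (hdvd : D ∣ Nat.card K - 1) : (nthRootsFinset D (1 : K)).card = D := by
  obtain ⟨g, hg⟩ := IsCyclic.exists_ofOrder_eq_natCard (α := Kˣ)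
  rw [Nat.card_units] at hg
  have hζ : IsPrimitiveRoot (g : K) (Nat.card K - 1) :=
    hg ▸ IsPrimitiveRoot.coe_units_iff.mpr (IsPrimitiveRoot.orderOf g)
  have hN : Nat.card K - 1 ≠ 0 := by have := Finite.one_lt_card (α := K); omega
  have hζD : IsPrimitiveRoot ((g : K) ^ ((Nat.card K - 1) / D)) D := by
    simpa [Nat.div_div_self hdvd hN] using
      hζ.pow_of_dvd (Nat.div_pos (Nat.le_of_dvd (Nat.pos_of_ne_zero hN) hdvd) hD).ne'
        (Nat.div_dvd_of_dvd hdvd)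
  exact hζD.card_nthRootsFinset

theorem ncard_le_mul_ncard_image_pow {S : Set K} (hS : S.Finite) {D : ℕ} (hD : 0 < D) :
    S.ncard ≤ D * ((· ^ D) '' S).ncard := by
  classical
  rw [Set.ncard_eq_toFinset_card S hS, Set.ncard_eq_toFinset_card _ (hS.image _),
    Set.Finite.toFinset_image]
  exact Finset.card_le_mul_card_image _ _ fun b _ =>
    (Finset.card_le_card fun _ hx =>
      (mem_nthRootsFinset hD b).mpr (Finset.mem_filter.mp hx).2).trans (card_nthRootsFinset_le D b)

end RootCounts

section Frobenius

variable (Fq K : Type*) [Field Fq] [Fintype Fq] [Field K] [Algebra Fq K]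

/-- The subfield `𝔽_{q^r}` of `K`, where `q = |Fq|` (when `r ∣ [K : Fq]`). -/
def frobFixed (r : ℕ) : Subalgebra Fq K :=
  (FiniteField.frobeniusAlgHom Fq K ^ r).equalizer (AlgHom.id Fq K)

def frobSubMul (r : ℕ) (a : K) : K →ₗ[Fq] K :=
  (FiniteField.frobeniusAlgHom Fq K ^ r).toLinearMap - LinearMap.mulLeft Fq a

variable {Fq K}

theorem frobeniusAlgHom_pow_apply (r : ℕ) (x : K) :
    (FiniteField.frobeniusAlgHom Fq K ^ r) x = x ^ Fintype.card Fq ^ r := by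
  rw [AlgHom.coe_pow, FiniteField.coe_frobeniusAlgHom, pow_iterate]

theorem mem_frobFixed {r : ℕ} {x : K} :
    x ∈ frobFixed Fq K r ↔ x ^ Fintype.card Fq ^ r = x := by
  rw [frobFixed, AlgHom.mem_equalizer, frobeniusAlgHom_pow_apply, AlgHom.id_apply]

theorem coe_frobFixed (r : ℕ) :
    (frobFixed Fq K r : Set K) = {x : K | x ^ Fintype.card Fq ^ r = x} :=
  Set.ext fun _ => mem_frobFixed

theorem frobSubMul_apply (r : ℕ) (a x : K) :
    frobSubMul Fq K r a x = x ^ Fintype.card Fq ^ r - a * x := by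
  simp [frobSubMul, frobeniusAlgHom_pow_apply]

theorem frobFixed_mono {r n : ℕ} (h : r ∣ n) : frobFixed Fq K r ≤ frobFixed Fq K n := by
  obtain ⟨k, rfl⟩ := h
  intro x hx
  simp only [frobFixed, AlgHom.mem_equalizer, AlgHom.id_apply] at hx ⊢
  rw [pow_mul, AlgHom.coe_pow]
  exact Function.IsFixedPt.iterate hx k

theorem ncard_frobFixed [Finite K] {r : ℕ} (hr : r ∣ finrank Fq K) :
    (frobFixed Fq K r : Set K).ncard = Fintype.card Fq ^ r := by
  classical
  set Q := Fintype.card Fq ^ r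
  have hr0 : 0 < r := Nat.pos_of_dvd_of_pos hr finrank_pos
  have hQ : 1 < Q := Nat.one_lt_pow hr0.ne' Fintype.one_lt_card
  have hset :
      (frobFixed Fq K r : Set K) = insert 0 (nthRootsFinset (Q - 1) (1 : K) : Set K) := by
    ext x
    have hxQ : x ^ Q = x ^ (Q - 1) * x := by rw [← pow_succ, Nat.sub_add_cancel hQ.le]
    simp only [SetLike.mem_coe, mem_frobFixed, Set.mem_insert_iff,
      mem_nthRootsFinset (Nat.sub_pos_of_lt hQ)]
    rw [hxQ]
    rcases eq_or_ne x 0 with rfl | hx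
    · simp
    · simp [hx]
  have hdvd : Q - 1 ∣ Nat.card K - 1 := by
    obtain ⟨k, hk⟩ := hr
    rw [natCard_eq_pow_finrank (K := Fq), hk, pow_mul, Nat.card_eq_fintype_card]
    simpa using Nat.sub_dvd_pow_sub_pow Q 1 k
  rw [hset, Set.ncard_insert_of_notMem
    (by simp [mem_nthRootsFinset (Nat.sub_pos_of_lt hQ), zero_pow (Nat.sub_pos_of_lt hQ).ne']),
    Set.ncard_coe_finset, card_nthRootsFinset_one_of_dvd (Nat.sub_pos_of_lt hQ) hdvd]
  omega

theorem finrank_frobFixed [Finite K] {r : ℕ} (hr : r ∣ finrank Fq K) :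
    finrank Fq (frobFixed Fq K r) = r := by
  have h : Fintype.card Fq ^ r = Fintype.card Fq ^ finrank Fq (frobFixed Fq K r) := by
    rw [← ncard_frobFixed hr, ← Nat.card_coe_set_eq, ← Nat.card_eq_fintype_card]
    exact natCard_eq_pow_finrank
  exact (Nat.pow_right_injective Fintype.one_lt_card h).symm

theorem div_le_ncard_image_pow_frobFixed [Finite K] {n t : ℕ} (hn : n ∣ finrank Fq K)
    (ht : 0 < t) :
    (Fintype.card Fq ^ n - 1) / (Fintype.card Fq ^ t - 1) ≤
      ((· ^ (Fintype.card Fq ^ t - 1)) '' ((frobFixed Fq K n : Set K) \ {0})).ncard := by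
  have hD : 0 < Fintype.card Fq ^ t - 1 :=
    Nat.sub_pos_of_lt (Nat.one_lt_pow ht.ne' Fintype.one_lt_card)
  have hcard : ((frobFixed Fq K n : Set K) \ {0}).ncard = Fintype.card Fq ^ n - 1 := by
    rw [Set.ncard_sdiff_singleton_of_mem (zero_mem _), ncard_frobFixed hn]
  refine Nat.div_le_of_le_mul ?_
  rw [← hcard]
  exact ncard_le_mul_ncard_image_pow (Set.toFinite _) hD

theorem exists_frobFixed_coords {n : ℕ} (k : ℕ) {α : Fin n → K} (hα : LinearIndependent Fq α)
    {β : K} (hβ : β ≠ 0)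
    (hspan : (Submodule.span Fq (Set.range α) : Set K) = (β * ·) '' (frobFixed Fq K n : Set K)) :
    ∃ x : Fin n → K, LinearIndependent Fq x ∧ (∀ i, x i ∈ frobFixed Fq K n) ∧
      ∀ i, α i ^ Fintype.card Fq ^ k = β ^ Fintype.card Fq ^ k * x i := by
  set φ := FiniteField.frobeniusAlgHom Fq K ^ k
  set f := φ.toLinearMap ∘ₗ LinearMap.mulLeft Fq β⁻¹
  have hf : Function.Injective f :=
    φ.toRingHom.injective.comp (mul_right_injective₀ (inv_ne_zero hβ))
  refine ⟨f ∘ α, hα.map' f (LinearMap.ker_eq_bot.mpr hf), fun i => ?_, fun i => ?_⟩ <;>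
    obtain ⟨y, hy, hyα⟩ := hspan ▸ Submodule.subset_span (Set.mem_range_self i) <;>
    simp only [Function.comp_apply, f, LinearMap.comp_apply, LinearMap.mulLeft_apply,
      AlgHom.toLinearMap_apply, ← hyα, inv_mul_cancel_left₀ hβ, φ, frobeniusAlgHom_pow_apply]
  · exact pow_mem hy _
  · exact mul_pow _ _ _

theorem finrank_ker_frobSubMul_le [Finite K] {r : ℕ} (hr : 0 < r) (a : K) :
    finrank Fq (LinearMap.ker (frobSubMul Fq K r a)) ≤ r := by
  set Q := Fintype.card Fq ^ r
  have hQ : 1 < Q := Nat.one_lt_pow hr.ne' Fintype.one_lt_card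
  have hsub : (LinearMap.ker (frobSubMul Fq K r a) : Set K) ⊆
      insert 0 (nthRootsFinset (Q - 1) a : Set K) := by
    intro x hx
    rcases eq_or_ne x 0 with rfl | hx0
    · exact Set.mem_insert _ _
    refine Set.mem_insert_of_mem _ ((mem_nthRootsFinset (Nat.sub_pos_of_lt hQ) a).mpr ?_)
    have hx' : x ^ Q = a * x := by
      rwa [SetLike.mem_coe, LinearMap.mem_ker, frobSubMul_apply, sub_eq_zero] at hx
    rw [← Nat.sub_add_cancel hQ.le, pow_succ] at hx'
    exact mul_right_cancel₀ hx0 hx'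
  have hcard : Fintype.card Fq ^ finrank Fq (LinearMap.ker (frobSubMul Fq K r a)) ≤ Q :=
    calc Fintype.card Fq ^ finrank Fq (LinearMap.ker (frobSubMul Fq K r a))
        = (LinearMap.ker (frobSubMul Fq K r a) : Set K).ncard := by
          rw [← Nat.card_coe_set_eq, ← Nat.card_eq_fintype_card]
          exact natCard_eq_pow_finrank.symm
      _ ≤ (insert 0 (nthRootsFinset (Q - 1) a : Set K)).ncard := Set.ncard_le_ncard hsub
      _ ≤ (nthRootsFinset (Q - 1) a : Set K).ncard + 1 := Set.ncard_insert_le _ _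
      _ ≤ Q := by
          rw [Set.ncard_coe_finset]
          have := card_nthRootsFinset_le (Q - 1) a
          omega
  exact (Nat.pow_le_pow_iff_right Fintype.one_lt_card).mp hcard

theorem finrank_map_frobSubMul_add_le [Finite K] {t n : ℕ} (htn : t ∣ n)
    (hn : n ∣ finrank Fq K) {u : K} (hu : u ∈ frobFixed Fq K n) (hu0 : u ≠ 0) :
    finrank Fq ((Subalgebra.toSubmodule (frobFixed Fq K n)).map
      (frobSubMul Fq K t (u ^ (Fintype.card Fq ^ t - 1)))) + t ≤ n := by
  set E := Subalgebra.toSubmodule (frobFixed Fq K n)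
  set L := frobSubMul Fq K t (u ^ (Fintype.card Fq ^ t - 1))
  have hrank := LinearMap.finrank_range_add_finrank_ker (L.domRestrict E)
  rw [LinearMap.range_domRestrict, Subalgebra.finrank_toSubmodule, finrank_frobFixed hn] at hrank
  -- the kernel of `L` on `E` contains `u 𝔽_{q^t}`, which has dimension `t`
  have hker : (Subalgebra.toSubmodule (frobFixed Fq K t)).map (LinearMap.mulLeft Fq u) ≤
      (LinearMap.ker (L.domRestrict E)).map E.subtype := by
    rintro _ ⟨c, hc, rfl⟩
    have hc' : c ^ Fintype.card Fq ^ t = c := mem_frobFixed.mp hc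
    have hucE : u * c ∈ E := (frobFixed Fq K n).mul_mem hu (frobFixed_mono htn hc)
    refine ⟨⟨u * c, hucE⟩, ?_, rfl⟩
    rw [SetLike.mem_coe, LinearMap.mem_ker, LinearMap.domRestrict_apply, frobSubMul_apply,
      mul_pow, hc', ← mul_assoc, ← pow_succ,
      Nat.sub_add_cancel (Nat.one_le_pow _ _ Fintype.card_pos), sub_self]
  have ht : t ≤ finrank Fq (LinearMap.ker (L.domRestrict E)) :=
    calc t = finrank Fq ((Subalgebra.toSubmodule (frobFixed Fq K t)).map
            (LinearMap.mulLeft Fq u)) := by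
          rw [← LinearEquiv.finrank_eq
              (Submodule.equivMapOfInjective _ (mul_right_injective₀ hu0) _),
            Subalgebra.finrank_toSubmodule, finrank_frobFixed (htn.trans hn)]
      _ ≤ _ := Submodule.finrank_mono hker
      _ = _ := Submodule.finrank_map_subtype_eq _ _
  omega

end Frobenius

section RankWeight

variable {Fq K : Type} [Field Fq] [Field K] [Algebra Fq K] {n : ℕ}

theorem rkw_le_finrank {v : Fin n → K} {S : Submodule Fq K} [Module.Finite Fq S]
    (hv : ∀ i, v i ∈ S) : rkw Fq v ≤ finrank Fq S :=
  Submodule.finrank_mono (Submodule.span_le.mpr (Set.range_subset_iff.mpr hv))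

theorem rkw_eq_of_linearIndependent {v : Fin n → K} (hv : LinearIndependent Fq v) :
    rkw Fq v = n := by
  rw [rkw, finrank_span_eq_card hv, Fintype.card_fin]

end RankWeight

section MonomialCode

variable {Fq K : Type} [Field Fq] [Fintype Fq] [Field K] [Finite K] [Algebra Fq K] {n t : ℕ}
  {x : Fin n → K}

theorem rkw_sub_le_of_mem_frobFixed (γ : K) (htn : t ∣ n) (hn : n ∣ finrank Fq K)
    (hx : ∀ i, x i ∈ frobFixed Fq K n) {u : K} (hu : u ∈ frobFixed Fq K n) (hu0 : u ≠ 0) :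
    rkw Fq ((fun i => γ * x i ^ Fintype.card Fq ^ t) -
      fun i => γ * (u ^ (Fintype.card Fq ^ t - 1) * x i)) ≤ n - t := by
  have hrank := finrank_map_frobSubMul_add_le htn hn hu hu0
  set L := frobSubMul Fq K t (u ^ (Fintype.card Fq ^ t - 1))
  set E := Subalgebra.toSubmodule (frobFixed Fq K n)
  have hdiff : ((fun i => γ * x i ^ Fintype.card Fq ^ t) -
      fun i => γ * (u ^ (Fintype.card Fq ^ t - 1) * x i)) = fun i => γ * L (x i) := by
    funext i
    simp only [Pi.sub_apply, L, frobSubMul_apply]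
    ring
  have hmem : ∀ i, γ * L (x i) ∈ (E.map L).map (LinearMap.mulLeft Fq γ) := fun i =>
    Submodule.mem_map_of_mem (Submodule.mem_map_of_mem (hx i))
  rw [hdiff]
  exact ((rkw_le_finrank hmem).trans (Submodule.finrank_map_le _ _)).trans (by omega)

theorem mul_pow_ne_mul_of_linearIndependent {γ : K} (hγ : γ ≠ 0) (hx : LinearIndependent Fq x)
    (ht : 0 < t) (htn : t < n) (a : K) :
    (fun i => γ * x i ^ Fintype.card Fq ^ t) ≠ fun i => γ * (a * x i) := by
  intro h
  have hker : ∀ i, x i ∈ LinearMap.ker (frobSubMul Fq K t a) := fun i => by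
    rw [LinearMap.mem_ker, frobSubMul_apply, sub_eq_zero]
    exact mul_left_cancel₀ hγ (congrFun h i)
  have := (rkw_le_finrank hker).trans (finrank_ker_frobSubMul_le ht a)
  rw [rkw_eq_of_linearIndependent hx] at this
  omega

end MonomialCode

theorem stmt_12_general (q s n m t j : ℕ) (Fq K : Type) [Field Fq] [Fintype Fq] [Field K]
    [Fintype K] [Algebra Fq K]
    (hcard : Fintype.card Fq = q) (hfin : Module.finrank Fq K = m)
    (hn : 0 < n) (hnm : n ∣ m)
    (𝒞 : Set (K → K))
    (β : K) (hβ : β ≠ 0)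
    (α : Fin n → K) (hα : LinearIndependent Fq α)
    (hspan : (Submodule.span Fq (Set.range α) : Set K)
      = (fun y : K => β * y) '' {x : K | x ^ q ^ n = x})
    (C : Set (Fin n → K)) (hC : C = (fun g : K → K => fun i : Fin n => g (α i)) '' 𝒞)
    (d : ℕ) (hd : d = minDist Fq C)
    (ht0 : 0 < t)
    (ht1 : (n : ℤ) - d + 1 ≤ (t : ℤ))
    (htn : t ∣ n) (htn1 : t ≤ n - 1)
    (hGab : {f : K → K | ∃ a : K, ∀ x : K, f x = a * x ^ ((q ^ s) ^ j)} ⊆ 𝒞) :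
    ∃ w : Fin n → K, w ∉ C ∧
      (q ^ n - 1) / (q ^ t - 1) ≤ Nat.card ↥(C ∩ ball Fq w (n - t)) := by
  subst hcard hfin
  rw [← coe_frobFixed] at hspan
  obtain ⟨x, hx, hxE, hαx⟩ := exists_frobFixed_coords (s * j) hα hβ hspan
  set E : Set K := (frobFixed Fq K n : Set K)
  set q := Fintype.card Fq
  set γ := β ^ q ^ (s * j)
  have hγ : γ ≠ 0 := pow_ne_zero _ hβ
  set w : Fin n → K := fun i => γ * x i ^ q ^ t
  set c : K → Fin n → K := fun a i => γ * (a * x i)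
  have hcC : ∀ a, c a ∈ C := fun a =>
    hC ▸ ⟨fun z => a * z ^ (q ^ s) ^ j, hGab ⟨a, fun _ => rfl⟩,
      funext fun i => by simp only [← pow_mul, hαx, c]; ring⟩
  have hc_inj : Function.Injective c := fun a b hab =>
    mul_right_cancel₀ (hx.ne_zero ⟨0, hn⟩) (mul_left_cancel₀ hγ (congrFun hab ⟨0, hn⟩))
  have hclose : ∀ u ∈ E \ {0}, c (u ^ (q ^ t - 1)) ∈ ball Fq w (n - t) := fun u hu =>
    rkw_sub_le_of_mem_frobFixed γ htn hnm hxE hu.1 hu.2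
  refine ⟨w, fun hw => ?_, ?_⟩
  · have hclose_one : c 1 ∈ ball Fq w (n - t) := by
      simpa using hclose 1 ⟨one_mem _, one_ne_zero⟩
    have hd_le : d ≤ rkw Fq (w - c 1) := hd ▸ Nat.sInf_le
      ⟨w, hw, c 1, hcC 1, mul_pow_ne_mul_of_linearIndependent hγ hx ht0 (by omega) 1, rfl⟩
    have : d ≤ n - t := hd_le.trans hclose_one
    omega
  · calc (q ^ n - 1) / (q ^ t - 1) ≤ ((· ^ (q ^ t - 1)) '' (E \ {0})).ncard :=
          div_le_ncard_image_pow_frobFixed hnm ht0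
      _ ≤ (C ∩ ball Fq w (n - t)).ncard := by
          refine Set.ncard_le_ncard_of_injOn c ?_ hc_inj.injOn
          rintro _ ⟨u, hu, rfl⟩
          exact ⟨hcC _, hclose u hu⟩
      _ = Nat.card ↥(C ∩ ball Fq w (n - t)) := (Nat.card_coe_set_eq _).symm

/-- if `𝒞` contains `{a x^{σ^j} : a ∈ F_{q^m}}` for some `j < n−t`, with
`t ∣ n`, `t ≤ n−1` and `n−d+1 ≤ t ≤ n−⌊(d−1)/2⌋−1`, then there is a word `w ∉ C` with
`|C ∩ B_{n−t}(w)| ≥ (q^n−1)/(q^t−1)`. -/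
theorem stmt_12 (q s n m t j : ℕ) (Fq K : Type) [Field Fq] [Fintype Fq] [Field K]
    [Fintype K] [Algebra Fq K]
    (hcard : Fintype.card Fq = q) (hfin : Module.finrank Fq K = m)
    (hn : 0 < n) (hnm : n ∣ m) (hs : Nat.gcd s m = 1)
    (𝒞 : Set (K → K))
    (hlin : ∀ f ∈ 𝒞, ∃ N : ℕ, ∃ a : Fin N → K, ∀ x : K,
      f x = ∑ i : Fin N, a i * x ^ ((q ^ s) ^ (i : ℕ)))
    (β : K) (hβ : β ≠ 0)
    (α : Fin n → K) (hα : LinearIndependent Fq α)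
    (hspan : (Submodule.span Fq (Set.range α) : Set K)
      = (fun y : K => β * y) '' {x : K | x ^ q ^ n = x})
    (C : Set (Fin n → K)) (hC : C = (fun g : K → K => fun i : Fin n => g (α i)) '' 𝒞)
    (d : ℕ) (hd : d = minDist Fq C)
    (ht0 : 0 < t)
    (ht1 : (n : ℤ) - d + 1 ≤ (t : ℤ))
    (ht2 : (t : ℤ) ≤ (n : ℤ) - (((d - 1) / 2 : ℕ) : ℤ) - 1)
    (htn : t ∣ n) (htn1 : t ≤ n - 1)
    (hj : (j : ℤ) < (n : ℤ) - (t : ℤ))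
    (hGab : {f : K → K | ∃ a : K, ∀ x : K, f x = a * x ^ ((q ^ s) ^ j)} ⊆ 𝒞) :
    ∃ w : Fin n → K, w ∉ C ∧
      (q ^ n - 1) / (q ^ t - 1) ≤ Nat.card ↥(C ∩ ball Fq w (n - t)) :=
  stmt_12_general q s n m t j Fq K hcard hfin hn hnm 𝒞 β hβ α hα hspan C hC d hd ht0 ht1 htn htn1
    hGab
end
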